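/- arXiv:2011.07848 — 10 statements merged into one kernel-verified Lean document; each statement's English description precedes it below -/
import Mathlib

section
/- Let c > 0 and γ > 0 be real numbers and let τ ∈ ℂ with i·c·τ² + γ ≠ 0. Suppose f : ℝ → ℂ is four times continuously differentiable on [0,1], is not identically zero on [0,1], and satisfies f⁗(x) = τ⁴·f(x) for all x ∈ [0,1], together with the boundary conditions f(0) = 0, f(1) = 0, f''(1) = 0, and f''(0) = (i·c·τ² + γ)·f'(0). Then τ satisfies the characteristic equation (i·c·τ² + γ)·(cosh τ · sin τ − sinh τ · cos τ) + 2τ · sin τ · sinh τ = 0. -/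
open Complex Set

/-- If `f` is a nontrivial four times continuously differentiable solution on
`[0,1]` of `f⁗ = τ⁴ f` with boundary conditions `f(0)=f(1)=f''(1)=0` and
`f''(0) = (i c τ² + γ) f'(0)`, then `τ` satisfies the characteristic equation
`(i c τ² + γ)(cosh τ sin τ − sinh τ cos τ) + 2 τ sin τ sinh τ = 0`. -/
theorem stmt_0 (c γ : ℝ) (hc : 0 < c) (hγ : 0 < γ) (τ : ℂ)
    (hne : Complex.I * (c : ℂ) * τ ^ 2 + (γ : ℂ) ≠ 0)
    (f : ℝ → ℂ)
    (hf : ContDiffOn ℝ 4 f (Set.Icc 0 1))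
    (hfne : ∃ x ∈ Set.Icc (0 : ℝ) 1, f x ≠ 0)
    (hode : ∀ x ∈ Set.Icc (0 : ℝ) 1,
      iteratedDerivWithin 4 f (Set.Icc 0 1) x = τ ^ 4 * f x)
    (hbc0 : f 0 = 0) (hbc1 : f 1 = 0)
    (hbc2 : iteratedDerivWithin 2 f (Set.Icc 0 1) 1 = 0)
    (hbc3 : iteratedDerivWithin 2 f (Set.Icc 0 1) 0
      = (Complex.I * (c : ℂ) * τ ^ 2 + (γ : ℂ)) * iteratedDerivWithin 1 f (Set.Icc 0 1) 0) :
    (Complex.I * (c : ℂ) * τ ^ 2 + (γ : ℂ))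
        * (Complex.cosh τ * Complex.sin τ - Complex.sinh τ * Complex.cos τ)
      + 2 * τ * Complex.sin τ * Complex.sinh τ = 0 := by
  by_cases hτ : τ = 0
  · subst hτ; simp
  set k : ℂ := Complex.I * (c : ℂ) * τ ^ 2 + (γ : ℂ) with hk
  set S : Set ℝ := Set.Icc 0 1 with hSdef
  have hS : UniqueDiffOn ℝ S := uniqueDiffOn_Icc one_pos
  -- chain rule facts for iterated derivatives
  have hder : ∀ j : ℕ, j < 4 → ∀ x ∈ S, HasDerivWithinAt (iteratedDerivWithin j f S)
      (iteratedDerivWithin (j+1) f S x) S x := by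
    intro j hj x hx
    have h1 : DifferentiableWithinAt ℝ (iteratedDerivWithin j f S) S x :=
      hf.differentiableOn_iteratedDerivWithin (by exact_mod_cast hj) hS x hx
    have h2 := h1.hasDerivWithinAt
    rwa [← iteratedDerivWithin_succ] at h2
  -- the generalized Wronskian identity
  have key : ∀ (A B C D : ℂ → ℂ),
      (∀ z, HasDerivAt A (B z) z) → (∀ z, HasDerivAt B (C z) z) →
      (∀ z, HasDerivAt C (D z) z) → (∀ z, HasDerivAt D (τ^4 * A z) z) →
      ∀ x ∈ S,
      iteratedDerivWithin 3 f S x * A 0 + iteratedDerivWithin 2 f S x * B 0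
        + iteratedDerivWithin 1 f S x * C 0 + f x * D 0
      = iteratedDerivWithin 3 f S 0 * A x + iteratedDerivWithin 2 f S 0 * B x
        + iteratedDerivWithin 1 f S 0 * C x + f 0 * D x := by
    intro A B C D hA hB hC hD x hx
    set W : ℝ → ℂ := fun y => iteratedDerivWithin 3 f S y * A ((x:ℂ) - y)
      + iteratedDerivWithin 2 f S y * B ((x:ℂ) - y)
      + iteratedDerivWithin 1 f S y * C ((x:ℂ) - y)
      + f y * D ((x:ℂ) - y) with hWdef
    have hcomp : ∀ (E E' : ℂ → ℂ), (∀ z, HasDerivAt E (E' z) z) → ∀ y : ℝ,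
        HasDerivAt (fun t : ℝ => E ((x:ℂ) - t)) (-(E' ((x:ℂ) - y))) y := by
      intro E E' hE y
      have hm : HasDerivAt (fun w : ℂ => (x:ℂ) - w) (-1) ((y:ℝ):ℂ) := by
        simpa using (hasDerivAt_id ((y:ℝ):ℂ)).const_sub (x:ℂ)
      have := ((hE ((x:ℂ) - (y:ℝ))).comp ((y:ℝ):ℂ) hm).comp_ofReal
      simpa [Function.comp, mul_comm] using this
    have hWd : ∀ y ∈ S, HasDerivWithinAt W 0 S y := by
      intro y hy
      have h0 : HasDerivWithinAt f (iteratedDerivWithin 1 f S y) S y := by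
        simpa [iteratedDerivWithin_zero] using hder 0 (by norm_num) y hy
      have h1 := hder 1 (by norm_num) y hy
      have h2 := hder 2 (by norm_num) y hy
      have h3 := hder 3 (by norm_num) y hy
      rw [show (3:ℕ)+1 = 4 from rfl, hode y hy] at h3
      have t3 := h3.mul ((hcomp A B hA y).hasDerivWithinAt)
      have t2 := h2.mul ((hcomp B C hB y).hasDerivWithinAt)
      have t1 := h1.mul ((hcomp C D hC y).hasDerivWithinAt)
      have t0 := h0.mul ((hcomp D (fun z => τ^4 * A z) hD y).hasDerivWithinAt)
      have := ((t3.add t2).add t1).add t0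
      refine this.congr_deriv ?_
      ring
    have hWdiff : DifferentiableOn ℝ W S := fun y hy => (hWd y hy).differentiableWithinAt
    have hWconst : ∀ y ∈ S, W y = W 0 := by
      intro y hy
      exact constant_of_derivWithin_zero hWdiff
        (fun z hz => (hWd z (Set.mem_Icc_of_Ico hz)).derivWithin (hS z (Set.mem_Icc_of_Ico hz))) y hy
    have := hWconst x hx
    simpa [hWdef, sub_self, Complex.ofReal_zero, sub_zero] using this
  -- the Krylov basis functions
  set K0 : ℂ → ℂ := fun z => (Complex.cosh (τ*z) + Complex.cos (τ*z))/2 with hK0def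
  set K1 : ℂ → ℂ := fun z => (Complex.sinh (τ*z) + Complex.sin (τ*z))/(2*τ) with hK1def
  set K2 : ℂ → ℂ := fun z => (Complex.cosh (τ*z) - Complex.cos (τ*z))/(2*τ^2) with hK2def
  set K3 : ℂ → ℂ := fun z => (Complex.sinh (τ*z) - Complex.sin (τ*z))/(2*τ^3) with hK3def
  have hm : ∀ z : ℂ, HasDerivAt (fun w : ℂ => τ * w) τ z := by
    intro z; simpa using (hasDerivAt_id z).const_mul τ
  have hcosh : ∀ z : ℂ, HasDerivAt (fun w : ℂ => Complex.cosh (τ*w)) (τ * Complex.sinh (τ*z)) z := by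
    intro z
    simpa [Function.comp_def, mul_comm] using (Complex.hasDerivAt_cosh (τ*z)).comp z (hm z)
  have hsinh : ∀ z : ℂ, HasDerivAt (fun w : ℂ => Complex.sinh (τ*w)) (τ * Complex.cosh (τ*z)) z := by
    intro z
    simpa [Function.comp_def, mul_comm] using (Complex.hasDerivAt_sinh (τ*z)).comp z (hm z)
  have hcos : ∀ z : ℂ, HasDerivAt (fun w : ℂ => Complex.cos (τ*w)) (-(τ * Complex.sin (τ*z))) z := by
    intro z
    simpa [Function.comp_def, mul_comm] using (Complex.hasDerivAt_cos (τ*z)).comp z (hm z)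
  have hsin : ∀ z : ℂ, HasDerivAt (fun w : ℂ => Complex.sin (τ*w)) (τ * Complex.cos (τ*z)) z := by
    intro z
    simpa [Function.comp_def, mul_comm] using (Complex.hasDerivAt_sin (τ*z)).comp z (hm z)
  have hK3' : ∀ z, HasDerivAt K3 (K2 z) z := by
    intro z
    have := ((hsinh z).sub (hsin z)).div_const (2*τ^3)
    refine this.congr_deriv ?_
    simp only [hK2def]
    field_simp
  have hK2' : ∀ z, HasDerivAt K2 (K1 z) z := by
    intro z
    have := ((hcosh z).sub (hcos z)).div_const (2*τ^2)
    refine this.congr_deriv ?_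
    simp only [hK1def]
    field_simp
    ring
  have hK1' : ∀ z, HasDerivAt K1 (K0 z) z := by
    intro z
    have := ((hsinh z).add (hsin z)).div_const (2*τ)
    refine this.congr_deriv ?_
    simp only [hK0def]
    field_simp
  have hK0' : ∀ z, HasDerivAt K0 (τ^4 * K3 z) z := by
    intro z
    have := ((hcosh z).add (hcos z)).div_const 2
    refine this.congr_deriv ?_
    simp only [hK3def]
    field_simp
    ring
  -- representation of f and f''
  have rep : ∀ x ∈ S, f x = iteratedDerivWithin 3 f S 0 * K3 x
      + iteratedDerivWithin 2 f S 0 * K2 x + iteratedDerivWithin 1 f S 0 * K1 x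
      + f 0 * K0 x := by
    intro x hx
    have := key K3 K2 K1 K0 hK3' hK2' hK1' hK0' x hx
    have hz : K3 0 = 0 ∧ K2 0 = 0 ∧ K1 0 = 0 ∧ K0 0 = 1 := by
      constructor
      · simp [hK3def]
      constructor
      · simp [hK2def]
      constructor
      · simp [hK1def]
      · simp [hK0def]
    rw [hz.1, hz.2.1, hz.2.2.1, hz.2.2.2] at this
    simpa using this
  have rep2 : ∀ x ∈ S, iteratedDerivWithin 2 f S x = iteratedDerivWithin 3 f S 0 * K1 x
      + iteratedDerivWithin 2 f S 0 * K0 x + iteratedDerivWithin 1 f S 0 * (τ^4 * K3 x)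
      + f 0 * (τ^4 * K2 x) := by
    intro x hx
    have hC : ∀ z, HasDerivAt K0 ((fun z => τ^4 * K3 z) z) z := hK0'
    have hD : ∀ z, HasDerivAt (fun z => τ^4 * K3 z) ((fun z => τ^4 * K2 z) z) z := by
      intro z; simpa using (hK3' z).const_mul (τ^4)
    have hDA : ∀ z, HasDerivAt (fun z => τ^4 * K2 z) (τ^4 * K1 z) z := by
      intro z; simpa using (hK2' z).const_mul (τ^4)
    have := key K1 K0 (fun z => τ^4 * K3 z) (fun z => τ^4 * K2 z) hK1' hC hD hDA x hx
    have hz : K1 0 = 0 ∧ K0 0 = 1 ∧ K3 0 = 0 ∧ K2 0 = 0 := by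
      refine ⟨by simp [hK1def], by simp [hK0def], by simp [hK3def], by simp [hK2def]⟩
    rw [hz.1, hz.2.1] at this
    simp only [hz.2.2.1, hz.2.2.2, mul_zero, zero_mul, add_zero, mul_one, zero_add] at this
    exact this
  set b := iteratedDerivWithin 1 f S 0 with hbdef
  set e := iteratedDerivWithin 3 f S 0 with hedef
  have h1mem : (1:ℝ) ∈ S := by rw [hSdef]; exact Set.right_mem_Icc.mpr zero_le_one
  have h1 := rep 1 h1mem
  have h2 := rep2 1 h1mem
  rw [hbc1, hbc0, hbc3] at h1
  rw [hbc2, hbc0, hbc3] at h2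
  simp only [hK3def, hK2def, hK1def, hK0def, Complex.ofReal_one, mul_one, zero_mul, add_zero] at h1 h2
  have h4 : (4*τ^3 : ℂ) ≠ 0 := mul_ne_zero (by norm_num) (pow_ne_zero 3 hτ)
  have hE1 : e*(Complex.sinh τ - Complex.sin τ) + k*b*τ*(Complex.cosh τ - Complex.cos τ)
      + b*τ^2*(Complex.sinh τ + Complex.sin τ) = 0 := by
    field_simp [hτ] at h1
    have h1' : (4*τ^3) * (e*(Complex.sinh τ - Complex.sin τ) + k*b*τ*(Complex.cosh τ - Complex.cos τ)
        + b*τ^2*(Complex.sinh τ + Complex.sin τ)) = 0 := by linear_combination (4*τ^3) * -h1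
    exact (mul_eq_zero.mp h1').resolve_left h4
  have hE2 : e*(Complex.sinh τ + Complex.sin τ) + k*b*τ*(Complex.cosh τ + Complex.cos τ)
      + b*τ^2*(Complex.sinh τ - Complex.sin τ) = 0 := by
    field_simp [hτ] at h2
    have h2' : (4*τ^3) * (e*(Complex.sinh τ + Complex.sin τ) + k*b*τ*(Complex.cosh τ + Complex.cos τ)
        + b*τ^2*(Complex.sinh τ - Complex.sin τ)) = 0 := by linear_combination (4*τ^3) * -h2
    exact (mul_eq_zero.mp h2').resolve_left h4
  have hbe : ¬ (b = 0 ∧ e = 0) := by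
    rintro ⟨hb, he⟩
    obtain ⟨x, hx, hfx⟩ := hfne
    apply hfx
    have hr := rep x hx
    rw [hbc0, hbc3, hb, he] at hr
    simpa using hr
  by_cases hb : b = 0
  · have he : e ≠ 0 := fun he => hbe ⟨hb, he⟩
    have hs1 : e * (Complex.sinh τ - Complex.sin τ) = 0 := by
      linear_combination hE1 - (k*τ*(Complex.cosh τ - Complex.cos τ) + τ^2*(Complex.sinh τ + Complex.sin τ)) * hb
    have hs2 : e * (Complex.sinh τ + Complex.sin τ) = 0 := by
      linear_combination hE2 - (k*τ*(Complex.cosh τ + Complex.cos τ) + τ^2*(Complex.sinh τ - Complex.sin τ)) * hb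
    have hsh : e * Complex.sinh τ = 0 := by linear_combination (hs1 + hs2)/2
    have hsn : e * Complex.sin τ = 0 := by linear_combination (hs2 - hs1)/2
    have hsh' : Complex.sinh τ = 0 := (mul_eq_zero.mp hsh).resolve_left he
    have hsn' : Complex.sin τ = 0 := (mul_eq_zero.mp hsn).resolve_left he
    rw [hsh', hsn']
    ring
  · have hX : (2*τ*b) * (k * (Complex.cosh τ * Complex.sin τ - Complex.sinh τ * Complex.cos τ)
        + 2 * τ * Complex.sin τ * Complex.sinh τ) = 0 := by
      linear_combination (Complex.sinh τ + Complex.sin τ) * hE1 - (Complex.sinh τ - Complex.sin τ) * hE2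
    have hnz : (2*τ*b) ≠ 0 := mul_ne_zero (mul_ne_zero two_ne_zero hτ) hb
    exact (mul_eq_zero.mp hX).resolve_left hnz
end

section
/- Let c > 0 and γ > 0 be real numbers. Then there exist a constant C > 0 and an integer N ≥ 1 such that for every integer n ≥ N there exists τ_n ∈ ℂ satisfying the characteristic equation (i·c·τ_n² + γ)·(cosh τ_n · sin τ_n − sinh τ_n · cos τ_n) + 2τ_n · sin τ_n · sinh τ_n = 0, together with the asymptotic estimates |τ_n − (n + 1/4)π| ≤ C/n and |i·τ_n² − ( −2/c + i·((n + 1/4)π)² )| ≤ C/n. -/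
set_option maxHeartbeats 1000000

open Complex Set Real Metric Filter

namespace Stmt2Aux

noncomputable def K0 (c γ : ℝ) : ℝ := 12/c^2 + (32 + 4*γ)/c + 8/c^3
noncomputable def K1 (c γ : ℝ) : ℝ := 24*c + 6*γ + 12

noncomputable def Ff (c γ : ℝ) (τ : ℂ) : ℂ :=
  (Complex.I * (c : ℂ) * τ ^ 2 + (γ : ℂ))
      * (Complex.cosh τ * Complex.sin τ - Complex.sinh τ * Complex.cos τ)
    + 2 * τ * Complex.sin τ * Complex.sinh τ

noncomputable def Pf (c γ : ℝ) (τ : ℂ) : ℂ :=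
  (Complex.I * (c : ℂ) * τ ^ 2 + (γ : ℂ)) * (Complex.sin τ - Complex.cos τ)
    + 2 * τ * Complex.sin τ

noncomputable def Qf (c γ : ℝ) (τ : ℂ) : ℂ :=
  (Complex.I * (c : ℂ) * τ ^ 2 + (γ : ℂ)) * (Complex.sin τ + Complex.cos τ)
    - 2 * τ * Complex.sin τ

noncomputable def Hf (c γ a : ℝ) (w : ℂ) : ℂ :=
  (Complex.I * (c : ℂ) * ((a:ℂ)+w) ^ 2 + (γ : ℂ)) * Complex.sin w
    + ((a:ℂ)+w) * (Complex.cos w + Complex.sin w)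

lemma F_decomp (c γ : ℝ) (τ : ℂ) :
    Ff c γ τ = (Complex.exp τ * Pf c γ τ + Complex.exp (-τ) * Qf c γ τ)/2 := by
  have h1 : Complex.cosh τ = (Complex.exp τ + Complex.exp (-τ))/2 := by
    rw [← Complex.cosh_add_sinh τ, ← Complex.cosh_sub_sinh τ]; ring
  have h2 : Complex.sinh τ = (Complex.exp τ - Complex.exp (-τ))/2 := by
    rw [← Complex.cosh_add_sinh τ, ← Complex.cosh_sub_sinh τ]; ring
  simp only [Ff, Pf, Qf]
  rw [h1, h2]; ring

lemma F_diff (c γ : ℝ) : Differentiable ℂ (Ff c γ) := by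
  unfold Ff
  fun_prop


lemma exp_taylor2 (x : ℂ) (hx : ‖x‖ ≤ 1) :
    ‖Complex.exp x - (1 + x)‖ ≤ ‖x‖^2 := by
  have h := Complex.exp_bound (x := x) (by exact hx) (n := 2) (by norm_num)
  have hs : ∑ m ∈ Finset.range 2, x ^ m / (m.factorial : ℂ) = 1 + x := by
    simp [Finset.sum_range_succ]
  rw [hs] at h
  calc ‖Complex.exp x - (1 + x)‖ ≤ ‖x‖ ^ 2 * (3 * ((2:ℝ) * 2)⁻¹) := by
        convert h using 2 <;> norm_num
    _ ≤ ‖x‖^2 := by nlinarith [norm_nonneg x, sq_nonneg ‖x‖]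

lemma exp_taylor3 (x : ℂ) (hx : ‖x‖ ≤ 1) :
    ‖Complex.exp x - (1 + x + x^2/2)‖ ≤ ‖x‖^3 := by
  have h := Complex.exp_bound (x := x) (by exact hx) (n := 3) (by norm_num)
  have hs : ∑ m ∈ Finset.range 3, x ^ m / (m.factorial : ℂ) = 1 + x + x^2/2 := by
    simp [Finset.sum_range_succ]
  rw [hs] at h
  calc ‖Complex.exp x - (1 + x + x^2/2)‖
      ≤ ‖x‖ ^ 3 * (4 * ((6:ℝ) * 3)⁻¹) := by convert h using 2 <;> norm_num
    _ ≤ ‖x‖^3 := by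
        nlinarith [norm_nonneg x, pow_nonneg (norm_nonneg x) 3]

lemma sin_ident (w : ℂ) : Complex.exp (w*I) - Complex.exp (-(w*I)) = 2 * Complex.sin w * I := by
  rw [Complex.exp_mul_I, ← neg_mul, Complex.exp_mul_I, Complex.sin_neg, Complex.cos_neg]
  ring

lemma cos_ident (w : ℂ) : Complex.exp (w*I) + Complex.exp (-(w*I)) = 2 * Complex.cos w := by
  rw [Complex.exp_mul_I, ← neg_mul, Complex.exp_mul_I, Complex.sin_neg, Complex.cos_neg]
  ring

lemma sin_taylor (w : ℂ) (hw : ‖w‖ ≤ 1) : ‖Complex.sin w - w‖ ≤ ‖w‖^3 := by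
  have hwI : ‖w * I‖ ≤ 1 := by rwa [norm_mul, Complex.norm_I, mul_one]
  have hwI' : ‖-(w * I)‖ ≤ 1 := by rwa [norm_neg]
  have h1 := exp_taylor3 (w*I) hwI
  have h2 := exp_taylor3 (-(w*I)) hwI'
  have key : Complex.sin w - w =
      ((Complex.exp (-(w*I)) - (1 + -(w*I) + (-(w*I))^2/2))
        - (Complex.exp (w*I) - (1 + w*I + (w*I)^2/2))) * I / 2 := by
    have h := sin_ident w
    have hI : (I:ℂ) * I = -1 := Complex.I_mul_I
    linear_combination (I/2) * h + (Complex.sin w - w) * hI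
  rw [key]
  rw [norm_div, norm_mul, Complex.norm_I, mul_one]
  calc _ ≤ (‖Complex.exp (-(w*I)) - (1 + -(w*I) + (-(w*I))^2/2)‖
        + ‖Complex.exp (w*I) - (1 + w*I + (w*I)^2/2)‖) / ‖(2:ℂ)‖ := by
        gcongr; exact norm_sub_le _ _
    _ ≤ (‖-(w*I)‖^3 + ‖w*I‖^3) / 2 := by
        rw [show ‖(2:ℂ)‖ = 2 by simp]
        gcongr
    _ ≤ ‖w‖^3 := by
        rw [norm_neg, norm_mul, Complex.norm_I, mul_one]
        nlinarith [pow_nonneg (norm_nonneg w) 3]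

lemma cos_taylor (w : ℂ) (hw : ‖w‖ ≤ 1) : ‖Complex.cos w - 1‖ ≤ ‖w‖^2 := by
  have hwI : ‖w * I‖ ≤ 1 := by rwa [norm_mul, Complex.norm_I, mul_one]
  have hwI' : ‖-(w * I)‖ ≤ 1 := by rwa [norm_neg]
  have h1 := exp_taylor2 (w*I) hwI
  have h2 := exp_taylor2 (-(w*I)) hwI'
  have key : Complex.cos w - 1 =
      ((Complex.exp (w*I) - (1 + w*I)) + (Complex.exp (-(w*I)) - (1 + -(w*I)))) / 2 := by
    have h := cos_ident w
    linear_combination (-(1:ℂ)/2) * h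
  rw [key, norm_div, show ‖(2:ℂ)‖ = 2 by simp]
  calc _ ≤ (‖Complex.exp (w*I) - (1 + w*I)‖ + ‖Complex.exp (-(w*I)) - (1 + -(w*I))‖) / 2 := by
        gcongr; exact norm_add_le _ _
    _ ≤ (‖w*I‖^2 + ‖-(w*I)‖^2) / 2 := by gcongr
    _ ≤ ‖w‖^2 := by
        rw [norm_neg, norm_mul, Complex.norm_I, mul_one]
        nlinarith [sq_nonneg ‖w‖]

lemma sin_small (w : ℂ) (hw : ‖w‖ ≤ 1) : ‖Complex.sin w‖ ≤ 2 * ‖w‖ := by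
  have h := sin_taylor w hw
  have := norm_sub_norm_le (Complex.sin w) w
  have h3 : ‖w‖^3 ≤ ‖w‖ := by
    have h0 := norm_nonneg w
    nlinarith [mul_nonneg (mul_nonneg h0 (sub_nonneg.2 hw)) (by linarith : (0:ℝ) ≤ 1 + ‖w‖)]
  linarith

lemma cos_small (w : ℂ) (hw : ‖w‖ ≤ 1) : ‖Complex.cos w‖ ≤ 2 := by
  have h := cos_taylor w hw
  have := norm_sub_norm_le (Complex.cos w) 1
  have h2 : ‖w‖^2 ≤ 1 := by nlinarith [norm_nonneg w]
  have : ‖(1:ℂ)‖ = 1 := by simp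
  linarith [norm_sub_norm_le (Complex.cos w) (1:ℂ)]

lemma sin_le_three (z : ℂ) (hz : |z.im| ≤ 1) : ‖Complex.sin z‖ ≤ 3 := by
  have h := sin_ident z
  have h1 : ‖Complex.exp (z*I)‖ = Real.exp (-z.im) := by
    rw [Complex.norm_exp, Complex.mul_I_re]
  have h2 : ‖Complex.exp (-(z*I))‖ = Real.exp (z.im) := by
    rw [Complex.norm_exp]
    simp [Complex.mul_I_re]
  have hb : ∀ t : ℝ, |t| ≤ 1 → Real.exp t ≤ 3 := by
    intro t ht
    have : Real.exp t ≤ Real.exp 1 := Real.exp_le_exp.2 (le_of_abs_le ht)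
    linarith [Real.exp_one_lt_d9]
  have habs : ‖2 * Complex.sin z * I‖ = 2 * ‖Complex.sin z‖ := by
    rw [norm_mul, norm_mul, Complex.norm_I, mul_one]; simp
  have : ‖2 * Complex.sin z * I‖ ≤ Real.exp (-z.im) + Real.exp (z.im) := by
    rw [← h]; calc ‖_ - _‖ ≤ _ := norm_sub_le _ _
      _ = _ := by rw [h1, h2]
  rw [habs] at this
  have e1 := hb (-z.im) (by rwa [abs_neg])
  have e2 := hb z.im hz
  linarith

lemma cos_le_three (z : ℂ) (hz : |z.im| ≤ 1) : ‖Complex.cos z‖ ≤ 3 := by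
  have h := cos_ident z
  have h1 : ‖Complex.exp (z*I)‖ = Real.exp (-z.im) := by
    rw [Complex.norm_exp, Complex.mul_I_re]
  have h2 : ‖Complex.exp (-(z*I))‖ = Real.exp (z.im) := by
    rw [Complex.norm_exp]
    simp [Complex.mul_I_re]
  have hb : ∀ t : ℝ, |t| ≤ 1 → Real.exp t ≤ 3 := by
    intro t ht
    have : Real.exp t ≤ Real.exp 1 := Real.exp_le_exp.2 (le_of_abs_le ht)
    linarith [Real.exp_one_lt_d9]
  have habs : ‖2 * Complex.cos z‖ = 2 * ‖Complex.cos z‖ := by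
    rw [norm_mul]; simp
  have : ‖2 * Complex.cos z‖ ≤ Real.exp (-z.im) + Real.exp (z.im) := by
    rw [← h]; calc ‖_ + _‖ ≤ _ := norm_add_le _ _
      _ = _ := by rw [h1, h2]
  rw [habs] at this
  have e1 := hb (-z.im) (by rwa [abs_neg])
  have e2 := hb z.im hz
  linarith

/-- Minimum modulus principle: zero existence. -/
lemma exists_zero_of_min_mod (f : ℂ → ℂ) (hf : Differentiable ℂ f) (z₀ : ℂ) (r ε : ℝ)
    (hr : 0 < r) (hs : ∀ z ∈ sphere z₀ r, ε ≤ ‖f z‖) (h0 : 3 * ‖f z₀‖ < ε) :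
    ∃ z ∈ closedBall z₀ r, f z = 0 := by
  have hmem : (z₀ + r) ∈ sphere z₀ r := by
    simp [Complex.dist_eq, abs_of_pos hr]
  have hne : ∃ᶠ z in nhds z₀, f z ≠ f z₀ := by
    by_contra hcon
    rw [Filter.not_frequently] at hcon
    have h' : f =ᶠ[nhds z₀] fun _ => f z₀ := by
      filter_upwards [hcon] with z hz; simpa using hz
    have hfa : AnalyticOnNhd ℂ f univ := hf.differentiableOn.analyticOnNhd isOpen_univ
    have heq := hfa.eqOn_of_preconnected_of_eventuallyEq analyticOnNhd_const
      isPreconnected_univ (mem_univ z₀) h' (mem_univ (z₀ + r))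
    have := hs _ hmem
    rw [heq] at this
    have := norm_nonneg (f z₀)
    simp only at *
    linarith
  have hsub : ∀ z ∈ sphere z₀ r, ε - ‖f z₀‖ ≤ ‖f z - f z₀‖ := by
    intro z hz
    have := hs z hz
    have := norm_sub_norm_le (f z) (f z₀)
    linarith
  have him := (hf.diffContOnCl).ball_subset_image_closedBall hr hsub hne
  have h0' : (0:ℂ) ∈ ball (f z₀) ((ε - ‖f z₀‖)/2) := by
    rw [mem_ball, dist_zero_left]
    have := norm_nonneg (f z₀)
    linarith
  obtain ⟨z, hz, hfz⟩ := him h0'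
  exact ⟨z, hz, hfz⟩


lemma norm_add5_le (x1 x2 x3 x4 x5 : ℂ) :
    ‖x1+x2+x3+x4+x5‖ ≤ ‖x1‖+‖x2‖+‖x3‖+‖x4‖+‖x5‖ := by
  calc ‖x1+x2+x3+x4+x5‖ ≤ ‖x1+x2+x3+x4‖ + ‖x5‖ := norm_add_le _ _
    _ ≤ (‖x1+x2+x3‖ + ‖x4‖) + ‖x5‖ := by gcongr; exact norm_add_le _ _
    _ ≤ ((‖x1+x2‖ + ‖x3‖) + ‖x4‖) + ‖x5‖ := by gcongr; exact norm_add_le _ _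
    _ ≤ (((‖x1‖+‖x2‖) + ‖x3‖) + ‖x4‖) + ‖x5‖ := by gcongr; exact norm_add_le _ _
    _ = ‖x1‖+‖x2‖+‖x3‖+‖x4‖+‖x5‖ := by ring

lemma R_bound (c γ : ℝ) (hc : 0 < c) (hγ : 0 < γ) (a : ℝ)
    (h1 : 1 ≤ a) (h3 : 2 ≤ c*a) (w : ℂ) (hw : ‖w‖ ≤ 2/(c*a)) :
    ‖Hf c γ a w - ((a:ℂ)*(1 + Complex.I*(c:ℂ)*(a:ℂ))*w + (a:ℂ))‖ ≤ K0 c γ / a := by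
  have ha0 : 0 < a := lt_of_lt_of_le one_pos h1
  have hca : 0 < c*a := mul_pos hc ha0
  have hwmax1 : 2/(c*a) ≤ 1 := by rw [div_le_one hca]; linarith
  have hw1 : ‖w‖ ≤ 1 := le_trans hw hwmax1
  have hnw := norm_nonneg w
  have nI : ‖(Complex.I : ℂ)‖ = 1 := Complex.norm_I
  have nc : ‖((c:ℝ):ℂ)‖ = c := by
    simp [Complex.norm_real, Real.norm_eq_abs, abs_of_pos hc]
  have nγ : ‖((γ:ℝ):ℂ)‖ = γ := by
    simp [Complex.norm_real, Real.norm_eq_abs, abs_of_pos hγ]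
  have nA : ‖((a:ℝ):ℂ)‖ = a := by
    simp [Complex.norm_real, Real.norm_eq_abs, abs_of_pos ha0]
  have hsin3 := sin_taylor w hw1
  have hcos2 := cos_taylor w hw1
  have hsins := sin_small w hw1
  have hcoss := cos_small w hw1
  have hident : Hf c γ a w - ((a:ℂ)*(1 + Complex.I*(c:ℂ)*(a:ℂ))*w + (a:ℂ)) =
      Complex.I*(c:ℂ)*(a:ℂ)^2*(Complex.sin w - w)
      + (2*Complex.I*(c:ℂ)*(a:ℂ)*w + Complex.I*(c:ℂ)*w^2 + (γ:ℂ))*Complex.sin w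
      + (a:ℂ)*(Complex.cos w - 1) + (a:ℂ)*(Complex.sin w - w)
      + w*(Complex.cos w + Complex.sin w) := by
    simp only [Hf]; ring
  rw [hident]
  -- key scalar facts
  have kw : ‖w‖*(c*a) ≤ 2 := (le_div_iff₀ hca).mp hw
  have b1 : ‖Complex.I*(c:ℂ)*(a:ℂ)^2*(Complex.sin w - w)‖ ≤ 8/(c^2*a) := by
    have he : ‖Complex.I*(c:ℂ)*(a:ℂ)^2*(Complex.sin w - w)‖
        = c*a^2*‖Complex.sin w - w‖ := by
      rw [norm_mul, norm_mul, norm_mul, norm_pow, nI, nc, nA, one_mul]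
    rw [he]
    calc c*a^2*‖Complex.sin w - w‖ ≤ c*a^2*‖w‖^3 := by gcongr
      _ ≤ c*a^2*(2/(c*a))^3 := by gcongr
      _ = 8/(c^2*a) := by field_simp; ring
  have b2 : ‖(2*Complex.I*(c:ℂ)*(a:ℂ)*w + Complex.I*(c:ℂ)*w^2 + (γ:ℂ))*Complex.sin w‖
      ≤ (24+4*γ)/(c*a) := by
    have hfac : ‖2*Complex.I*(c:ℂ)*(a:ℂ)*w + Complex.I*(c:ℂ)*w^2 + (γ:ℂ)‖ ≤ 6 + γ := by
      have n2 : ‖(2:ℂ)‖ = 2 := by norm_num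
      have t1 : ‖2*Complex.I*(c:ℂ)*(a:ℂ)*w‖ = 2*(c*a)*‖w‖ := by
        rw [norm_mul, norm_mul, norm_mul, norm_mul, nI, nc, nA, n2]; ring
      have t2 : ‖Complex.I*(c:ℂ)*w^2‖ = c*‖w‖^2 := by
        rw [norm_mul, norm_mul, norm_pow, nI, nc, one_mul]
      have k1 : 2*(c*a)*‖w‖ ≤ 4 := by nlinarith [kw]
      have k2 : c*‖w‖^2 ≤ 2 := by nlinarith [kw, hw1, hc.le, h1]
      calc ‖2*Complex.I*(c:ℂ)*(a:ℂ)*w + Complex.I*(c:ℂ)*w^2 + (γ:ℂ)‖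
          ≤ ‖2*Complex.I*(c:ℂ)*(a:ℂ)*w + Complex.I*(c:ℂ)*w^2‖ + ‖((γ:ℝ):ℂ)‖ :=
            norm_add_le _ _
        _ ≤ ‖2*Complex.I*(c:ℂ)*(a:ℂ)*w‖ + ‖Complex.I*(c:ℂ)*w^2‖ + ‖((γ:ℝ):ℂ)‖ := by
            gcongr; exact norm_add_le _ _
        _ ≤ 4 + 2 + γ := by rw [t1, t2, nγ]; gcongr
        _ = 6 + γ := by ring
    calc ‖(2*Complex.I*(c:ℂ)*(a:ℂ)*w + Complex.I*(c:ℂ)*w^2 + (γ:ℂ))*Complex.sin w‖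
        = ‖2*Complex.I*(c:ℂ)*(a:ℂ)*w + Complex.I*(c:ℂ)*w^2 + (γ:ℂ)‖*‖Complex.sin w‖ :=
          norm_mul _ _
      _ ≤ (6+γ)*(2*‖w‖) := by
          apply mul_le_mul hfac hsins (norm_nonneg _) (by linarith)
      _ ≤ (6+γ)*(2*(2/(c*a))) := by gcongr
      _ = (24+4*γ)/(c*a) := by field_simp; ring
  have b3 : ‖(a:ℂ)*(Complex.cos w - 1)‖ ≤ 4/(c^2*a) := by
    have he : ‖(a:ℂ)*(Complex.cos w - 1)‖ = a*‖Complex.cos w - 1‖ := by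
      rw [norm_mul, nA]
    rw [he]
    calc a*‖Complex.cos w - 1‖ ≤ a*‖w‖^2 := by gcongr
      _ ≤ a*(2/(c*a))^2 := by gcongr
      _ = 4/(c^2*a) := by field_simp; ring
  have b4 : ‖(a:ℂ)*(Complex.sin w - w)‖ ≤ 8/(c^3*a) := by
    have he : ‖(a:ℂ)*(Complex.sin w - w)‖ = a*‖Complex.sin w - w‖ := by
      rw [norm_mul, nA]
    rw [he]
    calc a*‖Complex.sin w - w‖ ≤ a*‖w‖^3 := by gcongr
      _ ≤ a*(2/(c*a))^3 := by gcongr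
      _ = 8/(c^3*a^2) := by field_simp; ring
      _ ≤ 8/(c^3*a) := by
          rw [div_le_div_iff₀ (by positivity) (by positivity)]
          nlinarith [mul_nonneg (mul_nonneg (pow_pos hc 3).le ha0.le) (sub_nonneg.2 h1)]
  have b5 : ‖w*(Complex.cos w + Complex.sin w)‖ ≤ 8/(c*a) := by
    have hcs : ‖Complex.cos w + Complex.sin w‖ ≤ 4 := by
      calc ‖Complex.cos w + Complex.sin w‖ ≤ ‖Complex.cos w‖ + ‖Complex.sin w‖ :=
            norm_add_le _ _
        _ ≤ 2 + 2*1 := by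
            gcongr
            exact le_trans hsins (by nlinarith [hw1, hnw])
        _ = 4 := by norm_num
    calc ‖w*(Complex.cos w + Complex.sin w)‖ = ‖w‖*‖Complex.cos w + Complex.sin w‖ :=
          norm_mul _ _
      _ ≤ (2/(c*a))*4 := by
          apply mul_le_mul hw hcs (norm_nonneg _) (by positivity)
      _ = 8/(c*a) := by ring
  refine le_trans (norm_add5_le _ _ _ _ _) ?_
  have hc' : c ≠ 0 := ne_of_gt hc
  have ha' : a ≠ 0 := ne_of_gt ha0
  have hsum : 8/(c^2*a) + (24+4*γ)/(c*a) + 4/(c^2*a) + 8/(c^3*a) + 8/(c*a) = K0 c γ / a := by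
    unfold K0; field_simp; ring
  linarith [b1, b2, b3, b4, b5]


lemma main_a (c γ : ℝ) (hc : 0 < c) (hγ : 0 < γ) (a σ : ℝ)
    (h1 : 1 ≤ a) (h2 : c ≤ a) (h3 : 2 ≤ c*a)
    (h4 : K0 c γ / a ≤ c/2)
    (h5 : Real.exp (a+1) * (2*(K0 c γ)/a) ≤ Real.exp (a-1) * (c/24))
    (h6 : Real.exp (1-a) * ((K1 c γ)*a^2) ≤ Real.exp (a-1) * (c/24))
    (hsin : Real.sin a = σ) (hcos : Real.cos a = σ) (hσ : |σ| = Real.sqrt 2 / 2) :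
    ∃ τ : ℂ, Ff c γ τ = 0 ∧ ‖τ - (a:ℂ)‖ ≤ 2/(c*a) ∧
      ‖Complex.I*τ^2 - (((-2/c : ℝ):ℂ) + Complex.I*((a:ℂ))^2)‖ ≤ (2 + 6/c^2)/a := by
  have ha0 : 0 < a := lt_of_lt_of_le one_pos h1
  have hca : 0 < c*a := mul_pos hc ha0
  have hc' : c ≠ 0 := ne_of_gt hc
  have ha' : a ≠ 0 := ne_of_gt ha0
  have nA : ‖((a:ℝ):ℂ)‖ = a := by
    simp [Complex.norm_real, Real.norm_eq_abs, abs_of_pos ha0]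
  set u : ℂ := 1 + Complex.I*(c:ℂ)*(a:ℂ) with hu
  have huim : u.im = c*a := by simp [hu]
  have hunorm : c*a ≤ ‖u‖ := by
    have h := Complex.abs_im_le_norm u
    rw [huim] at h
    exact le_trans (le_abs_self _) h
  have hupos : 0 < ‖u‖ := lt_of_lt_of_le hca hunorm
  have hune : u ≠ 0 := by
    intro h; rw [h] at hupos; simp at hupos
  set δ : ℂ := -u⁻¹ with hδ
  have hδnorm : ‖δ‖ ≤ 1/(c*a) := by
    rw [hδ, norm_neg, norm_inv, one_div]
    exact inv_anti₀ hca hunorm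
  set r : ℝ := 1/a^2 with hr
  have hrpos : 0 < r := by rw [hr]; positivity
  have hr_le : r ≤ 1/(c*a) := by
    rw [hr, one_div, one_div]
    apply inv_anti₀ hca
    nlinarith
  have hδr : ‖δ‖ + r ≤ 2/(c*a) := by
    have : (2:ℝ)/(c*a) = 1/(c*a) + 1/(c*a) := by ring
    rw [this]; exact add_le_add hδnorm hr_le
  have hwmax1 : 2/(c*a) ≤ 1 := by rw [div_le_one hca]; linarith
  -- exact cancellation
  have hAuδ : (a:ℂ)*u*δ + (a:ℂ) = 0 := by
    rw [hδ]; field_simp; ring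
  clear_value u δ
  -- H on the sphere and at δ
  have hH0 : ‖Hf c γ a δ‖ ≤ K0 c γ / a := by
    have hb := R_bound c γ hc hγ a h1 h3 δ (le_trans hδnorm (by gcongr <;> norm_num))
    have hid : Hf c γ a δ - ((a:ℂ)*u*δ + (a:ℂ)) = Hf c γ a δ := by
      rw [hAuδ, sub_zero]
    rw [← hu] at hb
    rwa [hid] at hb
  have hHs : ∀ w : ℂ, ‖w - δ‖ = r → c/2 ≤ ‖Hf c γ a w‖ := by
    intro w hwδ
    have hwn : ‖w‖ ≤ 2/(c*a) := by
      calc ‖w‖ = ‖(w - δ) + δ‖ := by ring_nf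
        _ ≤ ‖w - δ‖ + ‖δ‖ := norm_add_le _ _
        _ = r + ‖δ‖ := by rw [hwδ]
        _ ≤ 2/(c*a) := by linarith [hδr]
    have hR := R_bound c γ hc hγ a h1 h3 w hwn
    rw [← hu] at hR
    have hdecomp : Hf c γ a w = (a:ℂ)*u*(w - δ) + (Hf c γ a w - ((a:ℂ)*u*w + (a:ℂ))) := by
      linear_combination hAuδ
    have hlow : c ≤ ‖(a:ℂ)*u*(w - δ)‖ := by
      rw [norm_mul, norm_mul, nA, hwδ, hr]
      calc c = a*(c*a)*(1/a^2) := by field_simp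
        _ ≤ a*‖u‖*(1/a^2) := by gcongr
    have hkey : ‖(a:ℂ)*u*(w - δ)‖ - ‖Hf c γ a w - ((a:ℂ)*u*w + (a:ℂ))‖ ≤ ‖Hf c γ a w‖ := by
      have h := norm_sub_norm_le ((a:ℂ)*u*(w - δ)) (-(Hf c γ a w - ((a:ℂ)*u*w + (a:ℂ))))
      rw [norm_neg, sub_neg_eq_add] at h
      calc ‖(a:ℂ)*u*(w - δ)‖ - ‖Hf c γ a w - ((a:ℂ)*u*w + (a:ℂ))‖
          ≤ ‖(a:ℂ)*u*(w - δ) + (Hf c γ a w - ((a:ℂ)*u*w + (a:ℂ)))‖ := h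
        _ = ‖Hf c γ a w‖ := by rw [← hdecomp]
    linarith
  -- P in terms of H
  have hsA : Complex.sin (a:ℂ) = ((σ:ℝ):ℂ) := by
    rw [← Complex.ofReal_sin, hsin]
  have hcA : Complex.cos (a:ℂ) = ((σ:ℝ):ℂ) := by
    rw [← Complex.ofReal_cos, hcos]
  have hP : ∀ w : ℂ, Pf c γ ((a:ℂ) + w) = 2*((σ:ℝ):ℂ)*Hf c γ a w := by
    intro w
    simp only [Pf, Hf, Complex.sin_add, Complex.cos_add, hsA, hcA]
    ring
  have nσ : ‖((σ:ℝ):ℂ)‖ = Real.sqrt 2 / 2 := by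
    simp [Complex.norm_real, Real.norm_eq_abs, hσ]
  have hs2a : 1 ≤ Real.sqrt 2 := by
    nlinarith [Real.sq_sqrt (show (0:ℝ) ≤ 2 by norm_num), Real.sqrt_nonneg 2]
  have hs2b : Real.sqrt 2 ≤ 2 := by
    nlinarith [Real.sq_sqrt (show (0:ℝ) ≤ 2 by norm_num), Real.sqrt_nonneg 2]
  -- Q bound
  have hQ : ∀ w : ℂ, ‖w‖ ≤ 1 → ‖Qf c γ ((a:ℂ)+w)‖ ≤ K1 c γ * a^2 := by
    intro w hw
    have him : |((a:ℂ)+w).im| ≤ 1 := by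
      have : ((a:ℂ)+w).im = w.im := by simp
      rw [this]
      exact le_trans (Complex.abs_im_le_norm w) hw
    have hs3 := sin_le_three ((a:ℂ)+w) him
    have hc3 := cos_le_three ((a:ℂ)+w) him
    have hz2a : ‖(a:ℂ)+w‖ ≤ 2*a := by
      calc ‖(a:ℂ)+w‖ ≤ ‖(a:ℂ)‖ + ‖w‖ := norm_add_le _ _
        _ ≤ a + 1 := by rw [nA]; linarith
        _ ≤ 2*a := by linarith
    have hX : ‖Complex.I*(c:ℂ)*((a:ℂ)+w)^2 + (γ:ℂ)‖ ≤ (4*c+γ)*a^2 := by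
      calc ‖Complex.I*(c:ℂ)*((a:ℂ)+w)^2 + (γ:ℂ)‖
          ≤ ‖Complex.I*(c:ℂ)*((a:ℂ)+w)^2‖ + ‖((γ:ℝ):ℂ)‖ := norm_add_le _ _
        _ = c*‖(a:ℂ)+w‖^2 + γ := by
            rw [norm_mul, norm_mul, norm_pow, Complex.norm_I, one_mul]
            congr 2
            · simp [Complex.norm_real, Real.norm_eq_abs, abs_of_pos hc]
            · simp [Complex.norm_real, Real.norm_eq_abs, abs_of_pos hγ]
        _ ≤ c*(2*a)^2 + γ*a^2 := by
            gcongr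
            nlinarith [mul_nonneg (mul_nonneg hγ.le (sub_nonneg.2 h1)) (by linarith : (0:ℝ) ≤ a + 1)]
        _ = (4*c+γ)*a^2 := by ring
    have hsum : ‖Complex.sin ((a:ℂ)+w) + Complex.cos ((a:ℂ)+w)‖ ≤ 6 := by
      calc _ ≤ ‖Complex.sin ((a:ℂ)+w)‖ + ‖Complex.cos ((a:ℂ)+w)‖ := norm_add_le _ _
        _ ≤ 3 + 3 := add_le_add hs3 hc3
        _ = 6 := by norm_num
    calc ‖Qf c γ ((a:ℂ)+w)‖
        ≤ ‖(Complex.I*(c:ℂ)*((a:ℂ)+w)^2 + (γ:ℂ)) * (Complex.sin ((a:ℂ)+w) + Complex.cos ((a:ℂ)+w))‖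
          + ‖2*((a:ℂ)+w)*Complex.sin ((a:ℂ)+w)‖ := norm_sub_le _ _
      _ ≤ ((4*c+γ)*a^2)*6 + 2*(2*a)*3 := by
          rw [norm_mul, norm_mul, norm_mul]
          have n2 : ‖(2:ℂ)‖ = 2 := by norm_num
          rw [n2]
          apply add_le_add
          · apply mul_le_mul hX hsum (norm_nonneg _) (by positivity)
          · have : 2*‖(a:ℂ)+w‖*‖Complex.sin ((a:ℂ)+w)‖ ≤ 2*(2*a)*3 := by
              apply mul_le_mul _ hs3 (norm_nonneg _) (by positivity)
              gcongr
            exact this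
      _ ≤ (4*c+γ)*a^2*6 + 12*a^2 := by nlinarith
      _ = K1 c γ * a^2 := by unfold K1; ring
  -- the center point
  set z₀ : ℂ := (a:ℂ) + δ with hz₀
  have h12 : 1/(c*a) ≤ 1/2 := by
    rw [div_le_div_iff₀ hca (by norm_num)]; linarith
  have hz₀re1 : |z₀.re - a| ≤ 1/2 := by
    have hδre : z₀.re - a = δ.re := by simp [hz₀]
    rw [hδre]
    calc |δ.re| ≤ ‖δ‖ := by
          exact Complex.abs_re_le_norm δ
      _ ≤ 1/2 := le_trans hδnorm h12
  have hrhalf : r ≤ 1/2 := le_trans hr_le h12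
  have hre : ∀ z ∈ closedBall z₀ r, a - 1 ≤ z.re ∧ z.re ≤ a + 1 := by
    intro z hz
    rw [mem_closedBall, dist_eq_norm] at hz
    have h1' : |z.re - z₀.re| ≤ r := by
      calc |z.re - z₀.re| = |(z - z₀).re| := by rw [Complex.sub_re]
        _ ≤ ‖z - z₀‖ := by exact Complex.abs_re_le_norm _
        _ ≤ r := hz
    obtain ⟨q1, q2⟩ := abs_le.1 h1'
    obtain ⟨q3, q4⟩ := abs_le.1 hz₀re1
    constructor <;> linarith
  set ε : ℝ := (Real.exp (a-1) * (c/2) - Real.exp (1-a) * (K1 c γ * a^2))/2 with hε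
  have hexp : ∀ z : ℂ, ‖Complex.exp z‖ = Real.exp z.re := fun z => by
    rw [Complex.norm_exp]
  have hnorm2 : ∀ x : ℂ, ‖x/2‖ = ‖x‖/2 := fun x => by
    rw [norm_div]; norm_num
  have n2 : ‖(2:ℂ)‖ = 2 := by norm_num
  -- lower bound on the sphere
  have hs : ∀ z ∈ sphere z₀ r, ε ≤ ‖Ff c γ z‖ := by
    intro z hzs
    have hzb : z ∈ closedBall z₀ r := sphere_subset_closedBall hzs
    obtain ⟨hre1, hre2⟩ := hre z hzb
    obtain ⟨w, rfl⟩ : ∃ w, z = (a:ℂ) + w := ⟨z - (a:ℂ), by ring⟩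
    have hwδ : ‖w - δ‖ = r := by
      have hwz : w - δ = ((a:ℂ) + w) - z₀ := by rw [hz₀]; ring
      rw [hwz]
      rw [mem_sphere, dist_eq_norm] at hzs
      exact hzs
    have hH := hHs w hwδ
    have hw2 : ‖w‖ ≤ 2/(c*a) := by
      calc ‖w‖ = ‖(w - δ) + δ‖ := by ring_nf
        _ ≤ ‖w - δ‖ + ‖δ‖ := norm_add_le _ _
        _ = r + ‖δ‖ := by rw [hwδ]
        _ ≤ 2/(c*a) := by linarith [hδr]
    have hw1 : ‖w‖ ≤ 1 := le_trans hw2 hwmax1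
    have hPz : c/2 ≤ ‖Pf c γ ((a:ℂ) + w)‖ := by
      rw [hP w, norm_mul, norm_mul, nσ, n2]
      calc c/2 = 1*(c/2) := by ring
        _ ≤ (2*(Real.sqrt 2/2))*‖Hf c γ a w‖ := by
            apply mul_le_mul (by linarith) hH (by linarith) (by positivity)
    have hQz : ‖Qf c γ ((a:ℂ)+w)‖ ≤ K1 c γ * a^2 := hQ w hw1
    have e1 : Real.exp (a-1) * (c/2) ≤ ‖Complex.exp ((a:ℂ)+w) * Pf c γ ((a:ℂ)+w)‖ := by
      rw [norm_mul, hexp]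
      apply mul_le_mul (Real.exp_le_exp.2 (by linarith)) hPz (by linarith) (Real.exp_pos _).le
    have e2 : ‖Complex.exp (-((a:ℂ)+w)) * Qf c γ ((a:ℂ)+w)‖ ≤ Real.exp (1-a) * (K1 c γ * a^2) := by
      rw [norm_mul, hexp, Complex.neg_re]
      apply mul_le_mul (Real.exp_le_exp.2 (by linarith)) hQz (norm_nonneg _) (Real.exp_pos _).le
    have e3 : ‖Complex.exp ((a:ℂ)+w) * Pf c γ ((a:ℂ)+w)‖
        - ‖Complex.exp (-((a:ℂ)+w)) * Qf c γ ((a:ℂ)+w)‖ ≤ ‖Ff c γ ((a:ℂ)+w)‖ * 2 := by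
      have h := norm_sub_norm_le (Complex.exp ((a:ℂ)+w) * Pf c γ ((a:ℂ)+w))
        (-(Complex.exp (-((a:ℂ)+w)) * Qf c γ ((a:ℂ)+w)))
      rw [norm_neg, sub_neg_eq_add] at h
      have heq : ‖Complex.exp ((a:ℂ)+w) * Pf c γ ((a:ℂ)+w)
          + Complex.exp (-((a:ℂ)+w)) * Qf c γ ((a:ℂ)+w)‖ = ‖Ff c γ ((a:ℂ)+w)‖ * 2 := by
        rw [F_decomp c γ ((a:ℂ)+w), hnorm2]
        ring
      linarith [h, heq.symm.le, heq.le]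
    rw [hε]
    linarith [e1, e2, e3]
  -- upper bound at the center
  have hδ1 : ‖δ‖ ≤ 1 := le_trans hδnorm (by linarith)
  have hPz₀ : ‖Pf c γ z₀‖ ≤ 2*(K0 c γ)/a := by
    rw [hz₀, hP δ, norm_mul, norm_mul, nσ, n2]
    have hK0nn : 0 ≤ K0 c γ / a := le_trans (norm_nonneg _) hH0
    calc 2*(Real.sqrt 2/2)*‖Hf c γ a δ‖ ≤ 2*1*(K0 c γ/a) := by
          apply mul_le_mul (by linarith) hH0 (norm_nonneg _) (by norm_num)
      _ = 2*(K0 c γ)/a := by ring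
  have hQz₀ : ‖Qf c γ z₀‖ ≤ K1 c γ * a^2 := by rw [hz₀]; exact hQ δ hδ1
  obtain ⟨hre1, hre2⟩ := hre z₀ (mem_closedBall_self hrpos.le)
  have hsmall : 3*‖Ff c γ z₀‖ < ε := by
    have hup : ‖Ff c γ z₀‖ * 2 ≤ Real.exp (a+1) * (2*(K0 c γ)/a)
        + Real.exp (1-a)*(K1 c γ*a^2) := by
      rw [F_decomp c γ z₀, hnorm2]
      calc ‖Complex.exp z₀ * Pf c γ z₀ + Complex.exp (-z₀) * Qf c γ z₀‖/2*2
          = ‖Complex.exp z₀ * Pf c γ z₀ + Complex.exp (-z₀) * Qf c γ z₀‖ := by ring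
        _ ≤ ‖Complex.exp z₀ * Pf c γ z₀‖ + ‖Complex.exp (-z₀) * Qf c γ z₀‖ := norm_add_le _ _
        _ ≤ Real.exp (a+1) * (2*(K0 c γ)/a) + Real.exp (1-a)*(K1 c γ*a^2) := by
            apply add_le_add
            · rw [norm_mul, hexp]
              apply mul_le_mul (Real.exp_le_exp.2 (by linarith)) hPz₀ (norm_nonneg _)
                (Real.exp_pos _).le
            · rw [norm_mul, hexp, Complex.neg_re]
              apply mul_le_mul (Real.exp_le_exp.2 (by linarith)) hQz₀ (norm_nonneg _)
                (Real.exp_pos _).le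
    have hEc : 0 < Real.exp (a-1) * c := mul_pos (Real.exp_pos _) hc
    have key : 7*(Real.exp (a-1)*(c/24)) < Real.exp (a-1)*(c/2) := by nlinarith [hEc]
    rw [hε]
    linarith [hup, h5, h6, key]
  obtain ⟨τ, hτb, hτ0⟩ := exists_zero_of_min_mod (Ff c γ) (F_diff c γ) z₀ r ε hrpos hs hsmall
  rw [mem_closedBall, dist_eq_norm] at hτb
  have hτA : ‖τ - (a:ℂ)‖ ≤ 2/(c*a) := by
    calc ‖τ - (a:ℂ)‖ = ‖(τ - z₀) + δ‖ := by rw [hz₀]; ring_nf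
      _ ≤ ‖τ - z₀‖ + ‖δ‖ := norm_add_le _ _
      _ ≤ r + ‖δ‖ := by linarith [hτb]
      _ ≤ 2/(c*a) := by linarith [hδr]
  refine ⟨τ, hτ0, hτA, ?_⟩
  have hcne : ((c:ℝ):ℂ) ≠ 0 := Complex.ofReal_ne_zero.2 hc'
  have hune' : (1 : ℂ) + Complex.I*((c:ℝ):ℂ)*((a:ℝ):ℂ) ≠ 0 := by rw [← hu]; exact hune
  have hkey : 2*Complex.I*((a:ℝ):ℂ)*u⁻¹ + 2/(((c:ℝ):ℂ)*u) = 2/((c:ℝ):ℂ) := by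
    rw [hu]
    field_simp
    have hune'' : (1:ℂ) + Complex.I*((a:ℝ):ℂ)*((c:ℝ):ℂ) ≠ 0 := by rw [mul_right_comm]; exact hune'
    rw [add_comm, div_self hune'']
  have hident : Complex.I*τ^2 - (((-2/c:ℝ):ℂ) + Complex.I*((a:ℂ))^2)
      = 2*Complex.I*(a:ℂ)*(τ - z₀) + Complex.I*(τ - (a:ℂ))^2 + 2/(((c:ℝ):ℂ)*u) := by
    rw [hz₀, hδ]
    push_cast
    linear_combination -hkey
  rw [hident]
  have t1 : ‖2*Complex.I*(a:ℂ)*(τ - z₀)‖ ≤ 2/a := by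
    rw [norm_mul, norm_mul, norm_mul, Complex.norm_I, n2, nA, mul_one]
    calc 2*a*‖τ - z₀‖ ≤ 2*a*r := by gcongr
      _ = 2/a := by rw [hr]; field_simp
  have t2 : ‖Complex.I*(τ - (a:ℂ))^2‖ ≤ 4/(c^2*a) := by
    rw [norm_mul, norm_pow, Complex.norm_I, one_mul]
    calc ‖τ - (a:ℂ)‖^2 ≤ (2/(c*a))^2 := by gcongr
      _ = 4/(c^2*a^2) := by field_simp; ring
      _ ≤ 4/(c^2*a) := by
          rw [div_le_div_iff₀ (by positivity) (by positivity)]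
          nlinarith [mul_nonneg (mul_nonneg (sq_nonneg c) ha0.le) (sub_nonneg.2 h1)]
  have t3 : ‖2/(((c:ℝ):ℂ)*u)‖ ≤ 2/(c^2*a) := by
    rw [norm_div, norm_mul, n2]
    have hnc : ‖((c:ℝ):ℂ)‖ = c := by
      simp [Complex.norm_real, Real.norm_eq_abs, abs_of_pos hc]
    rw [hnc]
    rw [div_le_div_iff₀ (by positivity) (by positivity)]
    calc 2*(c^2*a) = (c*(c*a))*2 := by ring
      _ ≤ (c*‖u‖)*2 := by gcongr
      _ = 2*(c*‖u‖) := by ring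
  calc ‖2*Complex.I*(a:ℂ)*(τ - z₀) + Complex.I*(τ - (a:ℂ))^2 + 2/(((c:ℝ):ℂ)*u)‖
      ≤ ‖2*Complex.I*(a:ℂ)*(τ - z₀) + Complex.I*(τ - (a:ℂ))^2‖ + ‖2/(((c:ℝ):ℂ)*u)‖ :=
        norm_add_le _ _
    _ ≤ (‖2*Complex.I*(a:ℂ)*(τ - z₀)‖ + ‖Complex.I*(τ - (a:ℂ))^2‖) + ‖2/(((c:ℝ):ℂ)*u)‖ := by
        gcongr; exact norm_add_le _ _
    _ ≤ (2/a + 4/(c^2*a)) + 2/(c^2*a) := by gcongr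
    _ = (2 + 6/c^2)/a := by field_simp; ring


end Stmt2Aux

open Stmt2Aux

/-- asymptotics of the roots of the characteristic equation
`(i c τ² + γ)(cosh τ sin τ − sinh τ cos τ) + 2 τ sin τ sinh τ = 0`:
for large `n` there is a root `τ_n` with `τ_n = (n+1/4)π + O(1/n)` and
`i τ_n² = −2/c + i((n+1/4)π)² + O(1/n)`. -/
theorem stmt_2 (c γ : ℝ) (hc : 0 < c) (hγ : 0 < γ) :
    ∃ C : ℝ, 0 < C ∧ ∃ N : ℕ, 1 ≤ N ∧ ∀ n : ℕ, N ≤ n → ∃ τ : ℂ,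
      (Complex.I * (c : ℂ) * τ ^ 2 + (γ : ℂ))
          * (Complex.cosh τ * Complex.sin τ - Complex.sinh τ * Complex.cos τ)
        + 2 * τ * Complex.sin τ * Complex.sinh τ = 0 ∧
      ‖τ - (((n : ℝ) + 1 / 4) * Real.pi : ℝ)‖ ≤ C / n ∧
      ‖Complex.I * τ ^ 2
        - ((-2 / c : ℝ) + Complex.I * ((((n : ℝ) + 1 / 4) * Real.pi : ℝ)) ^ 2)‖ ≤ C / n := by
  have hK0pos : 0 < K0 c γ := by unfold K0; positivity
  have hK1pos : 0 < K1 c γ := by unfold K1; positivity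
  have e1 : ∀ᶠ x : ℝ in atTop, (1:ℝ) ≤ x := eventually_ge_atTop 1
  have e2 : ∀ᶠ x : ℝ in atTop, c ≤ x := eventually_ge_atTop c
  have e3 : ∀ᶠ x : ℝ in atTop, 2 ≤ c*x := by
    filter_upwards [eventually_ge_atTop (2/c)] with x hx
    rw [div_le_iff₀ hc] at hx; nlinarith
  have e4 : ∀ᶠ x : ℝ in atTop, K0 c γ / x ≤ c/2 := by
    filter_upwards [eventually_ge_atTop (max 1 (2*K0 c γ/c))] with x hx
    have hx1 : (1:ℝ) ≤ x := le_trans (le_max_left _ _) hx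
    have hx2 : 2*K0 c γ/c ≤ x := le_trans (le_max_right _ _) hx
    rw [div_le_iff₀ hc] at hx2
    rw [div_le_div_iff₀ (by linarith) (by norm_num)]
    nlinarith
  have e5 : ∀ᶠ x : ℝ in atTop, Real.exp (x+1) * (2*(K0 c γ)/x) ≤ Real.exp (x-1) * (c/24) := by
    filter_upwards [eventually_ge_atTop (max 1 (48*Real.exp 2*K0 c γ/c))] with x hx
    have hx1 : (1:ℝ) ≤ x := le_trans (le_max_left _ _) hx
    have hx0 : (0:ℝ) < x := lt_of_lt_of_le one_pos hx1
    have hx2 : 48*Real.exp 2*K0 c γ/c ≤ x := le_trans (le_max_right _ _) hx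
    rw [div_le_iff₀ hc] at hx2
    have hxe : Real.exp (x+1) = Real.exp (x-1) * Real.exp 2 := by
      rw [← Real.exp_add]; ring_nf
    have hgoal : Real.exp 2 * (2*K0 c γ/x) ≤ c/24 := by
      rw [show Real.exp 2 * (2*K0 c γ/x) = (2*Real.exp 2*K0 c γ)/x by ring,
        div_le_iff₀ hx0]
      nlinarith
    calc Real.exp (x+1) * (2*(K0 c γ)/x)
        = Real.exp (x-1) * (Real.exp 2 * (2*K0 c γ/x)) := by rw [hxe]; ring
      _ ≤ Real.exp (x-1) * (c/24) := by
          apply mul_le_mul_of_nonneg_left hgoal (Real.exp_pos _).le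
  have e6 : ∀ᶠ x : ℝ in atTop, Real.exp (1-x) * ((K1 c γ)*x^2) ≤ Real.exp (x-1) * (c/24) := by
    have ht : Tendsto (fun x : ℝ => x^2 * Real.exp (-x)) atTop (nhds 0) :=
      Real.tendsto_pow_mul_exp_neg_atTop_nhds_zero 2
    have hlt : ∀ᶠ x : ℝ in atTop, x^2*Real.exp (-x) < c/(24*K1 c γ) :=
      ht.eventually_lt_const (by positivity)
    filter_upwards [hlt, eventually_ge_atTop (2:ℝ)] with x hx hx2
    have hepos := Real.exp_pos x
    have hx' := mul_lt_mul_of_pos_left hx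
      (show (0:ℝ) < 24*K1 c γ*Real.exp x by positivity)
    rw [Real.exp_neg] at hx'
    have hxx : 24*K1 c γ*Real.exp x*(x^2*(Real.exp x)⁻¹) = 24*(K1 c γ*x^2) := by
      field_simp
    have hr2 : 24*K1 c γ*Real.exp x*(c/(24*K1 c γ)) = c*Real.exp x := by
      field_simp
    rw [hxx, hr2] at hx'
    -- hx' : 24*(K1 x²) < c * exp x
    have step1 : Real.exp (1-x)*(K1 c γ*x^2) ≤ Real.exp (1-x)*((c/24)*Real.exp x) := by
      apply mul_le_mul_of_nonneg_left _ (Real.exp_pos _).le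
      linarith
    have hxe : Real.exp (1-x)*((c/24)*Real.exp x) = (c/24)*Real.exp 1 := by
      calc Real.exp (1-x)*((c/24)*Real.exp x) = (c/24)*(Real.exp (1-x)*Real.exp x) := by ring
        _ = (c/24)*Real.exp 1 := by rw [← Real.exp_add]; ring_nf
    have step2 : (c/24)*Real.exp 1 ≤ Real.exp (x-1)*(c/24) := by
      have hee : Real.exp 1 ≤ Real.exp (x-1) := Real.exp_le_exp.2 (by linarith)
      nlinarith [hc.le]
    linarith [step1, hxe.le, step2]
  have hA : Tendsto (fun n : ℕ => ((n:ℝ) + 1/4) * Real.pi) atTop atTop := by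
    apply Tendsto.atTop_mul_const Real.pi_pos
    exact tendsto_atTop_add_const_right _ _ tendsto_natCast_atTop_atTop
  have hev := hA.eventually (e1.and (e2.and (e3.and (e4.and (e5.and e6)))))
  obtain ⟨N0, hN0⟩ := eventually_atTop.1 hev
  refine ⟨2 + 2/c + 6/c^2, by positivity, max N0 1, le_max_right _ _, ?_⟩
  intro n hn
  obtain ⟨p1, p2, p3, p4, p5, p6⟩ := hN0 n (le_trans (le_max_left _ _) hn)
  have hn1 : 1 ≤ n := le_trans (le_max_right _ _) hn
  have hnpos : (0:ℝ) < (n:ℝ) := by exact_mod_cast Nat.lt_of_lt_of_le Nat.zero_lt_one hn1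
  set a : ℝ := ((n:ℝ) + 1/4) * Real.pi with ha
  have hna : (n:ℝ) ≤ a := by
    rw [ha]
    nlinarith [Real.pi_gt_three, (Nat.cast_nonneg n : (0:ℝ) ≤ (n:ℝ))]
  have hasplit : a = Real.pi/4 + (n:ℝ)*Real.pi := by rw [ha]; ring
  have hsin : Real.sin a = (-1)^n * (Real.sqrt 2/2) := by
    rw [hasplit, Real.sin_add_nat_mul_pi, Real.sin_pi_div_four]
  have hcos : Real.cos a = (-1)^n * (Real.sqrt 2/2) := by
    rw [hasplit, Real.cos_add_nat_mul_pi, Real.cos_pi_div_four]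
  have hσabs : |(-1:ℝ)^n * (Real.sqrt 2/2)| = Real.sqrt 2/2 := by
    rw [abs_mul, _root_.abs_pow, abs_neg, abs_one, one_pow, one_mul,
      _root_.abs_of_nonneg (by positivity : (0:ℝ) ≤ Real.sqrt 2/2)]
  obtain ⟨τ, hτ0, hτ1, hτ2⟩ := main_a c γ hc hγ a _ p1 p2 p3 p4 p5 p6 hsin hcos hσabs
  have hc6 : (0:ℝ) < 6/c^2 := by positivity
  have hc2 : (0:ℝ) < 2/c := by positivity
  have hbound1 : 2/(c*a) ≤ (2 + 2/c + 6/c^2)/(n:ℝ) := by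
    have s1 : 2/(c*a) ≤ 2/(c*(n:ℝ)) := by
      gcongr
    have s2 : 2/(c*(n:ℝ)) = (2/c)/(n:ℝ) := by
      rw [div_div]
    have s3 : (2/c)/(n:ℝ) ≤ (2 + 2/c + 6/c^2)/(n:ℝ) := by
      gcongr
      linarith
    linarith [s1, s2.le, s3]
  have hbound2 : (2 + 6/c^2)/a ≤ (2 + 2/c + 6/c^2)/(n:ℝ) := by
    have s1 : (2 + 6/c^2)/a ≤ (2 + 6/c^2)/(n:ℝ) := by
      gcongr
    have s3 : (2 + 6/c^2)/(n:ℝ) ≤ (2 + 2/c + 6/c^2)/(n:ℝ) := by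
      gcongr
      linarith
    linarith
  refine ⟨τ, hτ0, ?_, ?_⟩
  · exact le_trans hτ1 hbound1
  · exact le_trans hτ2 hbound2
end

section
/- Let c > 0 and γ > 0 be real numbers and let λ ∈ ℂ. Suppose f : ℝ → ℂ is four times continuously differentiable on [0,1], is not identically zero on [0,1], and satisfies f⁗(x) + λ²·f(x) = 0 for all x ∈ [0,1], with boundary conditions f(0) = 0, f(1) = 0, f''(1) = 0, and f''(0) = (c·λ + γ)·f'(0). Then Re λ < 0. -/
open Complex Set intervalIntegral

lemma ftc01 {g g' : ℝ → ℂ} (hg : ∀ x ∈ Icc (0:ℝ) 1, HasDerivWithinAt g (g' x) (Icc 0 1) x)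
    (hg' : ContinuousOn g' (Icc 0 1)) :
    ∫ x in (0:ℝ)..1, g' x = g 1 - g 0 := by
  apply intervalIntegral.integral_eq_sub_of_hasDeriv_right_of_le zero_le_one
    (fun x hx => (hg x hx).continuousWithinAt)
    (fun x hx => ((hg x (Ioo_subset_Icc_self hx)).hasDerivAt
      (Icc_mem_nhds hx.1 hx.2)).hasDerivWithinAt)
  exact (by rw [uIcc_of_le zero_le_one]; exact hg' :
    ContinuousOn g' (uIcc 0 1)).intervalIntegrable

lemma intInt {E : Type*} [NormedAddCommGroup E] {g : ℝ → E} (hg : ContinuousOn g (Icc (0:ℝ) 1)) :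
    IntervalIntegrable g MeasureTheory.volume 0 1 :=
  (by rw [uIcc_of_le zero_le_one]; exact hg :
    ContinuousOn g (uIcc 0 1)).intervalIntegrable

lemma ibp01 {u v u' v' : ℝ → ℂ}
    (hu : ∀ x ∈ Icc (0:ℝ) 1, HasDerivWithinAt u (u' x) (Icc 0 1) x)
    (hv : ∀ x ∈ Icc (0:ℝ) 1, HasDerivWithinAt v (v' x) (Icc 0 1) x)
    (hcu' : ContinuousOn u' (Icc (0:ℝ) 1)) (hcv' : ContinuousOn v' (Icc (0:ℝ) 1)) :
    ∫ x in (0:ℝ)..1, u x * v' x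
      = u 1 * v 1 - u 0 * v 0 - ∫ x in (0:ℝ)..1, u' x * v x := by
  have hcu : ContinuousOn u (Icc (0:ℝ) 1) := fun x hx => (hu x hx).continuousWithinAt
  have hcv : ContinuousOn v (Icc (0:ℝ) 1) := fun x hx => (hv x hx).continuousWithinAt
  have h1 : ∫ x in (0:ℝ)..1, (u' x * v x + u x * v' x) = u 1 * v 1 - u 0 * v 0 :=
    ftc01 (fun x hx => (hu x hx).mul (hv x hx)) ((hcu'.mul hcv).add (hcu.mul hcv'))
  rw [intervalIntegral.integral_add (intInt (g := fun x => u' x * v x) (hcu'.mul hcv))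
    (intInt (g := fun x => u x * v' x) (hcu.mul hcv'))] at h1
  linear_combination h1

lemma hUD : UniqueDiffOn ℝ (Icc (0:ℝ) 1) := uniqueDiffOn_Icc zero_lt_one

lemma hasDeriv_iter {f : ℝ → ℂ} (hf : ContDiffOn ℝ 4 f (Icc 0 1)) {i : ℕ} (hi : i < 4) :
    ∀ x ∈ Icc (0:ℝ) 1, HasDerivWithinAt (iteratedDerivWithin i f (Icc 0 1))
      (iteratedDerivWithin (i+1) f (Icc 0 1) x) (Icc 0 1) x := by
  intro x hx
  have hdiff := hf.differentiableOn_iteratedDerivWithin (by exact_mod_cast hi) hUD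
  rw [iteratedDerivWithin_succ]
  exact (hdiff x hx).hasDerivWithinAt

lemma cont_iter {f : ℝ → ℂ} (hf : ContDiffOn ℝ 4 f (Icc 0 1)) {i : ℕ} (hi : i ≤ 4) :
    ContinuousOn (iteratedDerivWithin i f (Icc 0 1)) (Icc (0:ℝ) 1) :=
  hf.continuousOn_iteratedDerivWithin (by exact_mod_cast hi) hUD

lemma conj_deriv {g : ℝ → ℂ} {g' : ℂ} {s : Set ℝ} {x : ℝ} (h : HasDerivWithinAt g g' s x) :
    HasDerivWithinAt (fun t => (starRingEnd ℂ) (g t)) ((starRingEnd ℂ) g') s x := h.star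

lemma zero_of_integral_normSq {h : ℝ → ℂ} (hc : ContinuousOn h (Icc (0:ℝ) 1))
    (hz : ∫ x in (0:ℝ)..1, Complex.normSq (h x) = 0) : ∀ x ∈ Icc (0:ℝ) 1, h x = 0 := by
  by_contra hcon
  push_neg at hcon
  obtain ⟨x₀, hx₀, hne⟩ := hcon
  have hpos : 0 < ∫ x in (0:ℝ)..1, Complex.normSq (h x) :=
    intervalIntegral.integral_pos zero_lt_one
      (Complex.continuous_normSq.comp_continuousOn hc)
      (fun x _ => normSq_nonneg _) ⟨x₀, hx₀, normSq_pos.mpr hne⟩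
  linarith

lemma toIci {E : Type*} [NormedAddCommGroup E] [NormedSpace ℝ E] {g : ℝ → E} {g' : E} {x : ℝ}
    (hx : x ∈ Ico (0:ℝ) 1) (h : HasDerivWithinAt g g' (Icc 0 1) x) :
    HasDerivWithinAt g g' (Ici x) x := by
  apply h.mono_of_mem_nhdsWithin
  rw [← nhdsWithin_Icc_eq_nhdsGE hx.2]
  exact Filter.mem_of_superset self_mem_nhdsWithin (Icc_subset_Icc_left hx.1)

lemma imaginary_case {f : ℝ → ℂ} {ω : ℝ} (hω : 0 < ω)
    (hf : ContDiffOn ℝ 4 f (Icc 0 1))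
    (hode : ∀ x ∈ Icc (0:ℝ) 1,
      iteratedDerivWithin 4 f (Icc 0 1) x = ((ω^2 : ℝ) : ℂ) * f x)
    (h0 : f 0 = 0) (h1 : f 1 = 0)
    (h10 : iteratedDerivWithin 1 f (Icc 0 1) 0 = 0)
    (h20 : iteratedDerivWithin 2 f (Icc 0 1) 0 = 0)
    (h21 : iteratedDerivWithin 2 f (Icc 0 1) 1 = 0) :
    ∀ x ∈ Icc (0:ℝ) 1, f x = 0 := by
  set f1 := iteratedDerivWithin 1 f (Icc (0:ℝ) 1) with hf1
  set f2 := iteratedDerivWithin 2 f (Icc (0:ℝ) 1) with hf2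
  set f3 := iteratedDerivWithin 3 f (Icc (0:ℝ) 1) with hf3
  set f4 := iteratedDerivWithin 4 f (Icc (0:ℝ) 1) with hf4
  have hIter0 : iteratedDerivWithin 0 f (Icc (0:ℝ) 1) = f := by
    funext x; simp [iteratedDerivWithin_zero]
  have hD0 : ∀ x ∈ Icc (0:ℝ) 1, HasDerivWithinAt f (f1 x) (Icc 0 1) x := by
    intro x hx; have := hasDeriv_iter hf (by norm_num : 0 < 4) x hx
    rwa [hIter0] at this
  have hD1 : ∀ x ∈ Icc (0:ℝ) 1, HasDerivWithinAt f1 (f2 x) (Icc 0 1) x :=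
    hasDeriv_iter hf (by norm_num)
  have hD2 : ∀ x ∈ Icc (0:ℝ) 1, HasDerivWithinAt f2 (f3 x) (Icc 0 1) x :=
    hasDeriv_iter hf (by norm_num)
  have hD3 : ∀ x ∈ Icc (0:ℝ) 1, HasDerivWithinAt f3 (f4 x) (Icc 0 1) x :=
    hasDeriv_iter hf (by norm_num)
  -- g = f'' + ω f
  set g : ℝ → ℂ := fun x => f2 x + (ω:ℂ) * f x with hg
  set g1 : ℝ → ℂ := fun x => f3 x + (ω:ℂ) * f1 x with hg1
  have hDg : ∀ x ∈ Icc (0:ℝ) 1, HasDerivWithinAt g (g1 x) (Icc 0 1) x :=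
    fun x hx => (hD2 x hx).add ((hD0 x hx).const_mul _)
  have hDg1 : ∀ x ∈ Icc (0:ℝ) 1, HasDerivWithinAt g1 ((ω:ℂ) * g x) (Icc 0 1) x := by
    intro x hx
    have := (hD3 x hx).add ((hD1 x hx).const_mul (ω:ℂ))
    refine this.congr_deriv ?_
    rw [hode x hx]; push_cast; ring
  have hg0 : g 0 = 0 := by simp [hg, h20, h0]
  have hg1' : g 1 = 0 := by simp [hg, h21, h1]
  have hcg : ContinuousOn g (Icc (0:ℝ) 1) := fun x hx => (hDg x hx).continuousWithinAt
  have hcg1 : ContinuousOn g1 (Icc (0:ℝ) 1) := fun x hx => (hDg1 x hx).continuousWithinAt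
  -- FTC on g1 * conj g
  have key : ∫ x in (0:ℝ)..1, ((ω:ℂ) * g x * (starRingEnd ℂ) (g x)
      + g1 x * (starRingEnd ℂ) (g1 x)) = 0 := by
    have := ftc01 (g := fun x => g1 x * (starRingEnd ℂ) (g x))
      (g' := fun x => (ω:ℂ) * g x * (starRingEnd ℂ) (g x) + g1 x * (starRingEnd ℂ) (g1 x))
      (fun x hx => (hDg1 x hx).mul (conj_deriv (hDg x hx)))
      (((continuous_const.continuousOn.mul hcg).mul
        (Complex.continuous_conj.comp_continuousOn hcg)).add
        (hcg1.mul (Complex.continuous_conj.comp_continuousOn hcg1)))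
    rw [this]
    rw [hg0, hg1']
    simp
  have key2 : (∫ x in (0:ℝ)..1, (ω * Complex.normSq (g x) + Complex.normSq (g1 x))) = 0 := by
    have hcongr : ∀ x ∈ uIcc (0:ℝ) 1,
        ((ω:ℂ) * g x * (starRingEnd ℂ) (g x) + g1 x * (starRingEnd ℂ) (g1 x))
        = (((ω * Complex.normSq (g x) + Complex.normSq (g1 x) : ℝ)) : ℂ) := by
      intro x _
      rw [mul_assoc, Complex.mul_conj, Complex.mul_conj]; push_cast; ring
    rw [intervalIntegral.integral_congr hcongr, intervalIntegral.integral_ofReal] at key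
    exact_mod_cast key
  have hIg : (∫ x in (0:ℝ)..1, Complex.normSq (g x)) = 0 := by
    have hsplit : (∫ x in (0:ℝ)..1, (ω * Complex.normSq (g x) + Complex.normSq (g1 x)))
        = ω * (∫ x in (0:ℝ)..1, Complex.normSq (g x))
          + ∫ x in (0:ℝ)..1, Complex.normSq (g1 x) := by
      rw [intervalIntegral.integral_add, intervalIntegral.integral_const_mul]
      · exact ((intInt (Complex.continuous_normSq.comp_continuousOn hcg)).const_mul ω)
      · exact intInt (Complex.continuous_normSq.comp_continuousOn hcg1)
    have hg_nn : 0 ≤ ∫ x in (0:ℝ)..1, Complex.normSq (g x) :=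
      intervalIntegral.integral_nonneg zero_le_one (fun u _ => normSq_nonneg _)
    have hg1_nn : 0 ≤ ∫ x in (0:ℝ)..1, Complex.normSq (g1 x) :=
      intervalIntegral.integral_nonneg zero_le_one (fun u _ => normSq_nonneg _)
    nlinarith [key2, hsplit]
  have hgz : ∀ x ∈ Icc (0:ℝ) 1, g x = 0 := zero_of_integral_normSq hcg hIg
  have h2x : ∀ x ∈ Icc (0:ℝ) 1, f2 x = -(ω:ℂ) * f x := by
    intro x hx
    have := hgz x hx
    simp only [hg] at this
    linear_combination this
  -- the Lyapunov function
  set φ : ℝ → ℝ := fun x => (f1 x).re * (f1 x).re + (f1 x).im * (f1 x).im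
      + ω * ((f x).re * (f x).re + (f x).im * (f x).im) with hφdef
  have hDφ : ∀ x ∈ Icc (0:ℝ) 1, HasDerivWithinAt φ 0 (Icc 0 1) x := by
    intro x hx
    have hr0 : HasDerivWithinAt (fun t => (f t).re) ((f1 x).re) (Icc 0 1) x :=
      Complex.reCLM.hasFDerivAt.comp_hasDerivWithinAt x (hD0 x hx)
    have hi0 : HasDerivWithinAt (fun t => (f t).im) ((f1 x).im) (Icc 0 1) x :=
      Complex.imCLM.hasFDerivAt.comp_hasDerivWithinAt x (hD0 x hx)
    have hr1 : HasDerivWithinAt (fun t => (f1 t).re) ((f2 x).re) (Icc 0 1) x :=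
      Complex.reCLM.hasFDerivAt.comp_hasDerivWithinAt x (hD1 x hx)
    have hi1 : HasDerivWithinAt (fun t => (f1 t).im) ((f2 x).im) (Icc 0 1) x :=
      Complex.imCLM.hasFDerivAt.comp_hasDerivWithinAt x (hD1 x hx)
    have e := ((hr1.mul hr1).add (hi1.mul hi1)).add
      (((hr0.mul hr0).add (hi0.mul hi0)).const_mul ω)
    refine e.congr_deriv ?_
    have h2 := h2x x hx
    have hre2 : (f2 x).re = -ω * (f x).re := by rw [h2]; simp
    have him2 : (f2 x).im = -ω * (f x).im := by rw [h2]; simp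
    rw [hre2, him2]; ring
  have hcf : ContinuousOn f (Icc (0:ℝ) 1) := fun x hx => (hD0 x hx).continuousWithinAt
  have hcf1 : ContinuousOn f1 (Icc (0:ℝ) 1) := fun x hx => (hD1 x hx).continuousWithinAt
  have hcφ : ContinuousOn φ (Icc (0:ℝ) 1) := by
    apply ContinuousOn.add
    · exact ((Complex.continuous_re.comp_continuousOn hcf1).mul
        (Complex.continuous_re.comp_continuousOn hcf1)).add
        ((Complex.continuous_im.comp_continuousOn hcf1).mul
        (Complex.continuous_im.comp_continuousOn hcf1))
    · exact continuous_const.continuousOn.mul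
        (((Complex.continuous_re.comp_continuousOn hcf).mul
        (Complex.continuous_re.comp_continuousOn hcf)).add
        ((Complex.continuous_im.comp_continuousOn hcf).mul
        (Complex.continuous_im.comp_continuousOn hcf)))
  have hconst : ∀ x ∈ Icc (0:ℝ) 1, φ x = φ 0 :=
    constant_of_has_deriv_right_zero hcφ
      (fun x hx => toIci hx (hDφ x (Ico_subset_Icc_self hx)))
  have hφ0 : φ 0 = 0 := by simp [hφdef, h0, h10]
  intro x hx
  have hx0 : φ x = 0 := by rw [hconst x hx, hφ0]
  simp only [hφdef] at hx0
  have hrr : (f x).re * (f x).re + (f x).im * (f x).im = 0 := by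
    nlinarith [mul_self_nonneg (f1 x).re, mul_self_nonneg (f1 x).im,
      mul_self_nonneg (f x).re, mul_self_nonneg (f x).im]
  exact normSq_eq_zero.mp (by rw [Complex.normSq_apply]; exact hrr)

/-- Every eigenvalue `λ` of the boundary value problem
`f⁗ + λ² f = 0`, `f(0)=f(1)=f''(1)=0`, `f''(0) = (c λ + γ) f'(0)` (having a
nontrivial solution `f`) satisfies `Re λ < 0`. -/
theorem stmt_3 (c γ : ℝ) (hc : 0 < c) (hγ : 0 < γ) (lam : ℂ)
    (f : ℝ → ℂ)
    (hf : ContDiffOn ℝ 4 f (Set.Icc 0 1))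
    (hfne : ∃ x ∈ Set.Icc (0 : ℝ) 1, f x ≠ 0)
    (hode : ∀ x ∈ Set.Icc (0 : ℝ) 1,
      iteratedDerivWithin 4 f (Set.Icc 0 1) x + lam ^ 2 * f x = 0)
    (hbc0 : f 0 = 0) (hbc1 : f 1 = 0)
    (hbc2 : iteratedDerivWithin 2 f (Set.Icc 0 1) 1 = 0)
    (hbc3 : iteratedDerivWithin 2 f (Set.Icc 0 1) 0
      = ((c : ℂ) * lam + (γ : ℂ)) * iteratedDerivWithin 1 f (Set.Icc 0 1) 0) :
    lam.re < 0 := by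
  set f1 := iteratedDerivWithin 1 f (Icc (0:ℝ) 1) with hdf1
  set f2 := iteratedDerivWithin 2 f (Icc (0:ℝ) 1) with hdf2
  set f3 := iteratedDerivWithin 3 f (Icc (0:ℝ) 1) with hdf3
  set f4 := iteratedDerivWithin 4 f (Icc (0:ℝ) 1) with hdf4
  have hIter0 : iteratedDerivWithin 0 f (Icc (0:ℝ) 1) = f := by
    funext x; simp [iteratedDerivWithin_zero]
  have hD0 : ∀ x ∈ Icc (0:ℝ) 1, HasDerivWithinAt f (f1 x) (Icc 0 1) x := by
    intro x hx; have := hasDeriv_iter hf (by norm_num : 0 < 4) x hx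
    rwa [hIter0] at this
  have hD1 : ∀ x ∈ Icc (0:ℝ) 1, HasDerivWithinAt f1 (f2 x) (Icc 0 1) x :=
    hasDeriv_iter hf (by norm_num)
  have hD2 : ∀ x ∈ Icc (0:ℝ) 1, HasDerivWithinAt f2 (f3 x) (Icc 0 1) x :=
    hasDeriv_iter hf (by norm_num)
  have hD3 : ∀ x ∈ Icc (0:ℝ) 1, HasDerivWithinAt f3 (f4 x) (Icc 0 1) x :=
    hasDeriv_iter hf (by norm_num)
  have hcf : ContinuousOn f (Icc (0:ℝ) 1) := fun x hx => (hD0 x hx).continuousWithinAt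
  have hcf1 : ContinuousOn f1 (Icc (0:ℝ) 1) := fun x hx => (hD1 x hx).continuousWithinAt
  have hcf2 : ContinuousOn f2 (Icc (0:ℝ) 1) := fun x hx => (hD2 x hx).continuousWithinAt
  have hcf3 : ContinuousOn f3 (Icc (0:ℝ) 1) := fun x hx => (hD3 x hx).continuousWithinAt
  have hcf4 : ContinuousOn f4 (Icc (0:ℝ) 1) := cont_iter hf le_rfl
  set N : ℝ := ∫ x in (0:ℝ)..1, Complex.normSq (f x) with hdN
  set a : ℝ := Complex.normSq (f1 0) with hda
  set K : ℝ := ∫ x in (0:ℝ)..1, Complex.normSq (f2 x) with hdK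
  obtain ⟨x₀, hx₀, hne₀⟩ := hfne
  have hN : 0 < N :=
    intervalIntegral.integral_pos zero_lt_one
      (Complex.continuous_normSq.comp_continuousOn hcf)
      (fun x _ => normSq_nonneg _) ⟨x₀, hx₀, normSq_pos.mpr hne₀⟩
  have ha_nn : 0 ≤ a := normSq_nonneg _
  have hK_nn : 0 ≤ K :=
    intervalIntegral.integral_nonneg zero_le_one (fun u _ => normSq_nonneg _)
  -- first integration by parts
  have i1 : ∫ x in (0:ℝ)..1, f3 x * (starRingEnd ℂ) (f1 x)
      = - ∫ x in (0:ℝ)..1, f4 x * (starRingEnd ℂ) (f x) := by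
    have := ibp01 (u := f3) (v := fun x => (starRingEnd ℂ) (f x)) (u' := f4)
      (v' := fun x => (starRingEnd ℂ) (f1 x)) hD3
      (fun x hx => conj_deriv (hD0 x hx)) hcf4
      (Complex.continuous_conj.comp_continuousOn hcf1)
    rw [this]
    rw [hbc0, hbc1]
    simp
  -- second integration by parts
  have i2 : ∫ x in (0:ℝ)..1, f2 x * (starRingEnd ℂ) (f2 x)
      = - ((c:ℂ) * lam + (γ:ℂ)) * (a:ℂ)
        - ∫ x in (0:ℝ)..1, f3 x * (starRingEnd ℂ) (f1 x) := by
    have := ibp01 (u := f2) (v := fun x => (starRingEnd ℂ) (f1 x)) (u' := f3)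
      (v' := fun x => (starRingEnd ℂ) (f2 x)) hD2
      (fun x hx => conj_deriv (hD1 x hx)) hcf3
      (Complex.continuous_conj.comp_continuousOn hcf2)
    rw [this]
    rw [hbc2, hbc3, hda, mul_assoc, Complex.mul_conj]
    ring
  have iK : ∫ x in (0:ℝ)..1, f2 x * (starRingEnd ℂ) (f2 x) = (K:ℂ) := by
    have hcongr : ∀ x ∈ uIcc (0:ℝ) 1,
        f2 x * (starRingEnd ℂ) (f2 x) = ((Complex.normSq (f2 x) : ℝ) : ℂ) := by
      intro x _; rw [Complex.mul_conj]
    rw [intervalIntegral.integral_congr hcongr, intervalIntegral.integral_ofReal, hdK]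
  have i4 : ∫ x in (0:ℝ)..1, f4 x * (starRingEnd ℂ) (f x) = -lam^2 * (N:ℂ) := by
    have hcongr : ∀ x ∈ uIcc (0:ℝ) 1,
        f4 x * (starRingEnd ℂ) (f x)
          = -lam^2 * ((Complex.normSq (f x) : ℝ) : ℂ) := by
      intro x hx
      rw [uIcc_of_le zero_le_one] at hx
      have h := hode x hx
      have : f4 x = -lam^2 * f x := by linear_combination h
      rw [this, mul_assoc, Complex.mul_conj]
    rw [intervalIntegral.integral_congr hcongr, intervalIntegral.integral_const_mul,
      intervalIntegral.integral_ofReal, hdN]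
  have hE : lam^2 * (N:ℂ) + ((c:ℂ) * lam + (γ:ℂ)) * (a:ℂ) + (K:ℂ) = 0 := by
    rw [i4] at i1
    rw [i1] at i2
    rw [iK] at i2
    linear_combination i2
  by_contra hcon
  push_neg at hcon
  have hre := congrArg Complex.re hE
  have him := congrArg Complex.im hE
  simp only [Complex.add_re, Complex.add_im, Complex.mul_re, Complex.mul_im,
    Complex.ofReal_re, Complex.ofReal_im, pow_two, Complex.zero_re, Complex.zero_im,
    mul_zero, zero_mul, sub_zero, add_zero, zero_add] at hre him
  set p := lam.re with hdp
  set q := lam.im with hdq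
  by_cases hq : q = 0
  · -- real case: everything nonnegative forces a = K = 0
    rw [hq] at hre
    have hpp : 0 ≤ p * p * N := mul_nonneg (mul_self_nonneg p) hN.le
    have hca : 0 ≤ (c * p + γ) * a :=
      mul_nonneg (by positivity) ha_nn
    have hγa : 0 ≤ γ * a := mul_nonneg hγ.le ha_nn
    have hcpa : 0 ≤ c * p * a := mul_nonneg (mul_nonneg hc.le hcon) ha_nn
    have hK0 : K = 0 := by nlinarith
    have ha0 : a = 0 := by nlinarith
    have hf2z : ∀ x ∈ Icc (0:ℝ) 1, f2 x = 0 :=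
      zero_of_integral_normSq hcf2 hK0
    have hf10 : f1 0 = 0 := normSq_eq_zero.mp ha0
    have hf1z : ∀ x ∈ Icc (0:ℝ) 1, f1 x = 0 := by
      have hcst : ∀ x ∈ Icc (0:ℝ) 1, f1 x = f1 0 :=
        constant_of_has_deriv_right_zero hcf1 (fun x hx => by
          have h := hD1 x (Ico_subset_Icc_self hx)
          rw [hf2z x (Ico_subset_Icc_self hx)] at h
          exact toIci hx h)
      intro x hx; rw [hcst x hx, hf10]
    have hfz : ∀ x ∈ Icc (0:ℝ) 1, f x = 0 := by
      have hcst : ∀ x ∈ Icc (0:ℝ) 1, f x = f 0 :=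
        constant_of_has_deriv_right_zero hcf (fun x hx => by
          have h := hD0 x (Ico_subset_Icc_self hx)
          rw [hf1z x (Ico_subset_Icc_self hx)] at h
          exact toIci hx h)
      intro x hx; rw [hcst x hx, hbc0]
    exact hne₀ (hfz x₀ hx₀)
  · -- purely imaginary case
    have h2 : q * (2 * p * N + c * a) = 0 := by linear_combination him
    have h3 : 2 * p * N + c * a = 0 := (mul_eq_zero.mp h2).resolve_left hq
    have hca' : 0 ≤ c * a := mul_nonneg hc.le ha_nn
    have hp0 : p = 0 := by nlinarith
    have ha0 : a = 0 := by nlinarith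
    have hf10 : f1 0 = 0 := normSq_eq_zero.mp ha0
    have hf20 : f2 0 = 0 := by rw [hbc3, hf10, mul_zero]
    have hlam2 : lam^2 = -((q^2 : ℝ) : ℂ) := by
      apply Complex.ext
      · simp [pow_two, Complex.mul_re, ← hdp, ← hdq, hp0]
      · simp [pow_two, Complex.mul_im, ← hdp, ← hdq, hp0]
    have hode' : ∀ x ∈ Icc (0:ℝ) 1, f4 x = ((|q|^2 : ℝ) : ℂ) * f x := by
      intro x hx
      have h := hode x hx
      rw [hlam2] at h
      rw [_root_.sq_abs q]
      push_cast at h ⊢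
      linear_combination h
    have hfz := imaginary_case (abs_pos.mpr hq) hf hode' hbc0 hbc1 hf10 hf20 hbc2
    exact hne₀ (hfz x₀ hx₀)
end

section
/- Let μ ≥ 0 be a real number. Suppose f : ℝ → ℂ is four times continuously differentiable on [0,1] and satisfies f⁗(x) = μ·f(x) for all x ∈ [0,1], together with the five boundary conditions f(0) = 0, f(1) = 0, f'(0) = 0, f''(0) = 0, and f''(1) = 0. Then f(x) = 0 for all x ∈ [0,1]. -/
open Complex Set

private lemma const_on_Icc {E : Type*} [NormedAddCommGroup E] [NormedSpace ℝ E]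
    (g g' : ℝ → E)
    (hg : ∀ x ∈ Icc (0:ℝ) 1, HasDerivWithinAt g (g' x) (Icc 0 1) x)
    (hg0 : ∀ x ∈ Ico (0:ℝ) 1, g' x = 0) :
    ∀ x ∈ Icc (0:ℝ) 1, g x = g 0 := by
  apply constant_of_has_deriv_right_zero
  · exact fun x hx => (hg x hx).continuousWithinAt
  · intro x hx
    have h := (hg x (Ico_subset_Icc_self hx)).mono_of_mem_nhdsWithin
      (Icc_mem_nhdsGE_of_mem hx)
    rwa [hg0 x hx] at h

private lemma bvp2 (ν : ℝ) (hν : 0 ≤ ν) (w w' : ℝ → ℂ)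
    (hw : ∀ x ∈ Icc (0:ℝ) 1, HasDerivWithinAt w (w' x) (Icc 0 1) x)
    (hw' : ∀ x ∈ Icc (0:ℝ) 1, HasDerivWithinAt w' ((ν:ℂ) * w x) (Icc 0 1) x)
    (h0 : w 0 = 0) (h1 : w 1 = 0) :
    ∀ x ∈ Icc (0:ℝ) 1, w x = 0 := by
  set s : Set ℝ := Icc (0:ℝ) 1 with hs
  set H : ℝ → ℝ := fun x => (w x * (starRingEnd ℂ) (w' x)).re with hHdef
  have hmem0 : (0:ℝ) ∈ s := ⟨le_refl 0, by norm_num⟩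
  have hmem1 : (1:ℝ) ∈ s := ⟨by norm_num, le_refl 1⟩
  have hHd : ∀ x ∈ s, HasDerivWithinAt H
      (Complex.normSq (w' x) + ν * Complex.normSq (w x)) s x := by
    intro x hx
    have hmul : HasDerivWithinAt (fun y => w y * (starRingEnd ℂ) (w' y))
        (w' x * (starRingEnd ℂ) (w' x) + w x * (starRingEnd ℂ) ((ν:ℂ) * w x)) s x :=
      (hw x hx).mul ((hw' x hx).star)
    have h2 := Complex.reCLM.hasFDerivAt.comp_hasDerivWithinAt x hmul
    refine h2.congr_deriv ?_
    simp only [Complex.reCLM_apply, Complex.add_re, Complex.mul_re,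
      Complex.normSq_apply, map_mul, Complex.conj_re, Complex.conj_im,
      Complex.conj_ofReal, Complex.ofReal_re, Complex.ofReal_im,
      Complex.mul_im]
    ring
  have hHc : ContinuousOn H s := fun x hx => (hHd x hx).continuousWithinAt
  have hmono : MonotoneOn H s := by
    apply monotoneOn_of_deriv_nonneg (convex_Icc 0 1) hHc
    · intro x hx
      rw [interior_Icc] at hx
      exact ((hHd x (Ioo_subset_Icc_self hx)).hasDerivAt
        (Icc_mem_nhds hx.1 hx.2)).differentiableAt.differentiableWithinAt
    · intro x hx
      rw [interior_Icc] at hx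
      rw [((hHd x (Ioo_subset_Icc_self hx)).hasDerivAt (Icc_mem_nhds hx.1 hx.2)).deriv]
      have := Complex.normSq_nonneg (w' x)
      have := Complex.normSq_nonneg (w x)
      positivity
  have H0 : H 0 = 0 := by simp [hHdef, h0]
  have H1 : H 1 = 0 := by simp [hHdef, h1]
  have hH0 : ∀ x ∈ s, H x = 0 := by
    intro x hx
    have l1 : H 0 ≤ H x := hmono hmem0 hx hx.1
    have l2 : H x ≤ H 1 := hmono hx hmem1 hx.2
    rw [H0] at l1; rw [H1] at l2; linarith
  have hw'Ioo : ∀ x ∈ Ioo (0:ℝ) 1, w' x = 0 := by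
    intro x hx
    have hd := (hHd x (Ioo_subset_Icc_self hx)).hasDerivAt (Icc_mem_nhds hx.1 hx.2)
    have heq : H =ᶠ[nhds x] (fun _ => (0:ℝ)) :=
      Filter.eventuallyEq_of_mem (Icc_mem_nhds hx.1 hx.2) (fun y hy => hH0 y hy)
    have hd0 : HasDerivAt H 0 x := (hasDerivAt_const x (0:ℝ)).congr_of_eventuallyEq heq
    have hzero : Complex.normSq (w' x) + ν * Complex.normSq (w x) = 0 := hd.unique hd0
    have h1' := Complex.normSq_nonneg (w' x)
    have h2' := Complex.normSq_nonneg (w x)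
    have h3' : 0 ≤ ν * Complex.normSq (w x) := mul_nonneg hν h2'
    have : Complex.normSq (w' x) = 0 := by linarith
    exact Complex.normSq_eq_zero.mp this
  have hw'0 : w' 0 = 0 := by
    have hc : ContinuousWithinAt w' (Ioo (0:ℝ) 1) 0 :=
      ((hw' 0 hmem0).continuousWithinAt).mono Ioo_subset_Icc_self
    have hne : (nhdsWithin (0:ℝ) (Ioo 0 1)).NeBot := by
      apply mem_closure_iff_nhdsWithin_neBot.mp
      rw [closure_Ioo (by norm_num : (0:ℝ) ≠ 1)]
      exact hmem0
    have ht0 : Filter.Tendsto w' (nhdsWithin (0:ℝ) (Ioo 0 1)) (nhds 0) := by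
      apply Filter.Tendsto.congr' _ tendsto_const_nhds
      exact Filter.eventuallyEq_of_mem self_mem_nhdsWithin
        (fun y hy => (hw'Ioo y hy).symm)
    exact tendsto_nhds_unique hc ht0
  have hwconst : ∀ x ∈ s, w x = w 0 := by
    apply const_on_Icc w w' hw
    intro x hx
    rcases eq_or_lt_of_le hx.1 with h | h
    · rw [← h]; exact hw'0
    · exact hw'Ioo x ⟨h, hx.2⟩
  intro x hx
  rw [hwconst x hx, h0]

private lemma ivp2 (ν : ℝ) (hν : 0 ≤ ν) (g g' : ℝ → ℂ)
    (hg : ∀ x ∈ Icc (0:ℝ) 1, HasDerivWithinAt g (g' x) (Icc 0 1) x)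
    (hg' : ∀ x ∈ Icc (0:ℝ) 1, HasDerivWithinAt g' (-(ν:ℂ) * g x) (Icc 0 1) x)
    (h0 : g 0 = 0) (h0' : g' 0 = 0) :
    ∀ x ∈ Icc (0:ℝ) 1, g x = 0 := by
  set s : Set ℝ := Icc (0:ℝ) 1 with hs
  set E : ℝ → ℝ := fun x => (g' x * (starRingEnd ℂ) (g' x)).re
      + ν * (g x * (starRingEnd ℂ) (g x)).re with hEdef
  have hEd : ∀ x ∈ s, HasDerivWithinAt E 0 s x := by
    intro x hx
    have hmul1 : HasDerivWithinAt (fun y => g' y * (starRingEnd ℂ) (g' y))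
        (-(ν:ℂ) * g x * (starRingEnd ℂ) (g' x)
          + g' x * (starRingEnd ℂ) (-(ν:ℂ) * g x)) s x :=
      (hg' x hx).mul ((hg' x hx).star)
    have hmul2 : HasDerivWithinAt (fun y => g y * (starRingEnd ℂ) (g y))
        (g' x * (starRingEnd ℂ) (g x) + g x * (starRingEnd ℂ) (g' x)) s x :=
      (hg x hx).mul ((hg x hx).star)
    have h1 := Complex.reCLM.hasFDerivAt.comp_hasDerivWithinAt x hmul1
    have h2 := Complex.reCLM.hasFDerivAt.comp_hasDerivWithinAt x hmul2
    have h3 := h1.add (h2.const_mul ν)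
    refine h3.congr_deriv ?_
    simp only [Complex.reCLM_apply, Complex.add_re, Complex.mul_re, Complex.mul_im,
      map_mul, map_neg, Complex.conj_re, Complex.conj_im, Complex.conj_ofReal,
      Complex.neg_re, Complex.neg_im, Complex.ofReal_re, Complex.ofReal_im]
    ring
  have hEconst : ∀ x ∈ s, E x = E 0 :=
    const_on_Icc E (fun _ => 0) hEd (fun _ _ => rfl)
  have hE0 : E 0 = 0 := by simp [hEdef, h0, h0']
  have hg'zero : ∀ x ∈ s, g' x = 0 := by
    intro x hx
    have hx0 : E x = 0 := by rw [hEconst x hx, hE0]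
    have hrw : E x = Complex.normSq (g' x) + ν * Complex.normSq (g x) := by
      simp only [hEdef, Complex.normSq_apply, Complex.mul_re, Complex.conj_re, Complex.conj_im]
      ring
    rw [hrw] at hx0
    have h1' := Complex.normSq_nonneg (g' x)
    have h2' := Complex.normSq_nonneg (g x)
    have h3' : 0 ≤ ν * Complex.normSq (g x) := mul_nonneg hν h2'
    have : Complex.normSq (g' x) = 0 := by linarith
    exact Complex.normSq_eq_zero.mp this
  have hgconst : ∀ x ∈ s, g x = g 0 :=
    const_on_Icc g g' hg (fun x hx => hg'zero x (Ico_subset_Icc_self hx))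
  intro x hx
  rw [hgconst x hx, h0]

/-- The overdetermined boundary value problem `f⁗ = μ f` (`μ ≥ 0`) with
`f(0)=f(1)=f'(0)=f''(0)=f''(1)=0` has only the trivial solution on `[0,1]`. -/
theorem stmt_5 (μ : ℝ) (hμ : 0 ≤ μ)
    (f : ℝ → ℂ)
    (hf : ContDiffOn ℝ 4 f (Set.Icc 0 1))
    (hode : ∀ x ∈ Set.Icc (0 : ℝ) 1,
      iteratedDerivWithin 4 f (Set.Icc 0 1) x = (μ : ℂ) * f x)
    (hbc0 : f 0 = 0) (hbc1 : f 1 = 0)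
    (hbc2 : iteratedDerivWithin 1 f (Set.Icc 0 1) 0 = 0)
    (hbc3 : iteratedDerivWithin 2 f (Set.Icc 0 1) 0 = 0)
    (hbc4 : iteratedDerivWithin 2 f (Set.Icc 0 1) 1 = 0) :
    ∀ x ∈ Set.Icc (0 : ℝ) 1, f x = 0 := by
  set s : Set ℝ := Set.Icc (0:ℝ) 1 with hsdef
  have hsu : UniqueDiffOn ℝ s := uniqueDiffOn_Icc (by norm_num)
  set ν : ℝ := Real.sqrt μ with hνdef
  have hν : 0 ≤ ν := Real.sqrt_nonneg μ
  have hν2 : ν * ν = μ := Real.mul_self_sqrt hμ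
  -- derivatives of iterated derivatives
  have hder : ∀ i : ℕ, i < 4 → ∀ x ∈ s, HasDerivWithinAt (iteratedDerivWithin i f s)
      (iteratedDerivWithin (i+1) f s x) s x := by
    intro i hi x hx
    have hdiff : DifferentiableOn ℝ (iteratedDerivWithin i f s) s :=
      hf.differentiableOn_iteratedDerivWithin (by exact_mod_cast hi) hsu
    have := (hdiff x hx).hasDerivWithinAt
    rwa [← iteratedDerivWithin_succ] at this
  have hderf : ∀ x ∈ s, HasDerivWithinAt f (iteratedDerivWithin 1 f s x) s x := by
    intro x hx
    have h := hder 0 (by norm_num) x hx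
    have he : iteratedDerivWithin 0 f s = f := by
      funext y; simp [iteratedDerivWithin_zero]
    rwa [he] at h
  -- the function w = f'' + ν f
  set w : ℝ → ℂ := fun x => iteratedDerivWithin 2 f s x + (ν:ℂ) * f x with hwdef
  set w' : ℝ → ℂ := fun x => iteratedDerivWithin 3 f s x
      + (ν:ℂ) * iteratedDerivWithin 1 f s x with hw'def
  have hw : ∀ x ∈ s, HasDerivWithinAt w (w' x) s x := by
    intro x hx
    exact (hder 2 (by norm_num) x hx).add ((hderf x hx).const_mul (ν:ℂ))
  have hw' : ∀ x ∈ s, HasDerivWithinAt w' ((ν:ℂ) * w x) s x := by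
    intro x hx
    have h3 := hder 3 (by norm_num) x hx
    have h1 := (hder 1 (by norm_num) x hx).const_mul (ν:ℂ)
    have := h3.add h1
    have heq : iteratedDerivWithin 4 f s x + (ν:ℂ) * iteratedDerivWithin 2 f s x
        = (ν:ℂ) * w x := by
      rw [hode x hx, hwdef]
      have : ((μ:ℝ):ℂ) = (ν:ℂ) * (ν:ℂ) := by
        rw [← hν2]; push_cast; ring
      rw [this]; ring
    rwa [heq] at this
  have hw0 : w 0 = 0 := by simp [hwdef, hbc3, hbc0]
  have hw1 : w 1 = 0 := by simp [hwdef, hbc4, hbc1]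
  have hwzero : ∀ x ∈ s, w x = 0 := bvp2 ν hν w w' hw hw' hw0 hw1
  -- now f'' = -ν f, with f 0 = 0, f' 0 = 0
  have hf2 : ∀ x ∈ s, iteratedDerivWithin 2 f s x = -(ν:ℂ) * f x := by
    intro x hx
    have := hwzero x hx
    rw [hwdef] at this
    linear_combination this
  have hg' : ∀ x ∈ s, HasDerivWithinAt (fun y => iteratedDerivWithin 1 f s y)
      (-(ν:ℂ) * f x) s x := by
    intro x hx
    have := hder 1 (by norm_num) x hx
    rwa [hf2 x hx] at this
  exact ivp2 ν hν f (fun y => iteratedDerivWithin 1 f s y) hderf hg' hbc0 hbc2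
end

section
/- There exist a constant C > 0 and an integer N ≥ 1 such that for every integer n ≥ N there exists a real number ω_n satisfying cosh ω_n · sin ω_n − sinh ω_n · cos ω_n = 0 and |ω_n − (n + 1/4)π| ≤ C·e^{−n}. -/
open Real

/-- for large `n` the characteristic equation
`cosh ω sin ω − sinh ω cos ω = 0` has a real root `ω_n` with
`ω_n = (n + 1/4)π + O(e^{-n})`. -/
theorem stmt_6 :
    ∃ C : ℝ, 0 < C ∧ ∃ N : ℕ, 1 ≤ N ∧ ∀ n : ℕ, N ≤ n → ∃ ω : ℝ,
      Real.cosh ω * Real.sin ω - Real.sinh ω * Real.cos ω = 0 ∧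
      |ω - ((n : ℝ) + 1 / 4) * Real.pi| ≤ C * Real.exp (-(n : ℝ)) := by
  refine ⟨1, one_pos, 1, le_refl 1, fun n hn => ?_⟩
  have hn1 : (1 : ℝ) ≤ (n : ℝ) := by exact_mod_cast hn
  set a : ℝ := ((n : ℝ) + 1 / 4) * π with ha
  set δ : ℝ := Real.exp (-(n : ℝ)) with hδ
  have hδpos : 0 < δ := Real.exp_pos _
  have hexp1 : (2 : ℝ) ≤ Real.exp 1 := by
    have := Real.exp_one_gt_d9
    linarith
  have hδle : δ ≤ 1 / 2 := by
    have h1 : δ ≤ Real.exp (-1 : ℝ) := Real.exp_le_exp.2 (by linarith)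
    have h2 : Real.exp (-1 : ℝ) = 1 / Real.exp 1 := by
      rw [Real.exp_neg]; ring
    have h3 : (1 : ℝ) / Real.exp 1 ≤ 1 / 2 := by
      apply div_le_div_of_nonneg_left (by norm_num) (by norm_num) hexp1
    linarith
  have hpi := Real.pi_gt_three
  -- a - δ ≥ n + 1
  have ha_lb : (n : ℝ) + 1 ≤ a - δ := by
    have h1 : (n : ℝ) * 3 ≤ (n : ℝ) * π := by
      apply mul_le_mul_of_nonneg_left (le_of_lt hpi) (by linarith)
    have haval : a = (n : ℝ) * π + π / 4 := by rw [ha]; ring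
    nlinarith
  -- exp(-(a-δ)) ≤ δ/2 and exp(-(a+δ)) ≤ δ/2
  have hE1 : Real.exp (-(a - δ)) ≤ δ / 2 := by
    have h1 : Real.exp (-(a - δ)) ≤ Real.exp (-((n : ℝ) + 1)) := by
      apply Real.exp_le_exp.2; linarith
    have h2 : Real.exp (-((n : ℝ) + 1)) = δ * Real.exp (-1 : ℝ) := by
      rw [hδ, ← Real.exp_add]; ring_nf
    have h3 : Real.exp (-1 : ℝ) ≤ 1 / 2 := by
      rw [Real.exp_neg]
      rw [inv_le_comm₀ (Real.exp_pos 1) (by norm_num)]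
      linarith
    nlinarith
  have hE2 : Real.exp (-(a + δ)) ≤ δ / 2 := by
    refine le_trans (Real.exp_le_exp.2 ?_) hE1; linarith
  -- sin δ > δ / 2
  have hsinδ : δ / 2 < Real.sin δ := by
    have h1 := Real.sin_gt_sub_cube hδpos
    have h2 : δ * δ ≤ 1 / 4 := by nlinarith
    have h3 : δ ^ 3 ≤ δ / 4 := by nlinarith
    linarith
  have hsinδ0 : 0 ≤ Real.sin δ := by linarith
  have hs2 : (1 : ℝ) ≤ Real.sqrt 2 := by
    nlinarith [Real.sq_sqrt (show (0:ℝ) ≤ 2 by norm_num), Real.sqrt_nonneg 2]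
  -- the function
  set F : ℝ → ℝ := fun ω => Real.cosh ω * Real.sin ω - Real.sinh ω * Real.cos ω with hF
  set s : ℝ := (-1 : ℝ) ^ n with hs
  have hs_sq : s * s = 1 := by
    rw [hs, ← pow_add]
    exact (neg_one_pow_eq_one_iff_even (by norm_num)).2 ⟨n, by ring⟩
  set g : ℝ → ℝ := fun ω => s * F ω with hg
  -- endpoint values
  have key : ∀ x : ℝ, g (x + (n : ℝ) * π)
      = Real.cosh (x + (n : ℝ) * π) * Real.sin x - Real.sinh (x + (n : ℝ) * π) * Real.cos x := by
    intro x
    simp only [hg, hF, Real.sin_add_nat_mul_pi, Real.cos_add_nat_mul_pi, ← hs]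
    linear_combination (Real.cosh (x + (n : ℝ) * π) * Real.sin x
      - Real.sinh (x + (n : ℝ) * π) * Real.cos x) * hs_sq
  -- trig expansions at π/4 ± δ
  have hsin_p : Real.sin (π / 4 + δ) = Real.sqrt 2 / 2 * (Real.cos δ + Real.sin δ) := by
    rw [Real.sin_add, Real.sin_pi_div_four, Real.cos_pi_div_four]; ring
  have hcos_p : Real.cos (π / 4 + δ) = Real.sqrt 2 / 2 * (Real.cos δ - Real.sin δ) := by
    rw [Real.cos_add, Real.sin_pi_div_four, Real.cos_pi_div_four]; ring
  have hsin_m : Real.sin (π / 4 - δ) = Real.sqrt 2 / 2 * (Real.cos δ - Real.sin δ) := by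
    rw [Real.sin_sub, Real.sin_pi_div_four, Real.cos_pi_div_four]; ring
  have hcos_m : Real.cos (π / 4 - δ) = Real.sqrt 2 / 2 * (Real.cos δ + Real.sin δ) := by
    rw [Real.cos_sub, Real.sin_pi_div_four, Real.cos_pi_div_four]; ring
  have hcosh_p := Real.one_le_cosh (a + δ)
  have hcosh_m := Real.one_le_cosh (a - δ)
  have hEp := Real.exp_pos (-(a + δ))
  have hEm := Real.exp_pos (-(a - δ))
  have hssin : Real.sin δ ≤ Real.sqrt 2 * Real.sin δ :=
    le_mul_of_one_le_left hsinδ0 hs2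
  -- value at a + δ
  have hval_p : g (a + δ) = Real.cosh (a + δ) * (Real.sqrt 2 * Real.sin δ)
      + Real.exp (-(a + δ)) * Real.cos (π / 4 + δ) := by
    have heq : a + δ = (π / 4 + δ) + (n : ℝ) * π := by rw [ha]; ring
    rw [heq, key]
    have heq2 : π / 4 + δ + (n : ℝ) * π = a + δ := by rw [ha]; ring
    rw [heq2, hsin_p, hcos_p, ← Real.cosh_sub_sinh]
    ring
  have hval_m : g (a - δ) = -(Real.cosh (a - δ) * (Real.sqrt 2 * Real.sin δ))
      + Real.exp (-(a - δ)) * Real.cos (π / 4 - δ) := by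
    have heq : a - δ = (π / 4 - δ) + (n : ℝ) * π := by rw [ha]; ring
    rw [heq, key]
    have heq2 : π / 4 - δ + (n : ℝ) * π = a - δ := by rw [ha]; ring
    rw [heq2, hsin_m, hcos_m, ← Real.cosh_sub_sinh]
    ring
  have hgp : 0 < g (a + δ) := by
    rw [hval_p]
    have t1 : Real.exp (-(a + δ)) * (-1) ≤ Real.exp (-(a + δ)) * Real.cos (π / 4 + δ) :=
      mul_le_mul_of_nonneg_left (Real.neg_one_le_cos _) (le_of_lt hEp)
    have t2 : Real.sqrt 2 * Real.sin δ ≤ Real.cosh (a + δ) * (Real.sqrt 2 * Real.sin δ) :=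
      le_mul_of_one_le_left (by positivity) hcosh_p
    linarith
  have hgm : g (a - δ) < 0 := by
    rw [hval_m]
    have t1 : Real.exp (-(a - δ)) * Real.cos (π / 4 - δ) ≤ Real.exp (-(a - δ)) * 1 :=
      mul_le_mul_of_nonneg_left (Real.cos_le_one _) (le_of_lt hEm)
    have t2 : Real.sqrt 2 * Real.sin δ ≤ Real.cosh (a - δ) * (Real.sqrt 2 * Real.sin δ) :=
      le_mul_of_one_le_left (by positivity) hcosh_m
    linarith
  -- IVT
  have hcont : ContinuousOn g (Set.Icc (a - δ) (a + δ)) := by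
    apply Continuous.continuousOn
    rw [hg, hF]
    exact continuous_const.mul ((Real.continuous_cosh.mul Real.continuous_sin).sub
      (Real.continuous_sinh.mul Real.continuous_cos))
  have hle : a - δ ≤ a + δ := by linarith
  have hmem : (0 : ℝ) ∈ Set.Icc (g (a - δ)) (g (a + δ)) := ⟨le_of_lt hgm, le_of_lt hgp⟩
  obtain ⟨ω, hωmem, hωeq⟩ := intermediate_value_Icc hle hcont hmem
  refine ⟨ω, ?_, ?_⟩
  · have hF0 : s * F ω = 0 := hωeq
    have hs_ne : s ≠ 0 := by
      intro h; rw [h] at hs_sq; norm_num at hs_sq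
    have hFω : F ω = 0 := by
      rcases mul_eq_zero.1 hF0 with h | h
      · exact absurd h hs_ne
      · exact h
    simpa [hF] using hFω
  · have h1 : a - δ ≤ ω := hωmem.1
    have h2 : ω ≤ a + δ := hωmem.2
    rw [one_mul, abs_le]
    constructor <;> linarith
end

section
/- Let c > 0 and γ > 0 be real numbers, let g : [0,1] → ℂ be continuous, and let η ∈ ℂ and s ∈ ℂ. Define φ : [0,1] → ℂ by φ(x) = (x³/6)·[η + ∫₀¹ g(θ) dθ] − (x²/2)·[η + ∫₀¹ θ·g(θ) dθ] − (x/γ)·[η + s + ∫₀¹ θ·g(θ) dθ] − ∫₀ˣ ((x−θ)³/6)·g(θ) dθ. Then φ is four times continuously differentiable on [0,1], φ⁗(x) = −g(x) for all x ∈ [0,1], and φ(0) = 0, φ''(1) = 0, φ''(0) = s + γ·φ'(0), and φ'''(1) = η. -/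
open Complex Set MeasureTheory intervalIntegral

noncomputable def Pmom (G : ℝ → ℂ) (k : ℕ) (x : ℝ) : ℂ :=
  ∫ θ in (0:ℝ)..x, ((θ:ℂ))^k * G θ

noncomputable def Ph0 (G : ℝ → ℂ) (A B C : ℂ) (x : ℝ) : ℂ :=
  (x:ℂ)^3/6 * A - (x:ℂ)^2/2 * B - (x:ℂ) * C
    - ((x:ℂ)^3/6 * Pmom G 0 x - (x:ℂ)^2/2 * Pmom G 1 x
        + (x:ℂ)/2 * Pmom G 2 x - (1:ℂ)/6 * Pmom G 3 x)

noncomputable def Ph1 (G : ℝ → ℂ) (A B C : ℂ) (x : ℝ) : ℂ :=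
  (x:ℂ)^2/2 * A - (x:ℂ) * B - C
    - ((x:ℂ)^2/2 * Pmom G 0 x - (x:ℂ) * Pmom G 1 x + (1:ℂ)/2 * Pmom G 2 x)

noncomputable def Ph2 (G : ℝ → ℂ) (A B : ℂ) (x : ℝ) : ℂ :=
  (x:ℂ) * A - B - ((x:ℂ) * Pmom G 0 x - Pmom G 1 x)

noncomputable def Ph3 (G : ℝ → ℂ) (A : ℂ) (x : ℝ) : ℂ :=
  A - Pmom G 0 x

lemma pmom_hasDerivAt {G : ℝ → ℂ} (hG : Continuous G) (k : ℕ) (x : ℝ) :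
    HasDerivAt (Pmom G k) ((x:ℂ)^k * G x) x :=
  ((Complex.continuous_ofReal.pow k).mul hG).integral_hasStrictDerivAt 0 x |>.hasDerivAt

lemma hid' (x : ℝ) : HasDerivAt (fun y : ℝ => (y:ℂ)) 1 x := by
  convert Complex.ofRealCLM.hasDerivAt (x := x) using 1
  · rfl
  · rfl
  simp

lemma hmon (n : ℕ) (x : ℝ) :
    HasDerivAt (fun y : ℝ => (y:ℂ)^n) (n * (x:ℂ)^(n-1)) x :=
  (hasDerivAt_pow n ((x:ℝ):ℂ)).comp_ofReal

lemma ph0_hasDerivAt {G : ℝ → ℂ} (hG : Continuous G) (A B C : ℂ) (x : ℝ) :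
    HasDerivAt (Ph0 G A B C) (Ph1 G A B C x) x := by
  have h0 := pmom_hasDerivAt hG 0 x
  have h1 := pmom_hasDerivAt hG 1 x
  have h2 := pmom_hasDerivAt hG 2 x
  have h3 := pmom_hasDerivAt hG 3 x
  have hx := hid' x
  have H := ((((((hmon 3 x).div_const 6).mul_const A).sub
      (((hmon 2 x).div_const 2).mul_const B)).sub (hx.mul_const C)).sub
      (((((((hmon 3 x).div_const 6).mul h0).sub
        (((hmon 2 x).div_const 2).mul h1)).add
        ((hx.div_const 2).mul h2)).sub
        ((hasDerivAt_const x ((1:ℂ)/6)).mul h3))))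
  convert H using 1
  · rfl
  · rfl
  simp [Ph1]
  push_cast
  ring

lemma ph1_hasDerivAt {G : ℝ → ℂ} (hG : Continuous G) (A B C : ℂ) (x : ℝ) :
    HasDerivAt (Ph1 G A B C) (Ph2 G A B x) x := by
  have h0 := pmom_hasDerivAt hG 0 x
  have h1 := pmom_hasDerivAt hG 1 x
  have h2 := pmom_hasDerivAt hG 2 x
  have hx := hid' x
  have H := (((((hmon 2 x).div_const 2).mul_const A).sub (hx.mul_const B)).sub
      (hasDerivAt_const x C)).sub
      (((((hmon 2 x).div_const 2).mul h0).sub (hx.mul h1)).add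
        ((hasDerivAt_const x ((1:ℂ)/2)).mul h2))
  convert H using 1
  · rfl
  · rfl
  simp [Ph2]
  push_cast
  ring

lemma ph2_hasDerivAt {G : ℝ → ℂ} (hG : Continuous G) (A B : ℂ) (x : ℝ) :
    HasDerivAt (Ph2 G A B) (Ph3 G A x) x := by
  have h0 := pmom_hasDerivAt hG 0 x
  have h1 := pmom_hasDerivAt hG 1 x
  have hx := hid' x
  have H := ((hx.mul_const A).sub (hasDerivAt_const x B)).sub ((hx.mul h0).sub h1)
  convert H using 1
  · rfl
  · rfl
  simp [Ph3]

lemma ph3_hasDerivAt {G : ℝ → ℂ} (hG : Continuous G) (A : ℂ) (x : ℝ) :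
    HasDerivAt (Ph3 G A) (-G x) x := by
  have h0 := pmom_hasDerivAt hG 0 x
  have H := (hasDerivAt_const x A).sub h0
  convert H using 1
  · rfl
  · rfl
  simp

lemma iter_step {F F' : ℝ → ℂ} {sdom : Set ℝ} (hs : UniqueDiffOn ℝ sdom) {f : ℝ → ℂ} {n : ℕ}
    (h : ∀ x ∈ sdom, iteratedDerivWithin n f sdom x = F x)
    (hF : ∀ x, HasDerivAt F (F' x) x) :
    ∀ x ∈ sdom, iteratedDerivWithin (n+1) f sdom x = F' x := by
  intro x hx
  rw [iteratedDerivWithin_succ, derivWithin_congr h (h x hx)]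
  exact ((hF x).hasDerivWithinAt).derivWithin (hs x hx)

lemma pmom_zero (G : ℝ → ℂ) (k : ℕ) : Pmom G k 0 = 0 :=
  intervalIntegral.integral_same

lemma expand_kernel {G : ℝ → ℂ} (hG : Continuous G) (x : ℝ) :
    (∫ θ in (0:ℝ)..x, (((x - θ)^3/6 : ℝ) : ℂ) * G θ)
      = (x:ℂ)^3/6 * Pmom G 0 x - (x:ℂ)^2/2 * Pmom G 1 x
        + (x:ℂ)/2 * Pmom G 2 x - (1:ℂ)/6 * Pmom G 3 x := by
  have ik : ∀ k : ℕ, IntervalIntegrable (fun θ : ℝ => ((θ:ℂ))^k * G θ) volume 0 x :=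
    fun k => ((Complex.continuous_ofReal.pow k).mul hG).intervalIntegrable 0 x
  have hfun : (fun θ : ℝ => (((x - θ)^3/6 : ℝ) : ℂ) * G θ)
      = fun θ : ℝ => ((x:ℂ)^3/6 * ((θ:ℂ)^0 * G θ) - (x:ℂ)^2/2 * ((θ:ℂ)^1 * G θ))
          + ((x:ℂ)/2 * ((θ:ℂ)^2 * G θ) - (1:ℂ)/6 * ((θ:ℂ)^3 * G θ)) := by
    funext θ; push_cast; ring
  rw [hfun, intervalIntegral.integral_add (((ik 0).const_mul _).sub ((ik 1).const_mul _))
        (((ik 2).const_mul _).sub ((ik 3).const_mul _)),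
      intervalIntegral.integral_sub ((ik 0).const_mul _) ((ik 1).const_mul _),
      intervalIntegral.integral_sub ((ik 2).const_mul _) ((ik 3).const_mul _),
      intervalIntegral.integral_const_mul, intervalIntegral.integral_const_mul,
      intervalIntegral.integral_const_mul, intervalIntegral.integral_const_mul]
  simp only [Pmom]
  ring


/-- the explicit solution formula inverting the observer-error beam
operator: for continuous `g`, `η, s ∈ ℂ`, the function
`φ(x) = (x³/6)[η + ∫₀¹ g] − (x²/2)[η + ∫₀¹ θ g(θ)dθ] − (x/γ)[η + s + ∫₀¹ θ g(θ)dθ]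
        − ∫₀ˣ((x−θ)³/6)g(θ)dθ`
is `C⁴` on `[0,1]`, satisfies `φ⁗ = −g`, and `φ(0)=0`, `φ''(1)=0`,
`φ''(0) = s + γ φ'(0)`, `φ'''(1) = η`. -/
theorem stmt_8 (c γ : ℝ) (hc : 0 < c) (hγ : 0 < γ)
    (g : ℝ → ℂ) (hg : ContinuousOn g (Set.Icc 0 1)) (η s : ℂ)
    (φ : ℝ → ℂ)
    (hφ : ∀ x : ℝ, φ x =
      ((x ^ 3 / 6 : ℝ) : ℂ) * (η + ∫ θ in (0 : ℝ)..1, g θ)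
        - ((x ^ 2 / 2 : ℝ) : ℂ) * (η + ∫ θ in (0 : ℝ)..1, ((θ : ℝ) : ℂ) * g θ)
        - ((x / γ : ℝ) : ℂ) * (η + s + ∫ θ in (0 : ℝ)..1, ((θ : ℝ) : ℂ) * g θ)
        - ∫ θ in (0 : ℝ)..x, (((x - θ) ^ 3 / 6 : ℝ) : ℂ) * g θ) :
    ContDiffOn ℝ 4 φ (Set.Icc 0 1) ∧
    (∀ x ∈ Set.Icc (0 : ℝ) 1, iteratedDerivWithin 4 φ (Set.Icc 0 1) x = -g x) ∧
    φ 0 = 0 ∧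
    iteratedDerivWithin 2 φ (Set.Icc 0 1) 1 = 0 ∧
    iteratedDerivWithin 2 φ (Set.Icc 0 1) 0
      = s + (γ : ℂ) * iteratedDerivWithin 1 φ (Set.Icc 0 1) 0 ∧
    iteratedDerivWithin 3 φ (Set.Icc 0 1) 1 = η := by

  have hγ0 : (γ:ℂ) ≠ 0 := by exact_mod_cast hγ.ne'
  set G : ℝ → ℂ := fun x => g (max 0 (min 1 x)) with hGdef
  have hGc : Continuous G := by
    apply hg.comp_continuous
    · exact continuous_const.max (continuous_const.min continuous_id)
    · exact fun x => ⟨le_max_left _ _, max_le zero_le_one (min_le_left _ _)⟩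
  have hGeq : ∀ x ∈ Set.Icc (0:ℝ) 1, G x = g x := by
    intro x hx
    simp only [hGdef]
    rw [min_eq_right hx.2, max_eq_right hx.1]
  set A : ℂ := η + Pmom G 0 1 with hA
  set B : ℂ := η + Pmom G 1 1 with hB
  set C : ℂ := (η + s + Pmom G 1 1) / (γ:ℂ) with hC
  have hint0 : (∫ θ in (0:ℝ)..1, g θ) = Pmom G 0 1 := by
    simp only [Pmom]
    apply intervalIntegral.integral_congr
    intro θ hθ
    rw [Set.uIcc_of_le zero_le_one] at hθ
    simp [hGeq θ hθ]
  have hint1 : (∫ θ in (0:ℝ)..1, ((θ:ℝ):ℂ) * g θ) = Pmom G 1 1 := by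
    simp only [Pmom]
    apply intervalIntegral.integral_congr
    intro θ hθ
    rw [Set.uIcc_of_le zero_le_one] at hθ
    simp [hGeq θ hθ]
  have hφΦ : ∀ x ∈ Set.Icc (0:ℝ) 1, φ x = Ph0 G A B C x := by
    intro x hx
    have hV : (∫ θ in (0:ℝ)..x, (((x - θ)^3/6 : ℝ):ℂ) * g θ)
        = ∫ θ in (0:ℝ)..x, (((x - θ)^3/6 : ℝ):ℂ) * G θ := by
      apply intervalIntegral.integral_congr
      intro θ hθ
      rw [Set.uIcc_of_le hx.1] at hθ
      simp only [hGeq θ ⟨hθ.1, hθ.2.trans hx.2⟩]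
    rw [hφ x, hV, expand_kernel hGc x, hint0, hint1]
    simp only [Ph0, hA, hB, hC]
    push_cast
    ring
  have hs : UniqueDiffOn ℝ (Set.Icc (0:ℝ) 1) := uniqueDiffOn_Icc_zero_one
  have e0 : ∀ x ∈ Set.Icc (0:ℝ) 1,
      iteratedDerivWithin 0 φ (Set.Icc 0 1) x = Ph0 G A B C x := by
    intro x hx; rw [iteratedDerivWithin_zero]; exact hφΦ x hx
  have e1 := iter_step hs e0 (ph0_hasDerivAt hGc A B C)
  have e2 := iter_step hs e1 (ph1_hasDerivAt hGc A B C)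
  have e3 := iter_step hs e2 (ph2_hasDerivAt hGc A B)
  have e4 := iter_step hs e3 (ph3_hasDerivAt hGc A)
  have h1mem : (1:ℝ) ∈ Set.Icc (0:ℝ) 1 := ⟨zero_le_one, le_refl 1⟩
  have h0mem : (0:ℝ) ∈ Set.Icc (0:ℝ) 1 := ⟨le_refl 0, zero_le_one⟩
  have hC4 : ContDiff ℝ 4 (Ph0 G A B C) := by
    have d0 : deriv (Ph0 G A B C) = Ph1 G A B C :=
      funext fun x => (ph0_hasDerivAt hGc A B C x).deriv
    have d1 : deriv (Ph1 G A B C) = Ph2 G A B :=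
      funext fun x => (ph1_hasDerivAt hGc A B C x).deriv
    have d2 : deriv (Ph2 G A B) = Ph3 G A :=
      funext fun x => (ph2_hasDerivAt hGc A B x).deriv
    have d3 : deriv (Ph3 G A) = fun x => -G x :=
      funext fun x => (ph3_hasDerivAt hGc A x).deriv
    have : (4 : WithTop ℕ∞) = 3 + 1 := by norm_num
    rw [this, contDiff_succ_iff_deriv, d0]
    refine ⟨fun x => (ph0_hasDerivAt hGc A B C x).differentiableAt, by simp, ?_⟩
    have : (3 : WithTop ℕ∞) = 2 + 1 := by norm_num
    rw [this, contDiff_succ_iff_deriv, d1]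
    refine ⟨fun x => (ph1_hasDerivAt hGc A B C x).differentiableAt, by simp, ?_⟩
    have : (2 : WithTop ℕ∞) = 1 + 1 := by norm_num
    rw [this, contDiff_succ_iff_deriv, d2]
    refine ⟨fun x => (ph2_hasDerivAt hGc A B x).differentiableAt, by simp, ?_⟩
    rw [contDiff_one_iff_deriv, d3]
    exact ⟨fun x => (ph3_hasDerivAt hGc A x).differentiableAt, hGc.neg⟩
  refine ⟨(hC4.contDiffOn).congr hφΦ, ?_, ?_, ?_, ?_, ?_⟩
  · intro x hx
    rw [e4 x hx, hGeq x hx]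
  · rw [hφ 0]
    simp
  · rw [e2 1 h1mem]
    simp only [Ph2, hA, hB]
    push_cast
    ring
  · rw [e2 0 h0mem, e1 0 h0mem]
    simp only [Ph1, Ph2, pmom_zero, hB, hC]
    push_cast
    field_simp
    ring
  · rw [e3 1 h1mem]
    simp only [Ph3, hA]
    ring
end

section
/- Let c > 0, γ > 0, and m > 0 be real numbers and let τ ∈ ℂ with i·c·τ² + γ ≠ 0. Suppose f : ℝ → ℂ is four times continuously differentiable on [0,1], is not identically zero on [0,1], and satisfies f⁗(x) = τ⁴·f(x) for all x ∈ [0,1], with boundary conditions f(0) = 0, f''(1) = 0, f''(0) = (i·c·τ² + γ)·f'(0), and f'''(1) = −m·τ⁴·f(1). Then τ satisfies the characteristic equation 2m·τ²·sinh τ·sin τ + τ·(cosh τ·sin τ − sinh τ·cos τ) = (i·c·τ² + γ)·[1 + cosh τ·cos τ − m·τ·(cosh τ·sin τ − sinh τ·cos τ)]. -/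
open Complex Set

/-- A differentiable function on `Icc 0 1` with vanishing `derivWithin` is constant. -/
lemma ode_const_aux {w : ℝ → ℂ} (hw : DifferentiableOn ℝ w (Icc 0 1))
    (hd : ∀ x ∈ Icc (0:ℝ) 1, derivWithin w (Icc 0 1) x = 0) :
    ∀ x ∈ Icc (0:ℝ) 1, w x = w 0 := by
  intro x hx
  have h0 : (0:ℝ) ∈ Icc (0:ℝ) 1 := ⟨le_refl _, zero_le_one⟩
  have := Convex.norm_image_sub_le_of_norm_derivWithin_le (C := 0) hw
    (fun y hy => by rw [hd y hy]; simp) (convex_Icc 0 1) h0 hx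
  have h2 : ‖w x - w 0‖ ≤ 0 := by simpa using this
  exact sub_eq_zero.mp (norm_le_zero_iff.mp h2)

/-- First-order uniqueness: `w' = l w`, `w 0 = 0` forces `w = 0` on `Icc 0 1`. -/
lemma ode_first_order {w : ℝ → ℂ} {l : ℂ} (hw : DifferentiableOn ℝ w (Icc 0 1))
    (hd : ∀ x ∈ Icc (0:ℝ) 1, derivWithin w (Icc 0 1) x = l * w x) (h0 : w 0 = 0) :
    ∀ x ∈ Icc (0:ℝ) 1, w x = 0 := by
  have hU : UniqueDiffOn ℝ (Icc (0:ℝ) 1) := uniqueDiffOn_Icc zero_lt_one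
  set u : ℝ → ℂ := fun x => Complex.exp (-l * x) * w x with hu
  have hder : ∀ x ∈ Icc (0:ℝ) 1, HasDerivWithinAt u 0 (Icc 0 1) x := by
    intro x hx
    have hb : HasDerivAt (fun y : ℝ => -l * (y : ℂ)) (-l) x := by
      simpa using (Complex.ofRealCLM.hasDerivAt (x := x)).const_mul (-l)
    have he : HasDerivAt (fun y : ℝ => Complex.exp (-l * y)) (-l * Complex.exp (-l * x)) x := by
      simpa [smul_eq_mul, Function.comp_def, mul_comm] using
        (Complex.hasDerivAt_exp (-l * x)).scomp x hb
    have hwx : HasDerivWithinAt w (l * w x) (Icc 0 1) x := by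
      have h1 := (hw x hx).hasDerivWithinAt
      rwa [hd x hx] at h1
    have := (he.hasDerivWithinAt).mul hwx
    convert this using 1
    · rfl
    · ext y; simp only [hu, Pi.mul_apply]
    ring
  have hdiff : DifferentiableOn ℝ u (Icc 0 1) := fun x hx => (hder x hx).differentiableWithinAt
  have hd0 : ∀ x ∈ Icc (0:ℝ) 1, derivWithin u (Icc 0 1) x = 0 :=
    fun x hx => (hder x hx).derivWithin (hU x hx)
  intro x hx
  have hc := ode_const_aux hdiff hd0 x hx
  have hu0 : u 0 = 0 := by simp [hu, h0]
  have hux : u x = 0 := by rw [hc, hu0]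
  have hexp : Complex.exp (-l * x) ≠ 0 := Complex.exp_ne_zero _
  have := mul_eq_zero.mp hux
  tauto

/-- Second-order uniqueness: `w' = w₁`, `w₁' = l² w`, zero data at `0` forces `w = 0`. -/
lemma ode_second_order {w w1 : ℝ → ℂ} {l : ℂ}
    (hw : DifferentiableOn ℝ w (Icc 0 1)) (hw1 : DifferentiableOn ℝ w1 (Icc 0 1))
    (hd : ∀ x ∈ Icc (0:ℝ) 1, derivWithin w (Icc 0 1) x = w1 x)
    (hd1 : ∀ x ∈ Icc (0:ℝ) 1, derivWithin w1 (Icc 0 1) x = l ^ 2 * w x)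
    (h0 : w 0 = 0) (h10 : w1 0 = 0) :
    ∀ x ∈ Icc (0:ℝ) 1, w x = 0 := by
  have hU : UniqueDiffOn ℝ (Icc (0:ℝ) 1) := uniqueDiffOn_Icc zero_lt_one
  have hvdiff : DifferentiableOn ℝ (fun x => w1 x - l * w x) (Icc 0 1) :=
    hw1.sub (hw.const_mul l)
  have hvderiv : ∀ x ∈ Icc (0:ℝ) 1,
      derivWithin (fun x => w1 x - l * w x) (Icc 0 1) x = -l * (w1 x - l * w x) := by
    intro x hx
    have hw1x : HasDerivWithinAt w1 (l ^ 2 * w x) (Icc 0 1) x := by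
      have h1 := (hw1 x hx).hasDerivWithinAt; rwa [hd1 x hx] at h1
    have hwx : HasDerivWithinAt w (w1 x) (Icc 0 1) x := by
      have h1 := (hw x hx).hasDerivWithinAt; rwa [hd x hx] at h1
    have := (hw1x.sub (hwx.const_mul l)).derivWithin (hU x hx)
    refine this.trans ?_; ring
  have hv0 : (fun x => w1 x - l * w x) 0 = 0 := by simp [h0, h10]
  have hv := ode_first_order hvdiff hvderiv hv0
  refine ode_first_order (l := l) hw (fun x hx => ?_) h0
  have hvx := hv x hx
  rw [hd x hx]
  linear_combination hvx

/-- Fourth-order uniqueness for `h'''' = t⁴ h` with zero Cauchy data at `0`. -/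
lemma ode_fourth_order {h h1 h2 h3 : ℝ → ℂ} {t : ℂ}
    (hdh : DifferentiableOn ℝ h (Icc 0 1)) (hdh1 : DifferentiableOn ℝ h1 (Icc 0 1))
    (hdh2 : DifferentiableOn ℝ h2 (Icc 0 1)) (hdh3 : DifferentiableOn ℝ h3 (Icc 0 1))
    (c0 : ∀ x ∈ Icc (0:ℝ) 1, derivWithin h (Icc 0 1) x = h1 x)
    (c1 : ∀ x ∈ Icc (0:ℝ) 1, derivWithin h1 (Icc 0 1) x = h2 x)
    (c2 : ∀ x ∈ Icc (0:ℝ) 1, derivWithin h2 (Icc 0 1) x = h3 x)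
    (c3 : ∀ x ∈ Icc (0:ℝ) 1, derivWithin h3 (Icc 0 1) x = t ^ 4 * h x)
    (z0 : h 0 = 0) (z1 : h1 0 = 0) (z2 : h2 0 = 0) (z3 : h3 0 = 0) :
    ∀ x ∈ Icc (0:ℝ) 1, h x = 0 ∧ h1 x = 0 ∧ h2 x = 0 ∧ h3 x = 0 := by
  have hU : UniqueDiffOn ℝ (Icc (0:ℝ) 1) := uniqueDiffOn_Icc zero_lt_one
  -- u := h2 + t² h satisfies u'' = t² u with zero data
  have hu : ∀ x ∈ Icc (0:ℝ) 1, h2 x + t ^ 2 * h x = 0 := by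
    refine ode_second_order (w := fun x => h2 x + t ^ 2 * h x)
      (w1 := fun x => h3 x + t ^ 2 * h1 x) (l := t)
      (hdh2.add (hdh.const_mul _)) (hdh3.add (hdh1.const_mul _)) ?_ ?_
      (by simp [z0, z2]) (by simp [z1, z3])
    · intro x hx
      have ha : HasDerivWithinAt h2 (h3 x) (Icc 0 1) x := by
        have := (hdh2 x hx).hasDerivWithinAt; rwa [c2 x hx] at this
      have hb : HasDerivWithinAt h (h1 x) (Icc 0 1) x := by
        have := (hdh x hx).hasDerivWithinAt; rwa [c0 x hx] at this
      exact (ha.add (hb.const_mul (t ^ 2))).derivWithin (hU x hx)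
    · intro x hx
      have ha : HasDerivWithinAt h3 (t ^ 4 * h x) (Icc 0 1) x := by
        have := (hdh3 x hx).hasDerivWithinAt; rwa [c3 x hx] at this
      have hb : HasDerivWithinAt h1 (h2 x) (Icc 0 1) x := by
        have := (hdh1 x hx).hasDerivWithinAt; rwa [c1 x hx] at this
      have := (ha.add (hb.const_mul (t ^ 2))).derivWithin (hU x hx)
      refine this.trans ?_; ring
  -- now h'' = -t² h : second order with l = I t
  have hzero : ∀ x ∈ Icc (0:ℝ) 1, h x = 0 := by
    refine ode_second_order (w := h) (w1 := h1) (l := Complex.I * t)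
      hdh hdh1 c0 (fun x hx => ?_) z0 z1
    have h2x : h2 x = -(t ^ 2) * h x := by
      have := hu x hx; linear_combination this
    rw [c1 x hx, h2x]
    have hsq : (Complex.I * t) ^ 2 = -(t ^ 2) := by
      rw [mul_pow, Complex.I_sq]; ring
    rw [hsq]
  -- derive vanishing of the derivatives
  have heq : EqOn h (fun _ => (0:ℂ)) (Icc 0 1) := fun x hx => hzero x hx
  have h1zero : ∀ x ∈ Icc (0:ℝ) 1, h1 x = 0 := by
    intro x hx
    have := derivWithin_congr heq (hzero x hx)
    rw [← c0 x hx, this]; exact congrFun (derivWithin_fun_const _ _) x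
  have heq1 : EqOn h1 (fun _ => (0:ℂ)) (Icc 0 1) := fun x hx => h1zero x hx
  have h2zero : ∀ x ∈ Icc (0:ℝ) 1, h2 x = 0 := by
    intro x hx
    have := derivWithin_congr heq1 (h1zero x hx)
    rw [← c1 x hx, this]; exact congrFun (derivWithin_fun_const _ _) x
  have heq2 : EqOn h2 (fun _ => (0:ℂ)) (Icc 0 1) := fun x hx => h2zero x hx
  have h3zero : ∀ x ∈ Icc (0:ℝ) 1, h3 x = 0 := by
    intro x hx
    have := derivWithin_congr heq2 (h2zero x hx)
    rw [← c2 x hx, this]; exact congrFun (derivWithin_fun_const _ _) x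
  exact fun x hx => ⟨hzero x hx, h1zero x hx, h2zero x hx, h3zero x hx⟩

/-- characteristic equation of the tip-mass observer-error operator:
a nontrivial solution of `f⁗ = τ⁴ f` with `f(0)=f''(1)=0`,
`f''(0) = (i c τ² + γ) f'(0)`, `f'''(1) = −m τ⁴ f(1)` forces
`2m τ² sinh τ sin τ + τ(cosh τ sin τ − sinh τ cos τ)
  = (i c τ² + γ)[1 + cosh τ cos τ − m τ(cosh τ sin τ − sinh τ cos τ)]`. -/
theorem stmt_9 (c γ m : ℝ) (hc : 0 < c) (hγ : 0 < γ) (hm : 0 < m) (τ : ℂ)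
    (hne : Complex.I * (c : ℂ) * τ ^ 2 + (γ : ℂ) ≠ 0)
    (f : ℝ → ℂ)
    (hf : ContDiffOn ℝ 4 f (Set.Icc 0 1))
    (hfne : ∃ x ∈ Set.Icc (0 : ℝ) 1, f x ≠ 0)
    (hode : ∀ x ∈ Set.Icc (0 : ℝ) 1,
      iteratedDerivWithin 4 f (Set.Icc 0 1) x = τ ^ 4 * f x)
    (hbc0 : f 0 = 0)
    (hbc1 : iteratedDerivWithin 2 f (Set.Icc 0 1) 1 = 0)
    (hbc2 : iteratedDerivWithin 2 f (Set.Icc 0 1) 0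
      = (Complex.I * (c : ℂ) * τ ^ 2 + (γ : ℂ)) * iteratedDerivWithin 1 f (Set.Icc 0 1) 0)
    (hbc3 : iteratedDerivWithin 3 f (Set.Icc 0 1) 1 = -(m : ℂ) * τ ^ 4 * f 1) :
    2 * (m : ℂ) * τ ^ 2 * Complex.sinh τ * Complex.sin τ
        + τ * (Complex.cosh τ * Complex.sin τ - Complex.sinh τ * Complex.cos τ)
      = (Complex.I * (c : ℂ) * τ ^ 2 + (γ : ℂ))
          * (1 + Complex.cosh τ * Complex.cos τ
            - (m : ℂ) * τ * (Complex.cosh τ * Complex.sin τ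
              - Complex.sinh τ * Complex.cos τ)) := by
  have hU : UniqueDiffOn ℝ (Icc (0:ℝ) 1) := uniqueDiffOn_Icc zero_lt_one
  have h0s : (0:ℝ) ∈ Icc (0:ℝ) 1 := ⟨le_refl _, zero_le_one⟩
  have h1s : (1:ℝ) ∈ Icc (0:ℝ) 1 := ⟨zero_le_one, le_refl _⟩
  have hdF : ∀ k : ℕ, k < 4 →
      DifferentiableOn ℝ (iteratedDerivWithin k f (Icc 0 1)) (Icc 0 1) := by
    intro k hk
    exact hf.differentiableOn_iteratedDerivWithin (by exact_mod_cast hk) hU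
  have hchain : ∀ (k : ℕ), ∀ x ∈ Icc (0:ℝ) 1,
      derivWithin (iteratedDerivWithin k f (Icc 0 1)) (Icc 0 1) x
        = iteratedDerivWithin (k+1) f (Icc 0 1) x :=
    fun k x hx => (congrFun iteratedDerivWithin_succ x).symm
  have hd0 : ∀ x ∈ Icc (0:ℝ) 1,
      derivWithin f (Icc 0 1) x = iteratedDerivWithin 1 f (Icc 0 1) x := by
    intro x hx; rw [iteratedDerivWithin_one]
  have hdF0 : DifferentiableOn ℝ f (Icc 0 1) := by
    have := hdF 0 (by norm_num); rwa [iteratedDerivWithin_zero] at this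
  set a1 := iteratedDerivWithin 1 f (Icc 0 1) 0 with ha1def
  set a3 := iteratedDerivWithin 3 f (Icc 0 1) 0 with ha3def
  by_cases hτ : τ = 0
  · -- degenerate case : forces f ≡ 0, contradiction
    exfalso
    subst hτ
    have hD3const : ∀ x ∈ Icc (0:ℝ) 1, iteratedDerivWithin 3 f (Icc 0 1) x = a3 :=
      ode_const_aux (hdF 3 (by norm_num))
        (fun x hx => by rw [hchain 3 x hx, hode x hx]; ring)
    have ha3 : a3 = 0 := by
      have h1 := hD3const 1 h1s
      rw [hbc3] at h1
      simpa using h1.symm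
    have hD2const : ∀ x ∈ Icc (0:ℝ) 1,
        iteratedDerivWithin 2 f (Icc 0 1) x = iteratedDerivWithin 2 f (Icc 0 1) 0 :=
      ode_const_aux (hdF 2 (by norm_num))
        (fun x hx => by rw [hchain 2 x hx, hD3const x hx, ha3])
    have ha2 : iteratedDerivWithin 2 f (Icc 0 1) 0 = 0 := by
      have h1 := hD2const 1 h1s
      rw [hbc1] at h1
      exact h1.symm
    have ha1 : a1 = 0 := by
      rw [ha2] at hbc2
      exact ((mul_eq_zero.mp hbc2.symm).resolve_left hne)
    have hz := ode_fourth_order (t := (0:ℂ)) hdF0 (hdF 1 (by norm_num))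
      (hdF 2 (by norm_num)) (hdF 3 (by norm_num))
      (fun x hx => hd0 x hx) (fun x hx => hchain 1 x hx) (fun x hx => hchain 2 x hx)
      (fun x hx => by rw [hchain 3 x hx]; exact hode x hx)
      hbc0 ha1 ha2 ha3
    obtain ⟨x, hx, hxne⟩ := hfne
    exact hxne (hz x hx).1
  · -- main case τ ≠ 0
    have h2τ : (2:ℂ) * τ^3 ≠ 0 := mul_ne_zero two_ne_zero (pow_ne_zero 3 hτ)
    set K := Complex.I * (c : ℂ) * τ ^ 2 + (γ : ℂ) with hKdef
    set A := τ * K * a1 with hA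
    set B := τ^2 * a1 + a3 with hB
    set C' := -(τ * K * a1) with hC'
    set D' := τ^2 * a1 - a3 with hD'
    set g : ℝ → ℂ := fun x => (A * Complex.cosh (τ*x) + B * Complex.sinh (τ*x)
      + C' * Complex.cos (τ*x) + D' * Complex.sin (τ*x)) / (2*τ^3) with hgdef
    set g1 : ℝ → ℂ := fun x => τ * (A * Complex.sinh (τ*x) + B * Complex.cosh (τ*x)
      - C' * Complex.sin (τ*x) + D' * Complex.cos (τ*x)) / (2*τ^3) with hg1def
    set g2 : ℝ → ℂ := fun x => τ^2 * (A * Complex.cosh (τ*x) + B * Complex.sinh (τ*x)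
      - C' * Complex.cos (τ*x) - D' * Complex.sin (τ*x)) / (2*τ^3) with hg2def
    set g3 : ℝ → ℂ := fun x => τ^3 * (A * Complex.sinh (τ*x) + B * Complex.cosh (τ*x)
      + C' * Complex.sin (τ*x) - D' * Complex.cos (τ*x)) / (2*τ^3) with hg3def
    have hbase : ∀ x:ℝ, HasDerivAt (fun y:ℝ => τ * (y:ℂ)) τ x := fun x => by
      simpa using (Complex.ofRealCLM.hasDerivAt (x := x)).const_mul τ
    have hch : ∀ x:ℝ, HasDerivAt (fun y:ℝ => Complex.cosh (τ*y)) (τ * Complex.sinh (τ*x)) x :=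
      fun x => by
        simpa [Function.comp_def, smul_eq_mul] using
          (Complex.hasDerivAt_cosh (τ*x)).scomp x (hbase x)
    have hsh : ∀ x:ℝ, HasDerivAt (fun y:ℝ => Complex.sinh (τ*y)) (τ * Complex.cosh (τ*x)) x :=
      fun x => by
        simpa [Function.comp_def, smul_eq_mul] using
          (Complex.hasDerivAt_sinh (τ*x)).scomp x (hbase x)
    have hcs : ∀ x:ℝ, HasDerivAt (fun y:ℝ => Complex.cos (τ*y)) (-(τ * Complex.sin (τ*x))) x :=
      fun x => by
        have := (Complex.hasDerivAt_cos (τ*x)).scomp x (hbase x)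
        simpa [Function.comp_def, smul_eq_mul, mul_comm] using this
    have hsn : ∀ x:ℝ, HasDerivAt (fun y:ℝ => Complex.sin (τ*y)) (τ * Complex.cos (τ*x)) x :=
      fun x => by
        simpa [Function.comp_def, smul_eq_mul] using
          (Complex.hasDerivAt_sin (τ*x)).scomp x (hbase x)
    have hgd : ∀ x:ℝ, HasDerivAt g (g1 x) x := by
      intro x
      have h1 := (((((hch x).const_mul A).add ((hsh x).const_mul B)).add
        ((hcs x).const_mul C')).add ((hsn x).const_mul D')).div_const (2*τ^3)
      rw [hgdef, hg1def]
      convert h1 using 1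
      · rfl
      · rfl
      beta_reduce
      ring
    have hgd1 : ∀ x:ℝ, HasDerivAt g1 (g2 x) x := by
      intro x
      have h1 := ((((((hsh x).const_mul A).add ((hch x).const_mul B)).sub
        ((hsn x).const_mul C')).add ((hcs x).const_mul D')).const_mul τ).div_const (2*τ^3)
      rw [hg1def, hg2def]
      convert h1 using 1
      · rfl
      · rfl
      beta_reduce
      ring
    have hgd2 : ∀ x:ℝ, HasDerivAt g2 (g3 x) x := by
      intro x
      have h1 := ((((((hch x).const_mul A).add ((hsh x).const_mul B)).sub
        ((hcs x).const_mul C')).sub ((hsn x).const_mul D')).const_mul (τ^2)).div_const (2*τ^3)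
      rw [hg2def, hg3def]
      convert h1 using 1
      · rfl
      · rfl
      beta_reduce
      ring
    have hgd3 : ∀ x:ℝ, HasDerivAt g3 (τ^4 * g x) x := by
      intro x
      have h1 := ((((((hsh x).const_mul A).add ((hch x).const_mul B)).add
        ((hsn x).const_mul C')).sub ((hcs x).const_mul D')).const_mul (τ^3)).div_const (2*τ^3)
      rw [hg3def, hgdef]
      convert h1 using 1
      · rfl
      · rfl
      beta_reduce
      ring
    have hgdiff : DifferentiableOn ℝ g (Icc 0 1) :=
      fun x hx => ((hgd x).differentiableAt).differentiableWithinAt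
    have hg1diff : DifferentiableOn ℝ g1 (Icc 0 1) :=
      fun x hx => ((hgd1 x).differentiableAt).differentiableWithinAt
    have hg2diff : DifferentiableOn ℝ g2 (Icc 0 1) :=
      fun x hx => ((hgd2 x).differentiableAt).differentiableWithinAt
    have hg3diff : DifferentiableOn ℝ g3 (Icc 0 1) :=
      fun x hx => ((hgd3 x).differentiableAt).differentiableWithinAt
    -- initial values of g
    have hg0val : g 0 = 0 := by
      rw [hgdef]; simp [hA, hC']
    have hg1val : g1 0 = a1 := by
      rw [hg1def]; simp [hB, hD']; field_simp; ring
    have hg2val : g2 0 = K * a1 := by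
      rw [hg2def]; simp [hA, hC']; field_simp; ring
    have hg3val : g3 0 = a3 := by
      rw [hg3def]; simp [hB, hD']; field_simp; ring
    -- uniqueness: f coincides with g
    have hz := ode_fourth_order (t := τ)
      (h := fun x => f x - g x)
      (h1 := fun x => iteratedDerivWithin 1 f (Icc 0 1) x - g1 x)
      (h2 := fun x => iteratedDerivWithin 2 f (Icc 0 1) x - g2 x)
      (h3 := fun x => iteratedDerivWithin 3 f (Icc 0 1) x - g3 x)
      (hdF0.sub hgdiff) ((hdF 1 (by norm_num)).sub hg1diff)
      ((hdF 2 (by norm_num)).sub hg2diff) ((hdF 3 (by norm_num)).sub hg3diff)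
      (by
        intro x hx
        have hfx : HasDerivWithinAt f (iteratedDerivWithin 1 f (Icc 0 1) x) (Icc 0 1) x := by
          have := (hdF0 x hx).hasDerivWithinAt; rwa [hd0 x hx] at this
        exact (hfx.sub (hgd x).hasDerivWithinAt).derivWithin (hU x hx))
      (by
        intro x hx
        have hfx : HasDerivWithinAt (iteratedDerivWithin 1 f (Icc 0 1))
            (iteratedDerivWithin 2 f (Icc 0 1) x) (Icc 0 1) x := by
          have := ((hdF 1 (by norm_num)) x hx).hasDerivWithinAt
          rwa [hchain 1 x hx] at this
        exact (hfx.sub (hgd1 x).hasDerivWithinAt).derivWithin (hU x hx))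
      (by
        intro x hx
        have hfx : HasDerivWithinAt (iteratedDerivWithin 2 f (Icc 0 1))
            (iteratedDerivWithin 3 f (Icc 0 1) x) (Icc 0 1) x := by
          have := ((hdF 2 (by norm_num)) x hx).hasDerivWithinAt
          rwa [hchain 2 x hx] at this
        exact (hfx.sub (hgd2 x).hasDerivWithinAt).derivWithin (hU x hx))
      (by
        intro x hx
        have hfx : HasDerivWithinAt (iteratedDerivWithin 3 f (Icc 0 1))
            (iteratedDerivWithin 4 f (Icc 0 1) x) (Icc 0 1) x := by
          have := ((hdF 3 (by norm_num)) x hx).hasDerivWithinAt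
          rwa [hchain 3 x hx] at this
        have heq := (hfx.sub (hgd3 x).hasDerivWithinAt).derivWithin (hU x hx)
        refine heq.trans ?_; rw [hode x hx]; ring)
      (by show f 0 - g 0 = 0; rw [hbc0, hg0val]; ring)
      (by show a1 - g1 0 = 0; rw [hg1val]; ring)
      (by show iteratedDerivWithin 2 f (Icc 0 1) 0 - g2 0 = 0; rw [hbc2, hg2val]; ring)
      (by show a3 - g3 0 = 0; rw [hg3val]; ring)
    have hf1 : f 1 = g 1 := sub_eq_zero.mp (hz 1 h1s).1
    have hD2eq : iteratedDerivWithin 2 f (Icc 0 1) 1 = g2 1 := sub_eq_zero.mp (hz 1 h1s).2.2.1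
    have hD3eq : iteratedDerivWithin 3 f (Icc 0 1) 1 = g3 1 := sub_eq_zero.mp (hz 1 h1s).2.2.2
    -- boundary conditions at 1
    set ch := Complex.cosh τ with hchd
    set sh := Complex.sinh τ with hshd
    set cs := Complex.cos τ with hcsd
    set sn := Complex.sin τ with hsnd
    have hE1 : A * ch + B * sh - C' * cs - D' * sn = 0 := by
      have h1 : g2 1 = 0 := by rw [← hD2eq]; exact hbc1
      rw [hg2def] at h1
      simp only [Complex.ofReal_one, mul_one] at h1
      rw [← hchd, ← hshd, ← hcsd, ← hsnd] at h1
      have h2 := (div_eq_zero_iff.mp h1).resolve_right h2τ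
      exact (mul_eq_zero.mp h2).resolve_left (pow_ne_zero 2 hτ)
    have hE2 : (A * sh + B * ch + C' * sn - D' * cs)
        + (m:ℂ) * τ * (A * ch + B * sh + C' * cs + D' * sn) = 0 := by
      have h1 : g3 1 = -(m:ℂ) * τ^4 * g 1 := by rw [← hD3eq, ← hf1]; exact hbc3
      rw [hg3def, hgdef] at h1
      simp only [Complex.ofReal_one, mul_one] at h1
      rw [← hchd, ← hshd, ← hcsd, ← hsnd] at h1
      field_simp at h1
      refine mul_left_cancel₀ (pow_ne_zero 3 hτ) ?_
      rw [mul_zero]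
      linear_combination τ ^ 3 * h1
    -- nontriviality
    have hnz : ¬ (a1 = 0 ∧ a3 = 0) := by
      rintro ⟨z1, z3⟩
      obtain ⟨x, hx, hxne⟩ := hfne
      apply hxne
      have hfg := sub_eq_zero.mp (hz x hx).1
      rw [hfg, hgdef]
      simp [hA, hB, hC', hD', z1, z3]
    -- expand the two linear relations
    rw [hA, hB, hC', hD'] at hE1 hE2
    have e1a : (τ*K*(ch+cs) + τ^2*(sh - sn))*a1 + (sh+sn)*a3 = 0 := by
      linear_combination hE1
    have e2a : (τ*K*(sh-sn) + τ^2*(ch-cs)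
        + (m:ℂ)*τ*(τ*K*(ch-cs) + τ^2*(sh+sn)))*a1 + (ch + cs + (m:ℂ)*τ*(sh-sn))*a3 = 0 := by
      linear_combination hE2
    -- determinant must vanish
    have hdet : (τ*K*(ch+cs) + τ^2*(sh - sn)) * (ch + cs + (m:ℂ)*τ*(sh - sn))
        - (sh+sn) * (τ*K*(sh-sn) + τ^2*(ch-cs)
          + (m:ℂ)*τ*(τ*K*(ch-cs) + τ^2*(sh+sn))) = 0 := by
      rcases not_and_or.mp hnz with h|h
      · refine mul_right_cancel₀ h ?_
        rw [zero_mul]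
        linear_combination (ch + cs + (m:ℂ)*τ*(sh - sn)) * e1a - (sh+sn) * e2a
      · refine mul_right_cancel₀ h ?_
        rw [zero_mul]
        linear_combination (τ*K*(ch+cs) + τ^2*(sh - sn)) * e2a
          - (τ*K*(sh-sn) + τ^2*(ch-cs) + (m:ℂ)*τ*(τ*K*(ch-cs) + τ^2*(sh+sn))) * e1a
    have idh : ch^2 - sh^2 = 1 := Complex.cosh_sq_sub_sinh_sq τ
    have idt : sn^2 + cs^2 = 1 := Complex.sin_sq_add_cos_sq τ
    have hkey : 2*τ*((2*(m:ℂ)*τ^2*sh*sn + τ*(ch*sn - sh*cs))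
        - K*(1 + ch*cs - (m:ℂ)*τ*(ch*sn - sh*cs))) = 0 := by
      linear_combination (-1) * hdet + K*τ*idh + K*τ*idt
    have h2 := (mul_eq_zero.mp hkey).resolve_left (mul_ne_zero two_ne_zero hτ)
    linear_combination h2
end

section
/- Let c > 0, γ > 0, and m > 0 be real numbers and let λ ∈ ℂ with λ ≠ 0. Suppose f : ℝ → ℂ is four times continuously differentiable on [0,1], is not identically zero on [0,1], and satisfies λ²·f(x) + f⁗(x) = 0 for all x ∈ [0,1], with boundary conditions f(0) = 0, f''(1) = 0, f''(0) = (c·λ + γ)·f'(0), and f'''(1) = m·λ²·f(1). Then Re λ < 0. -/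
set_option maxHeartbeats 1000000
open Complex Set

/-- Auxiliary: a solution of `f'''' = s² f` on `[0,1]` with
`f(0)=f'(0)=f''(0)=0` and `f''(1)=0` vanishes identically. -/
lemma aux_vanish (s : ℝ) (hs : s ≠ 0) (f : ℝ → ℂ)
    (hf : ContDiffOn ℝ 4 f (Set.Icc 0 1))
    (hbc0 : f 0 = 0)
    (h10 : iteratedDerivWithin 1 f (Set.Icc 0 1) 0 = 0)
    (h20 : iteratedDerivWithin 2 f (Set.Icc 0 1) 0 = 0)
    (h21 : iteratedDerivWithin 2 f (Set.Icc 0 1) 1 = 0)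
    (hode : ∀ x ∈ Set.Icc (0 : ℝ) 1,
      iteratedDerivWithin 4 f (Set.Icc 0 1) x = ((s^2 : ℝ) : ℂ) * f x) :
    ∀ x ∈ Set.Icc (0:ℝ) 1, f x = 0 := by
  have hUD : UniqueDiffOn ℝ (Set.Icc (0:ℝ) 1) := uniqueDiffOn_Icc one_pos
  set g : ℕ → ℝ → ℂ := fun k => iteratedDerivWithin k f (Set.Icc 0 1) with hg
  have hgcont : ∀ k : ℕ, k ≤ 4 → ContinuousOn (g k) (Set.Icc 0 1) := by
    intro k hk
    exact hf.continuousOn_iteratedDerivWithin (by exact_mod_cast hk) hUD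
  have hgderiv : ∀ k : ℕ, k < 4 → ∀ x ∈ Set.Icc (0:ℝ) 1,
      HasDerivWithinAt (g k) (g (k+1) x) (Set.Icc 0 1) x := by
    intro k hk x hx
    have hdiff : DifferentiableOn ℝ (g k) (Set.Icc 0 1) :=
      hf.differentiableOn_iteratedDerivWithin (by exact_mod_cast hk) hUD
    have := (hdiff x hx).hasDerivWithinAt
    have h2 : g (k+1) x = derivWithin (g k) (Set.Icc 0 1) x :=
      congrFun iteratedDerivWithin_succ x
    rw [h2]; simpa [derivWithin] using this
  have hg00 : g 0 0 = 0 := by simp [hg, hbc0]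
  have hg01 : ∀ x, g 0 x = f x := by intro x; simp [hg]
  set T : ℕ → ℕ → ℝ → ℝ := fun a b x => (g a x * star (g b x)).re with hT
  have hTd : ∀ a b : ℕ, a < 4 → b < 4 → ∀ x ∈ Set.Icc (0:ℝ) 1,
      HasDerivWithinAt (T a b) (T (a+1) b x + T a (b+1) x) (Set.Icc 0 1) x := by
    intro a b ha hb x hx
    have h := ((hgderiv a ha x hx).mul (hgderiv b hb x hx).star)
    have := Complex.reCLM.hasFDerivAt.comp_hasDerivWithinAt x h
    simpa [hT, Function.comp_def] using this
  have hTcont : ∀ a b : ℕ, a ≤ 4 → b ≤ 4 → ContinuousOn (T a b) (Set.Icc 0 1) := by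
    intro a b ha hb
    exact Complex.continuous_re.comp_continuousOn
      ((hgcont a ha).mul (hgcont b hb).star)
  have hsym : ∀ a b x, T a b x = T b a x := by
    intro a b x; simp [hT, Complex.mul_re, Complex.star_def]; ring
  have hT4 : ∀ (b : ℕ) (x : ℝ), x ∈ Set.Icc (0:ℝ) 1 → T 4 b x = s^2 * T 0 b x := by
    intro b x hx
    have h4 : g 4 x = ((s^2 : ℝ):ℂ) * g 0 x := by rw [hg01]; exact hode x hx
    simp [hT, h4, Complex.mul_re, ← Complex.ofReal_pow]; ring
  have hTaa : ∀ (a : ℕ) x, T a a x = Complex.normSq (g a x) := by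
    intro a x; simp [hT, Complex.star_def, Complex.mul_conj, Complex.normSq_apply]
  have hderivAt : ∀ (F : ℝ → ℝ) (F' : ℝ → ℝ),
      (∀ x ∈ Set.Icc (0:ℝ) 1, HasDerivWithinAt F (F' x) (Set.Icc 0 1) x) →
      ∀ x ∈ Set.Ioo (0:ℝ) 1, HasDerivAt F (F' x) x := by
    intro F F' h x hx
    exact (h x ⟨hx.1.le, hx.2.le⟩).hasDerivAt (Icc_mem_nhds hx.1 hx.2)
  have hmono : ∀ (F : ℝ → ℝ) (F' : ℝ → ℝ),
      (∀ x ∈ Set.Icc (0:ℝ) 1, HasDerivWithinAt F (F' x) (Set.Icc 0 1) x) →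
      (∀ x ∈ Set.Icc (0:ℝ) 1, 0 ≤ F' x) →
      ContinuousOn F (Set.Icc 0 1) → MonotoneOn F (Set.Icc (0:ℝ) 1) := by
    intro F F' hd hpos hcont
    apply monotoneOn_of_deriv_nonneg (convex_Icc 0 1) hcont
    · rw [interior_Icc]
      intro x hx
      exact (hderivAt F F' hd x hx).differentiableAt.differentiableWithinAt
    · rw [interior_Icc]
      intro x hx
      rw [(hderivAt F F' hd x hx).deriv]
      exact hpos x ⟨hx.1.le, hx.2.le⟩
  have hanti : ∀ (F : ℝ → ℝ) (F' : ℝ → ℝ),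
      (∀ x ∈ Set.Icc (0:ℝ) 1, HasDerivWithinAt F (F' x) (Set.Icc 0 1) x) →
      (∀ x ∈ Set.Icc (0:ℝ) 1, F' x ≤ 0) →
      ContinuousOn F (Set.Icc 0 1) → AntitoneOn F (Set.Icc (0:ℝ) 1) := by
    intro F F' hd hpos hcont
    apply antitoneOn_of_deriv_nonpos (convex_Icc 0 1) hcont
    · rw [interior_Icc]
      intro x hx
      exact (hderivAt F F' hd x hx).differentiableAt.differentiableWithinAt
    · rw [interior_Icc]
      intro x hx
      rw [(hderivAt F F' hd x hx).deriv]
      exact hpos x ⟨hx.1.le, hx.2.le⟩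
  set H : ℝ → ℝ := fun x => 2 * T 3 1 x - T 2 2 x - s^2 * T 0 0 x with hH
  have hHd : ∀ x ∈ Set.Icc (0:ℝ) 1, HasDerivWithinAt H 0 (Set.Icc 0 1) x := by
    intro x hx
    have h := (((hTd 3 1 (by norm_num) (by norm_num) x hx).const_mul 2).sub
      (hTd 2 2 (by norm_num) (by norm_num) x hx)).sub
      ((hTd 0 0 (by norm_num) (by norm_num) x hx).const_mul (s^2))
    refine h.congr_deriv ?_
    rw [hT4 1 x hx, hsym 2 3, hsym 1 0]; ring
  have hHcont : ContinuousOn H (Set.Icc 0 1) :=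
    (((continuousOn_const.mul (hTcont 3 1 (by norm_num) (by norm_num))).sub
      (hTcont 2 2 (by norm_num) (by norm_num))).sub
      (continuousOn_const.mul (hTcont 0 0 (by norm_num) (by norm_num))))
  have hHzero : ∀ x ∈ Set.Icc (0:ℝ) 1, H x = 0 := by
    have h0 : (0:ℝ) ∈ Set.Icc (0:ℝ) 1 := by norm_num
    have hH0 : H 0 = 0 := by
      simp [hH, hT, hg00]
      simp [hg, h10, h20]
    intro x hx
    have hm := hmono H (fun _ => 0) hHd (fun _ _ => le_rfl) hHcont h0 hx hx.1
    have ha := hanti H (fun _ => 0) hHd (fun _ _ => le_rfl) hHcont h0 hx hx.1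
    linarith [hm, ha, hH0.le, hH0.ge]
  set N : ℝ → ℝ := fun x => T 3 0 x + T 2 1 x with hN
  set K : ℝ → ℝ := fun x => 2*s^2 * T 0 0 x + 2 * T 2 2 x with hK
  have hNd : ∀ x ∈ Set.Icc (0:ℝ) 1, HasDerivWithinAt N (K x) (Set.Icc 0 1) x := by
    intro x hx
    have h := (hTd 3 0 (by norm_num) (by norm_num) x hx).add
      (hTd 2 1 (by norm_num) (by norm_num) x hx)
    refine h.congr_deriv ?_
    have hHx := hHzero x hx
    simp only [hH] at hHx
    simp only [hK]
    norm_num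
    rw [hT4 0 x hx]; linarith
  have hNcont : ContinuousOn N (Set.Icc 0 1) :=
    (hTcont 3 0 (by norm_num) (by norm_num)).add (hTcont 2 1 (by norm_num) (by norm_num))
  have hKnonneg : ∀ x ∈ Set.Icc (0:ℝ) 1, 0 ≤ K x := by
    intro x hx
    simp only [hK, hTaa]
    have h1 : 0 ≤ s^2 * Complex.normSq (g 0 x) :=
      mul_nonneg (sq_nonneg s) (Complex.normSq_nonneg _)
    have h2 := Complex.normSq_nonneg (g 2 x)
    linarith
  have hN0 : N 0 = 0 := by
    simp [hN, hT, hg00]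
    simp [hg, h10]
  have hNnonneg : ∀ x ∈ Set.Icc (0:ℝ) 1, 0 ≤ N x := by
    intro x hx
    have := hmono N K hNd hKnonneg hNcont (by norm_num : (0:ℝ) ∈ Set.Icc (0:ℝ) 1) hx hx.1
    linarith
  set M : ℝ → ℝ := fun x => T 2 0 x with hM
  have hMd : ∀ x ∈ Set.Icc (0:ℝ) 1, HasDerivWithinAt M (N x) (Set.Icc 0 1) x := by
    intro x hx
    exact hTd 2 0 (by norm_num) (by norm_num) x hx
  have hMcont : ContinuousOn M (Set.Icc 0 1) := hTcont 2 0 (by norm_num) (by norm_num)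
  have hM0 : M 0 = 0 := by simp [hM, hT, hg00]
  have hM1 : M 1 = 0 := by
    simp [hM, hT]
    simp [hg, h21]
  have hMzero : ∀ x ∈ Set.Icc (0:ℝ) 1, M x = 0 := by
    intro x hx
    have hmon := hmono M N hMd hNnonneg hMcont
    have h1 := hmon (by norm_num : (0:ℝ) ∈ Set.Icc (0:ℝ) 1) hx hx.1
    have h2 := hmon hx (by norm_num : (1:ℝ) ∈ Set.Icc (0:ℝ) 1) hx.2
    linarith
  have hderivzero : ∀ (F : ℝ → ℝ) (F' : ℝ → ℝ),
      (∀ x ∈ Set.Icc (0:ℝ) 1, HasDerivWithinAt F (F' x) (Set.Icc 0 1) x) →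
      (∀ x ∈ Set.Icc (0:ℝ) 1, F x = 0) →
      ∀ x ∈ Set.Icc (0:ℝ) 1, F' x = 0 := by
    intro F F' hd hz x hx
    have h1 : derivWithin F (Set.Icc 0 1) x = F' x := (hd x hx).derivWithin (hUD x hx)
    have h2 : derivWithin F (Set.Icc 0 1) x = derivWithin (fun _ => (0:ℝ)) (Set.Icc 0 1) x :=
      derivWithin_congr hz (hz x hx)
    have h3 := (hasDerivWithinAt_const x (Set.Icc (0:ℝ) 1) (0:ℝ)).derivWithin (hUD x hx)
    rw [← h1, h2, h3]
  have hNzero := hderivzero M N hMd hMzero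
  have hKzero := hderivzero N K hNd hNzero
  intro x hx
  have hKx : 2*s^2 * Complex.normSq (g 0 x) + 2 * Complex.normSq (g 2 x) = 0 := by
    simpa [hK, hTaa] using hKzero x hx
  have hs2 : 0 < s^2 := by positivity
  have h00 : Complex.normSq (g 0 x) = 0 := by
    nlinarith [Complex.normSq_nonneg (g 0 x), Complex.normSq_nonneg (g 2 x)]
  have := Complex.normSq_eq_zero.mp h00
  rwa [hg01] at this

/-- every nonzero eigenvalue `λ` of the tip-mass observer-error problem
`λ² f + f⁗ = 0`, `f(0)=f''(1)=0`, `f''(0) = (c λ + γ) f'(0)`, `f'''(1) = m λ² f(1)`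
satisfies `Re λ < 0`. -/
theorem stmt_12 (c γ m : ℝ) (hc : 0 < c) (hγ : 0 < γ) (hm : 0 < m)
    (lam : ℂ) (hlam : lam ≠ 0)
    (f : ℝ → ℂ)
    (hf : ContDiffOn ℝ 4 f (Set.Icc 0 1))
    (hfne : ∃ x ∈ Set.Icc (0 : ℝ) 1, f x ≠ 0)
    (hode : ∀ x ∈ Set.Icc (0 : ℝ) 1,
      lam ^ 2 * f x + iteratedDerivWithin 4 f (Set.Icc 0 1) x = 0)
    (hbc0 : f 0 = 0)
    (hbc1 : iteratedDerivWithin 2 f (Set.Icc 0 1) 1 = 0)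
    (hbc2 : iteratedDerivWithin 2 f (Set.Icc 0 1) 0
      = ((c : ℂ) * lam + (γ : ℂ)) * iteratedDerivWithin 1 f (Set.Icc 0 1) 0)
    (hbc3 : iteratedDerivWithin 3 f (Set.Icc 0 1) 1 = (m : ℂ) * lam ^ 2 * f 1) :
    lam.re < 0 := by
  have hUD : UniqueDiffOn ℝ (Set.Icc (0:ℝ) 1) := uniqueDiffOn_Icc one_pos
  set g : ℕ → ℝ → ℂ := fun k => iteratedDerivWithin k f (Set.Icc 0 1) with hg
  have hgcont : ∀ k : ℕ, k ≤ 4 → ContinuousOn (g k) (Set.Icc 0 1) := by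
    intro k hk
    exact hf.continuousOn_iteratedDerivWithin (by exact_mod_cast hk) hUD
  have hgderiv : ∀ k : ℕ, k < 4 → ∀ x ∈ Set.Icc (0:ℝ) 1,
      HasDerivWithinAt (g k) (g (k+1) x) (Set.Icc 0 1) x := by
    intro k hk x hx
    have hdiff : DifferentiableOn ℝ (g k) (Set.Icc 0 1) :=
      hf.differentiableOn_iteratedDerivWithin (by exact_mod_cast hk) hUD
    have := (hdiff x hx).hasDerivWithinAt
    have h2 : g (k+1) x = derivWithin (g k) (Set.Icc 0 1) x :=
      congrFun iteratedDerivWithin_succ x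
    rw [h2]; simpa [derivWithin] using this
  have hg00 : g 0 0 = 0 := by simp [hg, hbc0]
  have hg01 : ∀ x, g 0 x = f x := by intro x; simp [hg]
  -- Φ and its derivative
  set Φ : ℝ → ℂ := fun x => g 3 x * star (g 0 x) - g 2 x * star (g 1 x) with hΦ
  set Φ' : ℝ → ℂ := fun x => g 4 x * star (g 0 x) - g 2 x * star (g 2 x) with hΦ'
  have hΦderiv : ∀ x ∈ Set.Icc (0:ℝ) 1, HasDerivWithinAt Φ (Φ' x) (Set.Icc 0 1) x := by
    intro x hx
    have h1 := ((hgderiv 3 (by norm_num) x hx).mul (hgderiv 0 (by norm_num) x hx).star).sub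
      ((hgderiv 2 (by norm_num) x hx).mul (hgderiv 1 (by norm_num) x hx).star)
    refine h1.congr_deriv ?_
    simp [hΦ']; ring
  have hΦcont : ContinuousOn Φ (Set.Icc 0 1) :=
    (((hgcont 3 (by norm_num)).mul (hgcont 0 (by norm_num)).star).sub
      ((hgcont 2 (by norm_num)).mul (hgcont 1 (by norm_num)).star))
  have hΦ'cont : ContinuousOn Φ' (Set.Icc 0 1) :=
    (((hgcont 4 (by norm_num)).mul (hgcont 0 (by norm_num)).star).sub
      ((hgcont 2 (by norm_num)).mul (hgcont 2 (by norm_num)).star))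
  have hint : IntervalIntegrable Φ' MeasureTheory.volume 0 1 := by
    apply ContinuousOn.intervalIntegrable
    rwa [uIcc_of_le (by norm_num : (0:ℝ) ≤ 1)]
  have hFTC : ∫ x in (0:ℝ)..1, Φ' x = Φ 1 - Φ 0 := by
    apply intervalIntegral.integral_eq_sub_of_hasDeriv_right_of_le (by norm_num) hΦcont
      _ hint
    intro x hx
    exact (hΦderiv x ⟨hx.1.le, hx.2.le⟩).mono_of_mem_nhdsWithin
      (Icc_mem_nhdsGT_of_mem ⟨hx.1.le, hx.2⟩)
  set P : ℝ := ∫ x in (0:ℝ)..1, Complex.normSq (f x) with hP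
  set R : ℝ := ∫ x in (0:ℝ)..1, Complex.normSq (g 2 x) with hR
  have hsplit : ∫ x in (0:ℝ)..1, Φ' x = -lam^2 * P - R := by
    have e1 : ∀ x ∈ Set.uIcc (0:ℝ) 1, Φ' x
        = -lam^2 * (Complex.normSq (f x) : ℂ) - (Complex.normSq (g 2 x) : ℂ) := by
      intro x hx
      rw [uIcc_of_le (by norm_num : (0:ℝ) ≤ 1)] at hx
      have h4 : g 4 x = -lam^2 * f x := by
        have := hode x hx; linear_combination this
      have h0 : g 0 x = f x := by simp [hg]
      simp only [hΦ', h4, h0, Complex.star_def, mul_assoc, Complex.mul_conj]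
    rw [intervalIntegral.integral_congr e1]
    rw [intervalIntegral.integral_sub, intervalIntegral.integral_const_mul,
      intervalIntegral.integral_ofReal, intervalIntegral.integral_ofReal]
    · apply IntervalIntegrable.const_mul
      apply ContinuousOn.intervalIntegrable
      rw [uIcc_of_le (by norm_num : (0:ℝ) ≤ 1)]
      exact Complex.continuous_ofReal.comp_continuousOn
        (Complex.continuous_normSq.comp_continuousOn hf.continuousOn)
    · apply ContinuousOn.intervalIntegrable
      rw [uIcc_of_le (by norm_num : (0:ℝ) ≤ 1)]
      exact Complex.continuous_ofReal.comp_continuousOn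
        (Complex.continuous_normSq.comp_continuousOn (hgcont 2 (by norm_num)))
  -- boundary values
  set Q : ℝ := Complex.normSq (f 1) with hQdef
  set d : ℝ := Complex.normSq (g 1 0) with hddef
  have hΦ1 : Φ 1 = (m:ℂ) * lam^2 * (Q:ℂ) := by
    have h31 : g 3 1 = (m:ℂ)*lam^2 * f 1 := by simpa [hg] using hbc3
    have h21 : g 2 1 = 0 := by simpa [hg] using hbc1
    simp only [hΦ, h31, h21, zero_mul, sub_zero, hg01]
    rw [mul_assoc, Complex.star_def, Complex.mul_conj]
  have hΦ0 : Φ 0 = -(((c:ℂ)*lam + (γ:ℂ)) * (d:ℂ)) := by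
    have h20 : g 2 0 = ((c:ℂ)*lam + (γ:ℂ)) * g 1 0 := by simpa [hg] using hbc2
    simp only [hΦ, hg00, star_zero, mul_zero, zero_sub, h20]
    rw [mul_assoc, Complex.star_def, Complex.mul_conj]
  have hmain : lam^2 * ((P:ℂ) + (m:ℂ)*(Q:ℂ)) + (c:ℂ)*lam*(d:ℂ) + ((R:ℂ) + (γ:ℂ)*(d:ℂ)) = 0 := by
    have h := hFTC
    rw [hsplit, hΦ1, hΦ0] at h
    linear_combination -h
  -- positivity of P
  have hPpos : 0 < P := by
    obtain ⟨x₀, hx₀, hfx₀⟩ := hfne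
    have hx₀0 : x₀ ≠ 0 := fun h => hfx₀ (h ▸ hbc0)
    have hx₀pos : 0 < x₀ := lt_of_le_of_ne hx₀.1 (Ne.symm hx₀0)
    rw [hP, intervalIntegral.integral_pos_iff_support_of_nonneg_ae'
      (Filter.Eventually.of_forall (fun x => Complex.normSq_nonneg (f x)))
      (by
        apply ContinuousOn.intervalIntegrable
        rw [uIcc_of_le (by norm_num : (0:ℝ) ≤ 1)]
        exact Complex.continuous_normSq.comp_continuousOn hf.continuousOn)]
    refine ⟨by norm_num, ?_⟩
    have hcw : ContinuousWithinAt f (Set.Icc 0 1) x₀ := hf.continuousOn.continuousWithinAt hx₀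
    have hmem : f ⁻¹' ({0}ᶜ) ∈ nhdsWithin x₀ (Set.Icc 0 1) :=
      hcw (compl_singleton_mem_nhds hfx₀)
    rw [Metric.mem_nhdsWithin_iff] at hmem
    obtain ⟨ε, hε, hball⟩ := hmem
    set ε' : ℝ := min ε x₀ with hε'
    have hε'pos : 0 < ε' := lt_min hε hx₀pos
    have hsub : Set.Ioo (x₀ - ε') x₀ ⊆
        Function.support (fun x => Complex.normSq (f x)) ∩ Set.Ioc 0 1 := by
      intro y hy
      have hy1 : 0 < y := by
        have : x₀ - ε' ≥ 0 := by
          have : ε' ≤ x₀ := min_le_right _ _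
          linarith
        linarith [hy.1]
      have hy2 : y ≤ 1 := le_trans hy.2.le hx₀.2
      have hyIcc : y ∈ Set.Icc (0:ℝ) 1 := ⟨hy1.le, hy2⟩
      have hyball : y ∈ Metric.ball x₀ ε := by
        rw [Metric.mem_ball, Real.dist_eq, abs_sub_lt_iff]
        constructor
        · linarith [hy.2]
        · have h1 : x₀ - ε' < y := hy.1
          have h2 : ε' ≤ ε := min_le_left _ _
          linarith
      have := hball ⟨hyball, hyIcc⟩
      simp only [Set.mem_preimage, Set.mem_compl_iff, Set.mem_singleton_iff] at this
      exact ⟨by simp [Function.mem_support, Complex.normSq_eq_zero, this],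
        ⟨hy1, hy2⟩⟩
    calc (0:ENNReal) < ENNReal.ofReal ε' := by simp [hε'pos]
      _ = MeasureTheory.volume (Set.Ioo (x₀ - ε') x₀) := by
          rw [Real.volume_Ioo]; congr 1; ring
      _ ≤ _ := MeasureTheory.measure_mono hsub
  have hQnn : 0 ≤ Q := Complex.normSq_nonneg _
  have hdnn : 0 ≤ d := Complex.normSq_nonneg _
  have hRnn : 0 ≤ R := by
    rw [hR]
    apply intervalIntegral.integral_nonneg (by norm_num)
    exact fun x _ => Complex.normSq_nonneg _
  -- extract real and imaginary parts
  by_contra hcon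
  push_neg at hcon
  have hre := congrArg Complex.re hmain
  have him := congrArg Complex.im hmain
  simp only [Complex.add_re, Complex.add_im, Complex.mul_re, Complex.mul_im,
    Complex.ofReal_re, Complex.ofReal_im, Complex.zero_re, Complex.zero_im, pow_two,
    mul_zero, zero_mul, sub_zero, zero_add, add_zero, zero_sub, mul_im, mul_re] at hre him
  rcases eq_or_ne lam.im 0 with hsi | hsi
  · have hr : lam.re ≠ 0 := by
      intro h
      exact hlam (Complex.ext h hsi)
    have hrpos : 0 < lam.re := lt_of_le_of_ne hcon (Ne.symm hr)
    rw [hsi] at hre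
    nlinarith [hre, hPpos, hQnn, hdnn, hRnn, mul_pos hrpos hrpos,
      mul_nonneg hm.le hQnn, mul_nonneg hc.le (mul_nonneg hrpos.le hdnn),
      mul_nonneg hγ.le hdnn]
  · have hkey : 2*lam.re*(P + m*Q) + c*d = 0 := by
      have h2 : lam.im * (2*lam.re*(P + m*Q) + c*d) = 0 := by linear_combination him
      exact (mul_eq_zero.mp h2).resolve_left hsi
    have hPQ : 0 < P + m*Q := by nlinarith [mul_nonneg hm.le hQnn]
    have hd0 : d = 0 := by nlinarith [mul_nonneg (mul_nonneg (by norm_num : (0:ℝ) ≤ 2) hcon) hPQ.le]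
    have hr0 : lam.re = 0 := by
      have h1 : 2*lam.re*(P + m*Q) = 0 := by rw [hd0] at hkey; linarith
      rcases mul_eq_zero.mp h1 with h | h
      · rcases mul_eq_zero.mp h with h' | h'
        · norm_num at h'
        · exact h'
      · exact absurd h (ne_of_gt hPQ)
    -- hard case: purely imaginary eigenvalue
    have hg10 : g 1 0 = 0 := Complex.normSq_eq_zero.mp hd0
    have hg20 : g 2 0 = 0 := by
      have h20 : g 2 0 = ((c:ℂ)*lam + (γ:ℂ)) * g 1 0 := by simpa [hg] using hbc2
      rw [h20, hg10, mul_zero]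
    have hlam2 : lam^2 = ((-(lam.im^2) : ℝ) : ℂ) := by
      apply Complex.ext
      · simp [pow_two, Complex.mul_re, hr0]
      · simp [pow_two, Complex.mul_im, hr0]
    have hode' : ∀ x ∈ Set.Icc (0 : ℝ) 1,
        iteratedDerivWithin 4 f (Set.Icc 0 1) x = ((lam.im^2 : ℝ) : ℂ) * f x := by
      intro x hx
      have h := hode x hx
      rw [hlam2] at h
      push_cast at h ⊢
      linear_combination h
    have hall := aux_vanish lam.im hsi f hf hbc0 (by simpa [hg] using hg10)
      (by simpa [hg] using hg20) hbc1 hode'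
    obtain ⟨x₀, hx₀, hfx₀⟩ := hfne
    exact hfx₀ (hall x₀ hx₀)
end

section
/- Let c > 0, γ > 0, and m > 0 be real numbers and let λ ∈ ℂ. Suppose f : ℝ → ℂ is four times continuously differentiable on [0,1] and satisfies λ²·f(x) + f⁗(x) = 0 for all x ∈ [0,1], with boundary conditions f(0) = 0, f''(1) = 0, f''(0) = (c·λ + γ)·f'(0), and f'''(1) = m·λ²·f(1). Then the identity λ²·∫₀¹ |f(x)|² dx + ∫₀¹ |f''(x)|² dx + m·λ²·|f(1)|² + (c·λ + γ)·|f'(0)|² = 0 holds (as an equality of complex numbers). -/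
open Complex Set


private lemma mul_conj_norm (z : ℂ) : z * (starRingEnd ℂ) z = ((‖z‖ ^ 2 : ℝ) : ℂ) := by
  rw [Complex.mul_conj]
  norm_cast
  rw [Complex.normSq_eq_norm_sq]

/-- energy identity for the tip-mass observer-error problem:
`λ² ∫₀¹ |f|² + ∫₀¹ |f''|² + m λ² |f(1)|² + (c λ + γ) |f'(0)|² = 0`. -/
theorem stmt_13 (c γ m : ℝ) (hc : 0 < c) (hγ : 0 < γ) (hm : 0 < m) (lam : ℂ)
    (f : ℝ → ℂ)
    (hf : ContDiffOn ℝ 4 f (Set.Icc 0 1))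
    (hode : ∀ x ∈ Set.Icc (0 : ℝ) 1,
      lam ^ 2 * f x + iteratedDerivWithin 4 f (Set.Icc 0 1) x = 0)
    (hbc0 : f 0 = 0)
    (hbc1 : iteratedDerivWithin 2 f (Set.Icc 0 1) 1 = 0)
    (hbc2 : iteratedDerivWithin 2 f (Set.Icc 0 1) 0
      = ((c : ℂ) * lam + (γ : ℂ)) * iteratedDerivWithin 1 f (Set.Icc 0 1) 0)
    (hbc3 : iteratedDerivWithin 3 f (Set.Icc 0 1) 1 = (m : ℂ) * lam ^ 2 * f 1) :
    lam ^ 2 * ((∫ x in (0 : ℝ)..1, ‖f x‖ ^ 2 : ℝ) : ℂ)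
      + ((∫ x in (0 : ℝ)..1, ‖iteratedDerivWithin 2 f (Set.Icc 0 1) x‖ ^ 2 : ℝ) : ℂ)
      + (m : ℂ) * lam ^ 2 * ((‖f 1‖ ^ 2 : ℝ) : ℂ)
      + ((c : ℂ) * lam + (γ : ℂ))
          * ((‖iteratedDerivWithin 1 f (Set.Icc 0 1) 0‖ ^ 2 : ℝ) : ℂ) = 0 := by
  set s : Set ℝ := Set.Icc 0 1 with hs
  have hud : UniqueDiffOn ℝ s := uniqueDiffOn_Icc (by norm_num)
  set F : ℕ → ℝ → ℂ := fun k => iteratedDerivWithin k f s with hF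
  have hF0 : F 0 = f := by
    ext x; simp [hF, iteratedDerivWithin_zero]
  -- derivative within s of F k is F (k+1)
  have hder : ∀ k : ℕ, k < 4 → ∀ x ∈ s, HasDerivWithinAt (F k) (F (k+1) x) s x := by
    intro k hk x hx
    have h1 : DifferentiableOn ℝ (F k) s :=
      hf.differentiableOn_iteratedDerivWithin (by exact_mod_cast hk) hud
    have h2 := (h1 x hx).hasDerivWithinAt
    have h3 : F (k+1) x = derivWithin (F k) s x := by
      simp only [hF]; exact congrFun iteratedDerivWithin_succ x
    rw [h3]; exact h2
  have hcontF : ∀ k : ℕ, k ≤ 4 → ContinuousOn (F k) s := by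
    intro k hk
    exact hf.continuousOn_iteratedDerivWithin (by exact_mod_cast hk) hud
  -- the potential and its derivative
  set G : ℝ → ℂ := fun x => F 3 x * (starRingEnd ℂ) (f x) - F 2 x * (starRingEnd ℂ) (F 1 x)
    with hG
  set G' : ℝ → ℂ := fun x => (-(lam ^ 2) * f x) * (starRingEnd ℂ) (f x)
      - F 2 x * (starRingEnd ℂ) (F 2 x) with hG'
  have hGd : ∀ x ∈ s, HasDerivWithinAt G (G' x) s x := by
    intro x hx
    have h0 : HasDerivWithinAt f (F 1 x) s x := by
      have := hder 0 (by norm_num) x hx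
      rwa [hF0] at this
    have h1 := hder 1 (by norm_num) x hx
    have h2 := hder 2 (by norm_num) x hx
    have h3 := hder 3 (by norm_num) x hx
    have hF4 : F 4 x = -(lam ^ 2) * f x := by
      have := hode x hx
      have : lam ^ 2 * f x + F 4 x = 0 := this
      linear_combination this
    rw [hF4] at h3
    have hA : HasDerivWithinAt (fun y => F 3 y * (starRingEnd ℂ) (f y))
        ((-(lam^2) * f x) * (starRingEnd ℂ) (f x) + F 3 x * (starRingEnd ℂ) (F 1 x)) s x :=
      h3.mul h0.star
    have hB : HasDerivWithinAt (fun y => F 2 y * (starRingEnd ℂ) (F 1 y))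
        (F 3 x * (starRingEnd ℂ) (F 1 x) + F 2 x * (starRingEnd ℂ) (F 2 x)) s x :=
      h2.mul h1.star
    have := hA.sub hB
    refine this.congr_deriv ?_
    simp only [hG']; ring
  -- continuity of G and G'
  have hGc : ContinuousOn G s := by
    apply ContinuousOn.sub
    · exact ((hcontF 3 (by norm_num)).mul ((continuous_star.comp_continuousOn
        ((hcontF 0 (by norm_num)).congr (fun x _ => by rw [hF0])))))
    · exact (hcontF 2 (by norm_num)).mul (continuous_star.comp_continuousOn
        (hcontF 1 (by norm_num)))
  have hG'c : ContinuousOn G' s := by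
    apply ContinuousOn.sub
    · exact (continuousOn_const.mul hf.continuousOn).mul
        (continuous_star.comp_continuousOn hf.continuousOn)
    · exact (hcontF 2 (by norm_num)).mul (continuous_star.comp_continuousOn
        (hcontF 2 (by norm_num)))
  -- FTC
  have key : ∫ x in (0:ℝ)..1, G' x = G 1 - G 0 := by
    apply intervalIntegral.integral_eq_sub_of_hasDeriv_right_of_le (by norm_num) hGc
    · intro x hx
      have hxs : x ∈ s := ⟨le_of_lt hx.1, le_of_lt hx.2⟩
      have := (hGd x hxs).hasDerivAt (Icc_mem_nhds hx.1 hx.2)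
      exact this.hasDerivWithinAt
    · exact (hG'c.mono (by rw [Set.uIcc_of_le (by norm_num : (0:ℝ) ≤ 1)])).intervalIntegrable
  -- compute G 1 and G 0
  have hG1 : G 1 = (m : ℂ) * lam ^ 2 * ((‖f 1‖ ^ 2 : ℝ) : ℂ) := by
    have h1 : (1:ℝ) ∈ s := by constructor <;> norm_num
    simp only [hG]
    rw [show F 3 1 = (m : ℂ) * lam ^ 2 * f 1 from hbc3,
        show F 2 1 = 0 from hbc1]
    rw [mul_assoc, mul_conj_norm]
    ring
  have hG0 : G 0 = -(((c : ℂ) * lam + (γ : ℂ))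
      * ((‖iteratedDerivWithin 1 f s 0‖ ^ 2 : ℝ) : ℂ)) := by
    simp only [hG]
    rw [hbc0, show F 2 0 = ((c:ℂ)*lam+(γ:ℂ)) * F 1 0 from hbc2]
    rw [mul_assoc, mul_conj_norm, map_zero, mul_zero]
    ring
  -- compute the integral of G'
  have hint : ∫ x in (0:ℝ)..1, G' x
      = -(lam ^ 2) * ((∫ x in (0:ℝ)..1, ‖f x‖ ^ 2 : ℝ) : ℂ)
        - ((∫ x in (0:ℝ)..1, ‖F 2 x‖ ^ 2 : ℝ) : ℂ) := by
    have e1 : ∀ x ∈ Set.uIcc (0:ℝ) 1, G' x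
        = -(lam^2) * ((‖f x‖^2 : ℝ) : ℂ) - ((‖F 2 x‖^2 : ℝ):ℂ) := by
      intro x hx
      simp only [hG', mul_assoc, mul_conj_norm]
    rw [intervalIntegral.integral_congr e1]
    rw [intervalIntegral.integral_sub, intervalIntegral.integral_const_mul,
      intervalIntegral.integral_ofReal, intervalIntegral.integral_ofReal]
    · apply IntervalIntegrable.const_mul
      apply ContinuousOn.intervalIntegrable
      rw [Set.uIcc_of_le (by norm_num : (0:ℝ) ≤ 1)]
      exact Complex.continuous_ofReal.comp_continuousOn
        ((hf.continuousOn.norm).pow 2)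
    · apply ContinuousOn.intervalIntegrable
      rw [Set.uIcc_of_le (by norm_num : (0:ℝ) ≤ 1)]
      exact Complex.continuous_ofReal.comp_continuousOn
        (((hcontF 2 (by norm_num)).norm).pow 2)
  rw [hint, hG1, hG0] at key
  linear_combination -key
end

section
/- Let c > 0, γ > 0, and M > 0 be real numbers. Then there exist constants C > 0 and R > 0 such that every τ ∈ ℂ with |Im τ| ≤ M and Re τ ≥ R satisfying the characteristic equation (i·c·τ² + γ)·(cosh τ·sin τ − sinh τ·cos τ) + 2τ·sin τ·sinh τ = 0 also satisfies |cos τ − sin τ| ≤ C/|τ| and |sin(2τ) − 1| ≤ C/|τ|. -/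
open Complex

lemma abs_sin_le_strip (τ : ℂ) (M : ℝ) (h : |τ.im| ≤ M) :
    ‖Complex.sin τ‖ ≤ Real.exp M := by
  have h1 : τ.im ≤ M := le_of_abs_le h
  have h2 : -τ.im ≤ M := le_trans (neg_le_abs _) h
  rw [Complex.sin]
  have hb : ‖Complex.exp (-τ * I) - Complex.exp (τ * I)‖
      ≤ Real.exp M + Real.exp M := by
    calc ‖Complex.exp (-τ * I) - Complex.exp (τ * I)‖
        ≤ ‖Complex.exp (-τ * I)‖ + ‖Complex.exp (τ * I)‖ := by
          simpa using norm_sub_le (Complex.exp (-τ * I)) (Complex.exp (τ * I))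
      _ ≤ Real.exp M + Real.exp M := by
          rw [Complex.norm_exp, Complex.norm_exp]
          have e1 : (-τ * I).re = τ.im := by simp
          have e2 : (τ * I).re = -τ.im := by simp
          rw [e1, e2]
          exact add_le_add (Real.exp_le_exp.2 h1) (Real.exp_le_exp.2 h2)
  calc ‖(Complex.exp (-τ * I) - Complex.exp (τ * I)) * I / 2‖
      = ‖Complex.exp (-τ * I) - Complex.exp (τ * I)‖ / 2 := by
        simp [map_mul, map_div₀]
    _ ≤ (Real.exp M + Real.exp M) / 2 := by linarith
    _ = Real.exp M := by ring

lemma abs_cos_le_strip (τ : ℂ) (M : ℝ) (h : |τ.im| ≤ M) :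
    ‖Complex.cos τ‖ ≤ Real.exp M := by
  have h1 : τ.im ≤ M := le_of_abs_le h
  have h2 : -τ.im ≤ M := le_trans (neg_le_abs _) h
  rw [Complex.cos]
  have hb : ‖Complex.exp (τ * I) + Complex.exp (-τ * I)‖
      ≤ Real.exp M + Real.exp M := by
    calc ‖Complex.exp (τ * I) + Complex.exp (-τ * I)‖
        ≤ ‖Complex.exp (τ * I)‖ + ‖Complex.exp (-τ * I)‖ := by
          exact norm_add_le _ _
      _ ≤ Real.exp M + Real.exp M := by
          rw [Complex.norm_exp, Complex.norm_exp]
          have e1 : (-τ * I).re = τ.im := by simp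
          have e2 : (τ * I).re = -τ.im := by simp
          rw [e1, e2]
          exact add_le_add (Real.exp_le_exp.2 h2) (Real.exp_le_exp.2 h1)
  calc ‖(Complex.exp (τ * I) + Complex.exp (-τ * I)) / 2‖
      = ‖Complex.exp (τ * I) + Complex.exp (-τ * I)‖ / 2 := by
        simp [map_div₀]
    _ ≤ (Real.exp M + Real.exp M) / 2 := by linarith
    _ = Real.exp M := by ring

lemma abs_cosh_ge (τ : ℂ) (h : 1 ≤ τ.re) :
    Real.exp τ.re / 4 ≤ ‖Complex.cosh τ‖ := by
  rw [Complex.cosh]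
  have key : ‖Complex.exp τ‖ - ‖Complex.exp (-τ)‖
      ≤ ‖Complex.exp τ + Complex.exp (-τ)‖ := by
    have := norm_sub_norm_le (Complex.exp τ) (-Complex.exp (-τ))
    simpa [sub_neg_eq_add] using this
  have e1 : ‖Complex.exp τ‖ = Real.exp τ.re := Complex.norm_exp τ
  have e2 : ‖Complex.exp (-τ)‖ = Real.exp (-τ.re) := by
    rw [Complex.norm_exp]; simp
  have hsmall : Real.exp (-τ.re) ≤ Real.exp τ.re / 2 := by
    have h2 : Real.exp (-τ.re) * Real.exp τ.re = 1 := by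
      rw [← Real.exp_add]; simp
    have h3 : (2:ℝ) ≤ Real.exp τ.re * Real.exp τ.re := by
      have : (2:ℝ) ≤ Real.exp 1 * Real.exp 1 := by
        nlinarith [Real.exp_one_gt_d9]
      have h4 : Real.exp 1 ≤ Real.exp τ.re := Real.exp_le_exp.2 h
      nlinarith [Real.exp_pos (1:ℝ), Real.exp_pos τ.re]
    have hpos := Real.exp_pos τ.re
    have hpos2 := Real.exp_pos (-τ.re)
    nlinarith
  calc Real.exp τ.re / 4 ≤ (Real.exp τ.re - Real.exp (-τ.re)) / 2 := by linarith
    _ ≤ ‖Complex.exp τ + Complex.exp (-τ)‖ / 2 := by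
        rw [← e1, ← e2]; linarith
    _ = ‖(Complex.exp τ + Complex.exp (-τ)) / 2‖ := by
        simp [map_div₀]

lemma abs_sinh_le (τ : ℂ) (h : 0 ≤ τ.re) :
    ‖Complex.sinh τ‖ ≤ Real.exp τ.re := by
  rw [Complex.sinh]
  have e1 : ‖Complex.exp τ‖ = Real.exp τ.re := Complex.norm_exp τ
  have e2 : ‖Complex.exp (-τ)‖ = Real.exp (-τ.re) := by
    rw [Complex.norm_exp]; simp
  have hsmall : Real.exp (-τ.re) ≤ Real.exp τ.re := Real.exp_le_exp.2 (by linarith)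
  calc ‖(Complex.exp τ - Complex.exp (-τ)) / 2‖
      = ‖Complex.exp τ - Complex.exp (-τ)‖ / 2 := by simp [map_div₀]
    _ ≤ (‖Complex.exp τ‖ + ‖Complex.exp (-τ)‖) / 2 := by
        have := norm_sub_le (Complex.exp τ) (Complex.exp (-τ))
        linarith
    _ ≤ Real.exp τ.re := by rw [e1, e2]; linarith

set_option maxHeartbeats 2000000 in
/-- localization of the large roots of the characteristic equation
`(i c τ² + γ)(cosh τ sin τ − sinh τ cos τ) + 2 τ sin τ sinh τ = 0` in a horizontal
strip: such roots satisfy `|cos τ − sin τ| ≤ C/|τ|` and `|sin(2τ) − 1| ≤ C/|τ|`. -/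
theorem stmt_15 (c γ M : ℝ) (hc : 0 < c) (hγ : 0 < γ) (hM : 0 < M) :
    ∃ C : ℝ, 0 < C ∧ ∃ R : ℝ, 0 < R ∧ ∀ τ : ℂ,
      |τ.im| ≤ M → R ≤ τ.re →
      (Complex.I * (c : ℂ) * τ ^ 2 + (γ : ℂ))
          * (Complex.cosh τ * Complex.sin τ - Complex.sinh τ * Complex.cos τ)
        + 2 * τ * Complex.sin τ * Complex.sinh τ = 0 →
      ‖Complex.cos τ - Complex.sin τ‖ ≤ C / ‖τ‖ ∧
      ‖Complex.sin (2 * τ) - 1‖ ≤ C / ‖τ‖ := by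
  set C₁ : ℝ := 16 * Real.exp M * (1 + 1/c) with hC₁def
  have hC₁pos : 0 < C₁ := by positivity
  refine ⟨C₁ + C₁^2, by positivity, 1 + M + Real.sqrt (2*γ/c), by positivity, ?_⟩
  intro τ hIm hRe heq
  have hsqrt : 0 ≤ Real.sqrt (2*γ/c) := Real.sqrt_nonneg _
  set x : ℝ := τ.re with hxdef
  set r : ℝ := ‖τ‖ with hrdef
  have hx1 : 1 ≤ x := by simp only [hxdef]; linarith
  have hxM : M ≤ x := by simp only [hxdef]; linarith
  have hxpos : (0:ℝ) < x := by linarith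
  have hrx : x ≤ r := by
    calc x ≤ |τ.re| := le_abs_self _
      _ ≤ ‖τ‖ := Complex.abs_re_le_norm τ
  have hrpos : (0:ℝ) < r := lt_of_lt_of_le hxpos hrx
  have hr2x : r ≤ 2*x := by
    calc r ≤ |τ.re| + |τ.im| := Complex.norm_le_abs_re_add_abs_im τ
      _ ≤ x + M := by rw [← hxdef, abs_of_pos hxpos]; linarith
      _ ≤ 2*x := by linarith
  have hγc : 2*γ ≤ c*r^2 := by
    have h1 : Real.sqrt (2*γ/c) ≤ r := by linarith
    have hs : (0:ℝ) ≤ 2*γ/c := by positivity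
    have h2 : 2*γ/c ≤ r^2 := by
      nlinarith [Real.sq_sqrt hs, Real.sqrt_nonneg (2*γ/c)]
    calc 2*γ = (2*γ/c)*c := by field_simp
      _ ≤ r^2*c := by nlinarith
      _ = c*r^2 := by ring
  -- absolute value of the polynomial factor
  have hAeq : ‖Complex.I * (c:ℂ) * τ^2‖ = c * r^2 := by
    rw [norm_mul, norm_mul, norm_pow, Complex.norm_I, Complex.norm_real, Real.norm_eq_abs,
      abs_of_pos hc]
    ring
  have hA : c/2 * r^2 ≤ ‖Complex.I * (c:ℂ) * τ^2 + (γ:ℂ)‖ := by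
    have key : ‖Complex.I * (c:ℂ) * τ^2‖ - ‖(γ:ℂ)‖
        ≤ ‖Complex.I * (c:ℂ) * τ^2 + (γ:ℂ)‖ := by
      have := norm_sub_norm_le (Complex.I * (c:ℂ) * τ^2) (-(γ:ℂ))
      simpa [sub_neg_eq_add] using this
    rw [hAeq, Complex.norm_real, Real.norm_eq_abs, abs_of_pos hγ] at key
    linarith
  have hA' : ‖Complex.I * (c:ℂ) * τ^2 + (γ:ℂ)‖ ≤ 2*c*r^2 := by
    calc ‖Complex.I * (c:ℂ) * τ^2 + (γ:ℂ)‖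
        ≤ ‖Complex.I * (c:ℂ) * τ^2‖ + ‖(γ:ℂ)‖ :=
          norm_add_le _ _
      _ ≤ c*r^2 + γ := by
          rw [hAeq, Complex.norm_real, Real.norm_eq_abs, abs_of_pos hγ]
      _ ≤ 2*c*r^2 := by nlinarith
  have hH : Real.exp x / 4 ≤ ‖Complex.cosh τ‖ := abs_cosh_ge τ hx1
  have hS : ‖Complex.sinh τ‖ ≤ Real.exp x := abs_sinh_le τ (by linarith)
  have hsin := abs_sin_le_strip τ M hIm
  have hcos := abs_cos_le_strip τ M hIm
  have hexpx := Real.exp_pos x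
  have hexpM := Real.exp_pos M
  have hexpnx := Real.exp_pos (-x)
  -- key algebraic identity
  have hid : (Complex.I * (c:ℂ) * τ^2 + (γ:ℂ)) * Complex.cosh τ
        * (Complex.cos τ - Complex.sin τ)
      = (Complex.I * (c:ℂ) * τ^2 + (γ:ℂ)) * Complex.exp (-τ) * Complex.cos τ
        + 2 * τ * Complex.sin τ * Complex.sinh τ := by
    have h := Complex.cosh_sub_sinh τ
    linear_combination (Complex.I * (c:ℂ) * τ^2 + (γ:ℂ)) * Complex.cos τ * h - heq
  set D : ℝ := ‖Complex.cos τ - Complex.sin τ‖ with hDdef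
  have hDnn : 0 ≤ D := norm_nonneg _
  -- bound both sides' absolute values
  have key : (c/2*r^2) * (Real.exp x/4) * D
      ≤ 2*c*r^2 * Real.exp (-x) * Real.exp M + 2*r*Real.exp M*Real.exp x := by
    have lhs_eq : ‖(Complex.I * (c:ℂ) * τ^2 + (γ:ℂ)) * Complex.cosh τ
        * (Complex.cos τ - Complex.sin τ)‖
        = ‖Complex.I * (c:ℂ) * τ^2 + (γ:ℂ)‖ * ‖Complex.cosh τ‖
          * D := by
      rw [norm_mul, norm_mul]
    have enx : ‖Complex.exp (-τ)‖ = Real.exp (-x) := by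
      rw [Complex.norm_exp]; simp [hxdef]
    have rhs_le : ‖(Complex.I * (c:ℂ) * τ^2 + (γ:ℂ)) * Complex.exp (-τ)
          * Complex.cos τ + 2 * τ * Complex.sin τ * Complex.sinh τ‖
        ≤ 2*c*r^2 * Real.exp (-x) * Real.exp M + 2*r*Real.exp M*Real.exp x := by
      calc ‖(Complex.I * (c:ℂ) * τ^2 + (γ:ℂ)) * Complex.exp (-τ)
            * Complex.cos τ + 2 * τ * Complex.sin τ * Complex.sinh τ‖
          ≤ ‖(Complex.I * (c:ℂ) * τ^2 + (γ:ℂ)) * Complex.exp (-τ)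
              * Complex.cos τ‖
            + ‖2 * τ * Complex.sin τ * Complex.sinh τ‖ :=
            norm_add_le _ _
        _ = ‖Complex.I * (c:ℂ) * τ^2 + (γ:ℂ)‖ * Real.exp (-x)
              * ‖Complex.cos τ‖
            + 2 * r * ‖Complex.sin τ‖ * ‖Complex.sinh τ‖ := by
            rw [norm_mul, norm_mul, norm_mul, norm_mul, enx]
            simp [hrdef]
        _ ≤ 2*c*r^2 * Real.exp (-x) * Real.exp M + 2*r*Real.exp M*Real.exp x := by
            gcongr <;> first
              | exact norm_nonneg _
              | positivity
              | assumption
    calc (c/2*r^2) * (Real.exp x/4) * D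
        ≤ ‖Complex.I * (c:ℂ) * τ^2 + (γ:ℂ)‖ * ‖Complex.cosh τ‖
          * D := by gcongr <;> positivity
      _ = ‖(Complex.I * (c:ℂ) * τ^2 + (γ:ℂ)) * Complex.cosh τ
          * (Complex.cos τ - Complex.sin τ)‖ := lhs_eq.symm
      _ = ‖(Complex.I * (c:ℂ) * τ^2 + (γ:ℂ)) * Complex.exp (-τ)
          * Complex.cos τ + 2 * τ * Complex.sin τ * Complex.sinh τ‖ := by rw [hid]
      _ ≤ _ := rhs_le
  -- derive D * r ≤ C₁
  have hxe : x ≤ Real.exp x := by linarith [Real.add_one_le_exp x]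
  have hr_exp : r ≤ Real.exp x * Real.exp x := by
    have h2x : 2*x ≤ Real.exp x * Real.exp x := by
      rw [← Real.exp_add]
      linarith [Real.add_one_le_exp (x + x)]
    linarith
  have hinv : Real.exp (-x) * Real.exp x = 1 := by
    rw [← Real.exp_add]; simp
  have hr2exp : r^2 * Real.exp (-x) ≤ r * Real.exp x := by
    have h1 : r * Real.exp (-x) ≤ Real.exp x := by
      have := mul_le_mul_of_nonneg_right hr_exp (le_of_lt hexpnx)
      calc r * Real.exp (-x) ≤ Real.exp x * Real.exp x * Real.exp (-x) := this
        _ = Real.exp x := by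
            rw [mul_assoc, mul_comm (Real.exp x) (Real.exp (-x)), hinv, mul_one]
    calc r^2 * Real.exp (-x) = r * (r * Real.exp (-x)) := by ring
      _ ≤ r * Real.exp x := by nlinarith
  have hDr : D * r ≤ C₁ := by
    have key8 : c*r^2*Real.exp x*D
        ≤ 16*c*r^2*Real.exp (-x)*Real.exp M + 16*r*Real.exp M*Real.exp x := by
      linarith [key]
    have hmul : 16*c*Real.exp M * (r^2 * Real.exp (-x))
        ≤ 16*c*Real.exp M * (r * Real.exp x) :=
      mul_le_mul_of_nonneg_left hr2exp (by positivity)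
    have hkey2 : c * r^2 * Real.exp x * D
        ≤ 16*c*(r * Real.exp x) * Real.exp M + 16*r*Real.exp M*Real.exp x := by
      linarith
    have hpos : 0 < r * Real.exp x := by positivity
    have hthis : c * (D * r) * (r * Real.exp x) ≤ (16*c*Real.exp M + 16*Real.exp M)
        * (r * Real.exp x) := by linarith
    have h3 : c * (D * r) ≤ 16*c*Real.exp M + 16*Real.exp M :=
      le_of_mul_le_mul_right (by linarith [hthis]) hpos
    rw [hC₁def]
    rw [div_eq_mul_inv]
    have : D * r ≤ (16*c*Real.exp M + 16*Real.exp M)/c := by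
      rw [le_div_iff₀ hc]; linarith [h3]
    calc D * r ≤ (16*c*Real.exp M + 16*Real.exp M)/c := this
      _ = 16 * Real.exp M * (1 + 1*c⁻¹) := by field_simp
  have hD : D ≤ C₁ / r := by
    rw [le_div_iff₀ hrpos]; exact hDr
  have hr1 : 1 ≤ r := le_trans hx1 hrx
  constructor
  · calc D ≤ C₁ / r := hD
      _ ≤ (C₁ + C₁^2) / r := by gcongr; nlinarith
  · have hid2 : Complex.sin (2*τ) - 1 = -(Complex.cos τ - Complex.sin τ)^2 := by
      have h1 := Complex.sin_two_mul τ
      have h2 := Complex.sin_sq_add_cos_sq τ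
      linear_combination h1 + h2
    rw [hid2]
    have habs2 : ‖-(Complex.cos τ - Complex.sin τ)^2‖ = D^2 := by
      rw [norm_neg, norm_pow]
    rw [habs2]
    have h4 : D^2 ≤ (C₁/r)^2 := by nlinarith
    have h5 : (C₁/r)^2 ≤ C₁^2 / r := by
      rw [div_pow, div_le_div_iff₀ (by positivity) hrpos]
      nlinarith [mul_nonneg (mul_nonneg (sq_nonneg C₁) hrpos.le)
        (sub_nonneg.2 hr1)]
    calc D^2 ≤ C₁^2 / r := le_trans h4 h5
      _ ≤ (C₁ + C₁^2) / r := by gcongr; nlinarith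
end
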